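/- arXiv:2406.07452 — 9 statements merged into one kernel-verified Lean document; each statement's English description precedes it below -/
import Mathlib

section
/- For every Tychonoff space X and every natural number n, the set A_n consisting of all continuous linear functionals φ on C_p(X) for which there exist points x_1,…,x_n ∈ X and real numbers a_1,…,a_n with φ(f) = a_1 f(x_1) + … + a_n f(x_n) for every f ∈ C_p(X) is a closed subset of L_p(X). -/
universe u

/-- The submodule of `X → ℝ` consisting of continuous functions. With the subspace
topology inherited from the product topology on `X → ℝ`, this is `C_p(X)`,
the space of continuous real functions with the topology of pointwise convergence. -/
def cpSubmodule (X : Type u) [TopologicalSpace X] : Submodule ℝ (X → ℝ) where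
  carrier := {f | Continuous f}
  add_mem' hf hg := hf.add hg
  zero_mem' := continuous_const
  smul_mem' := fun c {_} hf => hf.const_smul c

/-- `C_p(X)`: continuous real-valued functions on `X` with the pointwise convergence
topology (subspace of the product `X → ℝ`), as a topological real vector space. -/
abbrev Cp (X : Type u) [TopologicalSpace X] : Type u := ↥(cpSubmodule X)

/-- `L_p(X)`: the dual of `C_p(X)`, i.e. continuous linear functionals on `C_p(X)`. -/
def LpDual (X : Type u) [TopologicalSpace X] : Type u :=
  {φ : Cp X →ₗ[ℝ] ℝ // Continuous φ}

/-- The topology on `L_p(X)` of pointwise convergence on `C_p(X)`. -/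
instance (X : Type u) [TopologicalSpace X] : TopologicalSpace (LpDual X) :=
  TopologicalSpace.induced (fun (φ : LpDual X) (f : Cp X) => φ.1 f) inferInstance

theorem vanish {X : Type u} [TopologicalSpace X] (φ : Cp X →ₗ[ℝ] ℝ) (hφ : Continuous φ) :
    ∃ (I : Set X), I.Finite ∧ ∀ f : Cp X, (∀ x ∈ I, (f : X → ℝ) x = 0) → φ f = 0 := by
  have h0 : φ ⁻¹' (Metric.ball 0 1) ∈ nhds (0 : Cp X) := by
    refine (hφ.isOpen_preimage _ Metric.isOpen_ball).mem_nhds ?_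
    simp [map_zero φ]
  rw [nhds_subtype_eq_comap, Filter.mem_comap] at h0
  obtain ⟨w, hw, hws⟩ := h0
  rw [nhds_pi, Filter.mem_pi] at hw
  obtain ⟨I, hIfin, V, hV, hVw⟩ := hw
  refine ⟨I, hIfin, fun f hf => ?_⟩
  by_contra hne
  set c : ℝ := (φ f)⁻¹ with hc
  have hmem : ((c • f : Cp X) : X → ℝ) ∈ w := by
    apply hVw
    intro x hx
    have : ((c • f : Cp X) : X → ℝ) x = 0 := by
      show c * (f : X → ℝ) x = 0
      rw [hf x hx, mul_zero]
    rw [this]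
    have := mem_of_mem_nhds (hV x)
    simpa using this
  have hlt : φ (c • f) ∈ Metric.ball (0:ℝ) 1 := hws hmem
  have : φ (c • f) = 1 := by
    rw [map_smul, smul_eq_mul, hc, inv_mul_cancel₀ hne]
  rw [this] at hlt
  simp at hlt

theorem rep {X : Type u} [TopologicalSpace X] (φ : Cp X →ₗ[ℝ] ℝ) (hφ : Continuous φ) :
    ∃ (T : Finset X) (a : X → ℝ), ∀ f : Cp X, φ f = ∑ t ∈ T, a t * (f : X → ℝ) t := by
  classical
  obtain ⟨I, hIfin, hvan⟩ := vanish φ hφ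
  set T : Finset X := hIfin.toFinset with hT
  -- restriction map
  set R : Cp X →ₗ[ℝ] (↥T → ℝ) :=
    { toFun := fun f t => (f : X → ℝ) t
      map_add' := fun f g => rfl
      map_smul' := fun c f => rfl } with hR
  have hker : LinearMap.ker R ≤ LinearMap.ker φ := by
    intro f hfk
    rw [LinearMap.mem_ker] at hfk ⊢
    apply hvan
    intro x hx
    have : x ∈ T := hIfin.mem_toFinset.mpr hx
    exact congrFun hfk ⟨x, this⟩
  set φ' := Submodule.liftQ (LinearMap.ker R) φ hker with hφ'
  set e := R.quotKerEquivRange with he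
  set ℓ₀ : LinearMap.range R →ₗ[ℝ] ℝ := φ'.comp (e.symm : LinearMap.range R →ₗ[ℝ] _) with hℓ₀
  obtain ⟨ℓ, hℓ⟩ := LinearMap.exists_extend ℓ₀
  have key : ∀ f : Cp X, φ f = ℓ (R f) := by
    intro f
    have h1 : (⟨R f, LinearMap.mem_range_self R f⟩ : LinearMap.range R)
        = e (Submodule.Quotient.mk f) := by
      rw [he]
      rfl
    calc φ f = φ' (Submodule.Quotient.mk f) := by rw [hφ', Submodule.liftQ_apply]
      _ = ℓ₀ ⟨R f, LinearMap.mem_range_self R f⟩ := by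
          rw [hℓ₀, LinearMap.comp_apply, h1]
          simp
      _ = ℓ (R f) := by rw [← hℓ]; rfl
  refine ⟨T, fun x => if h : x ∈ T then ℓ (Pi.single (⟨x, h⟩ : ↥T) 1) else 0, fun f => ?_⟩
  rw [key]
  have expand : ℓ (R f) = ∑ t : ↥T, (R f) t • ℓ (Pi.single t 1) := by
    conv_lhs => rw [← Finset.univ_sum_single (R f)]
    rw [map_sum]
    congr 1
    ext t
    have : (Pi.single t ((R f) t) : ↥T → ℝ) = (R f) t • (Pi.single t 1 : ↥T → ℝ) := by
      rw [← Pi.single_smul, smul_eq_mul, mul_one]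
    rw [this, map_smul]
  rw [expand]
  rw [← Finset.sum_coe_sort T (fun x => (if h : x ∈ T then ℓ (Pi.single (⟨x, h⟩ : ↥T) 1) else 0) * (f : X → ℝ) x)]
  congr 1
  ext t
  rw [dif_pos t.2]
  simp only [smul_eq_mul]
  rw [mul_comm]
  congr 2

theorem eval_cont {X : Type u} [TopologicalSpace X] (g : Cp X) :
    Continuous (fun φ : LpDual X => φ.1 g) := by
  have : (fun φ : LpDual X => φ.1 g)
      = (fun F : Cp X → ℝ => F g) ∘ (fun (φ : LpDual X) (f : Cp X) => φ.1 f) := rfl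
  rw [this]
  exact (continuous_apply g).comp continuous_induced_dom

/-- For every Tychonoff space `X` and every `n ∈ ℕ`, the set `A_n` of all continuous
linear functionals `φ` on `C_p(X)` admitting a representation
`φ(f) = a₁ f(x₁) + ⋯ + aₙ f(xₙ)` is closed in `L_p(X)`. -/
theorem stmt0 (X : Type u) [TopologicalSpace X] [T2Space X] [CompletelyRegularSpace X]
    (n : ℕ) :
    IsClosed {φ : LpDual X | ∃ (x : Fin n → X) (a : Fin n → ℝ),
      ∀ f : Cp X, φ.1 f = ∑ i, a i * (f : X → ℝ) (x i)} := by
  classical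
  refine isClosed_of_closure_subset ?_
  intro φ hφcl
  obtain ⟨T0, a0, hrep⟩ := rep φ.1 φ.2
  set T : Finset X := T0.filter (fun x => a0 x ≠ 0) with hTdef
  have hrep' : ∀ f : Cp X, φ.1 f = ∑ t ∈ T, a0 t * (f : X → ℝ) t := by
    intro f
    rw [hrep f]
    symm
    apply Finset.sum_subset (Finset.filter_subset _ _)
    intro y hy hny
    have : a0 y = 0 := by
      by_contra h
      exact hny (Finset.mem_filter.mpr ⟨hy, h⟩)
    rw [this, zero_mul]
  have hb : ∀ t ∈ T, a0 t ≠ 0 := fun t ht => (Finset.mem_filter.mp ht).2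
  obtain ⟨U, hU, hUdisj⟩ := T.finite_toSet.t2_separation
  -- bump functions
  have hgex : ∀ t ∈ T, ∃ g : Cp X, (g : X → ℝ) t = 1 ∧ ∀ y, y ∉ U t → (g : X → ℝ) y = 0 := by
    intro t ht
    obtain ⟨f, cf, hf0, hf1⟩ := CompletelyRegularSpace.completely_regular t (U t)ᶜ
      (hU t).2.isClosed_compl (by simp [(hU t).1])
    refine ⟨⟨fun y => 1 - (f y : ℝ), by
      exact continuous_const.sub (continuous_subtype_val.comp cf)⟩, ?_, ?_⟩
    · show 1 - ((f t : ℝ)) = 1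
      rw [hf0]
      norm_num
    · intro y hy
      show 1 - ((f y : ℝ)) = 0
      have : f y = 1 := hf1 hy
      rw [this]
      norm_num
  choose g hg1 hg0 using hgex
  have hφg : ∀ t (ht : t ∈ T), φ.1 (g t ht) = a0 t := by
    intro t ht
    rw [hrep']
    rw [Finset.sum_eq_single t]
    · rw [hg1 t ht, mul_one]
    · intro s hs hst
      have hsU : s ∉ U t := by
        have hdisj := hUdisj (Finset.mem_coe.mpr hs) (Finset.mem_coe.mpr ht) hst
        exact fun hsU => Set.disjoint_left.mp hdisj (hU s).1 hsU
      rw [hg0 t ht s hsU, mul_zero]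
    · intro h
      exact absurd ht h
  set W : Set (LpDual X) :=
    {ψ | ∀ (t : ↥T), |ψ.1 (g t.1 t.2) - a0 t.1| < |a0 t.1|} with hWdef
  have hWopen : IsOpen W := by
    have : W = ⋂ (t : ↥T),
        (fun ψ : LpDual X => ψ.1 (g t.1 t.2)) ⁻¹' (Metric.ball (a0 t.1) |a0 t.1|) := by
      ext ψ
      simp [hWdef, Metric.mem_ball, Real.dist_eq]
    rw [this]
    exact isOpen_iInter_of_finite fun t =>
      (Metric.isOpen_ball).preimage (eval_cont _)
  have hφW : φ ∈ W := by
    intro t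
    rw [hφg t.1 t.2, sub_self, abs_zero]
    exact abs_pos.mpr (hb t.1 t.2)
  obtain ⟨ψ, hψW, x, a, hψrep⟩ := mem_closure_iff.mp hφcl W hWopen hφW
  -- each U t contains some x i
  have hsel : ∀ t : ↥T, ∃ i : Fin n, x i ∈ U t.1 := by
    intro t
    have hne : ψ.1 (g t.1 t.2) ≠ 0 := by
      intro h0
      have := hψW t
      rw [h0, zero_sub, abs_neg] at this
      exact lt_irrefl _ this
    rw [hψrep] at hne
    obtain ⟨i, _, hi⟩ := Finset.exists_ne_zero_of_sum_ne_zero hne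
    refine ⟨i, ?_⟩
    by_contra hxU
    rw [hg0 t.1 t.2 _ hxU, mul_zero] at hi
    exact hi rfl
  choose h hh using hsel
  have hinj : Function.Injective h := by
    intro s t hst
    by_contra hne
    have hdisj := hUdisj (Finset.mem_coe.mpr s.2) (Finset.mem_coe.mpr t.2)
      (fun h => hne (Subtype.ext h))
    exact Set.disjoint_left.mp hdisj (hh s) (hst ▸ hh t)
  have hcard : T.card ≤ n := by
    have := Fintype.card_le_of_injective h hinj
    simpa [Fintype.card_coe] using this
  -- build the witness
  refine ⟨fun i => if hi : (i : ℕ) < T.card then (T.equivFin.symm ⟨i, hi⟩ : X) else x i,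
          fun i => if hi : (i : ℕ) < T.card then a0 (T.equivFin.symm ⟨i, hi⟩ : X) else 0,
          fun f => ?_⟩
  rw [hrep' f]
  set G : ℕ → ℝ := fun j => if hj : j < T.card then
      a0 (T.equivFin.symm ⟨j, hj⟩ : X) * (f : X → ℝ) (T.equivFin.symm ⟨j, hj⟩ : X)
    else 0 with hGdef
  have lhs : ∑ t ∈ T, a0 t * (f : X → ℝ) t = ∑ j ∈ Finset.range T.card, G j := by
    rw [← Fin.sum_univ_eq_sum_range G T.card,
        ← Finset.sum_coe_sort T (fun t => a0 t * (f : X → ℝ) t),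
        ← Equiv.sum_comp T.equivFin.symm (fun t : ↥T => a0 (t : X) * (f : X → ℝ) (t : X))]
    congr 1
    ext j
    rw [hGdef]
    simp only [dif_pos j.isLt, Fin.eta]
  have rhs : (∑ i : Fin n,
      (if hi : (i : ℕ) < T.card then a0 (T.equivFin.symm ⟨i, hi⟩ : X) else 0) *
        (f : X → ℝ) (if hi : (i : ℕ) < T.card then (T.equivFin.symm ⟨i, hi⟩ : X) else x i))
      = ∑ j ∈ Finset.range n, G j := by
    rw [← Fin.sum_univ_eq_sum_range G n]
    congr 1
    ext i
    by_cases hi : (i : ℕ) < T.card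
    · rw [dif_pos hi, dif_pos hi, hGdef]
      simp only [dif_pos hi]
    · rw [dif_neg hi, zero_mul, hGdef]
      simp only [dif_neg hi]
  rw [lhs, rhs]
  apply Finset.sum_subset (Finset.range_subset_range.mpr hcard)
  intro j _ hj
  rw [hGdef]
  exact dif_neg (by simpa using hj)
end

section
/- Let X be a finite-dimensional normal topological space and let A ⊆ X be a closed subset. Then the quotient space X/A obtained by collapsing A to a single point satisfies dim(X/A) ≤ dim(X). -/
universe u

/-- `CovDimLE X n` : the covering dimension of `X` is at most `n` (with `n : ℤ`, so
that `n = -1` is allowed): every finite open cover of `X` has a finite open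
refinement covering `X` in which every point belongs to at most `n + 1` members. -/
def CovDimLE (X : Type*) [TopologicalSpace X] (n : ℤ) : Prop :=
  ∀ 𝒰 : Set (Set X), 𝒰.Finite → (∀ u ∈ 𝒰, IsOpen u) → ⋃₀ 𝒰 = Set.univ →
    ∃ 𝒱 : Set (Set X), 𝒱.Finite ∧ (∀ v ∈ 𝒱, IsOpen v) ∧ ⋃₀ 𝒱 = Set.univ ∧
      (∀ v ∈ 𝒱, ∃ u ∈ 𝒰, v ⊆ u) ∧ ∀ x : X, ({v ∈ 𝒱 | x ∈ v}.ncard : ℤ) ≤ n + 1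

/-- A space is finite dimensional if its covering dimension is at most `n` for some `n ∈ ℕ`. -/
def FiniteDim (X : Type*) [TopologicalSpace X] : Prop :=
  ∃ n : ℕ, CovDimLE X n

/-- The quotient space `X/A` obtained from `X` by collapsing the subset `A` to a single
point: the quotient of `X` by the relation identifying all points of `A` with each other
and nothing else, with the quotient topology. -/
def CollapseQuotient (X : Type u) [TopologicalSpace X] (A : Set X) : Type u :=
  Quot (fun x y : X => x = y ∨ (x ∈ A ∧ y ∈ A))

instance (X : Type u) [TopologicalSpace X] (A : Set X) :
    TopologicalSpace (CollapseQuotient X A) :=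
  instTopologicalSpaceQuot

/-- Let `X` be a finite-dimensional normal space and `A ⊆ X` closed. Then the quotient
space `X/A` obtained by collapsing `A` to a point satisfies `dim (X/A) ≤ dim X`. -/
theorem stmt2 (X : Type u) [TopologicalSpace X] [NormalSpace X]
    (A : Set X) (hA : IsClosed A) (hfd : FiniteDim X)
    (n : ℤ) (hn : CovDimLE X n) :
    CovDimLE (CollapseQuotient X A) n := by
  classical
  set r : X → X → Prop := fun x y => x = y ∨ (x ∈ A ∧ y ∈ A) with hrdef
  have hrequiv : Equivalence r := by
    constructor
    · intro x; exact Or.inl rfl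
    · rintro x y (rfl | ⟨hx, hy⟩); · exact Or.inl rfl
      · exact Or.inr ⟨hy, hx⟩
    · rintro x y z (rfl | ⟨hx, hy⟩) (rfl | ⟨hy', hz⟩)
      · exact Or.inl rfl
      · exact Or.inr ⟨hy', hz⟩
      · exact Or.inr ⟨hx, hy⟩
      · exact Or.inr ⟨hx, hz⟩
  let q : X → CollapseQuotient X A := Quot.mk r
  have hq_surj : Function.Surjective q := fun p => Quot.exists_rep p
  have hq_eq : ∀ a b : X, q a = q b ↔ r a b := by
    intro a b
    exact Quot.eq.trans (Equivalence.eqvGen_iff hrequiv)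
  have hq_cont : Continuous q := continuous_quot_mk
  have hopen : ∀ s : Set (CollapseQuotient X A), IsOpen (q ⁻¹' s) → IsOpen s := by
    intro s hs
    exact isOpen_coinduced.mpr hs
  -- saturation
  have hsat : ∀ S : Set X, (A ⊆ S ∨ ∀ a ∈ S, a ∉ A) → q ⁻¹' (q '' S) = S := by
    intro S hS
    ext y
    simp only [Set.mem_preimage, Set.mem_image]
    constructor
    · rintro ⟨s, hs, hqs⟩
      rcases (hq_eq s y).1 hqs with rfl | ⟨hsA, hyA⟩
      · exact hs
      · rcases hS with h | h
        · exact h hyA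
        · exact absurd hsA (h s hs)
    · intro hy; exact ⟨y, hy, rfl⟩
  rcases isEmpty_or_nonempty X with hX | hX
  · -- empty space: quotient is empty
    have hQ : IsEmpty (CollapseQuotient X A) :=
      hq_surj.isEmpty
    intro 𝒰 _ _ _
    refine ⟨∅, Set.finite_empty, by simp, ?_, by simp, ?_⟩
    · rw [Set.sUnion_empty]
      exact (Set.univ_eq_empty_iff.mpr hQ).symm
    · intro x; exact (hQ.false x).elim
  · intro 𝒰 hUf hUo hUc
    -- pick u₀ ∈ 𝒰 with A ⊆ q ⁻¹' u₀
    obtain ⟨u₀, hu₀U, hAu₀⟩ : ∃ u₀ ∈ 𝒰, A ⊆ q ⁻¹' u₀ := by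
      by_cases hA0 : A.Nonempty
      · obtain ⟨a, ha⟩ := hA0
        have : q a ∈ ⋃₀ 𝒰 := by rw [hUc]; exact Set.mem_univ _
        obtain ⟨u₀, hu₀, hqa⟩ := this
        refine ⟨u₀, hu₀, fun a' ha' => ?_⟩
        have : q a' = q a := (hq_eq a' a).2 (Or.inr ⟨ha', ha⟩)
        simpa only [Set.mem_preimage, this] using hqa
      · obtain ⟨x⟩ := hX
        have : q x ∈ ⋃₀ 𝒰 := by rw [hUc]; exact Set.mem_univ _
        obtain ⟨u₀, hu₀, _⟩ := this
        exact ⟨u₀, hu₀, by simp [Set.not_nonempty_iff_eq_empty.mp hA0]⟩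
    -- the pulled back cover
    set 𝒰' : Set (Set X) := ((fun u => q ⁻¹' u \ A) '' 𝒰) ∪ {q ⁻¹' u₀} with h𝒰'def
    have hU'f : 𝒰'.Finite := (hUf.image _).union (Set.finite_singleton _)
    have hU'o : ∀ u ∈ 𝒰', IsOpen u := by
      rintro u' (⟨u, hu, rfl⟩ | rfl)
      · exact ((hUo u hu).preimage hq_cont).sdiff hA
      · exact (hUo u₀ hu₀U).preimage hq_cont
    have hU'c : ⋃₀ 𝒰' = Set.univ := by
      apply Set.eq_univ_of_forall
      intro x
      by_cases hx : x ∈ A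
      · exact ⟨q ⁻¹' u₀, Or.inr rfl, hAu₀ hx⟩
      · have : q x ∈ ⋃₀ 𝒰 := by rw [hUc]; exact Set.mem_univ _
        obtain ⟨u, hu, hqx⟩ := this
        exact ⟨q ⁻¹' u \ A, Or.inl ⟨u, hu, rfl⟩, ⟨hqx, hx⟩⟩
    obtain ⟨𝒱, hVf, hVo, hVc, hVref, hVmul⟩ := hn 𝒰' hU'f hU'o hU'c
    -- classification of refinement members
    set Good : Set (Set X) := {v ∈ 𝒱 | ∃ u ∈ 𝒰, v ⊆ q ⁻¹' u \ A} with hGooddef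
    have hGoodDisj : ∀ v ∈ Good, ∀ a ∈ v, a ∉ A := by
      rintro v ⟨_, u, _, hsub⟩ a ha
      exact (hsub ha).2
    set Bad : Set (Set X) := {v ∈ 𝒱 | ¬ ∃ u ∈ 𝒰, v ⊆ q ⁻¹' u \ A} with hBaddef
    have hBadsub : ∀ v ∈ Bad, v ⊆ q ⁻¹' u₀ := by
      rintro v ⟨hv𝒱, hvng⟩
      rcases hVref v hv𝒱 with ⟨u', hu', hsub⟩
      rcases hu' with ⟨u, hu, rfl⟩ | rfl
      · exact absurd ⟨u, hu, hsub⟩ hvng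
      · exact hsub
    set W : Set X := ⋃₀ Bad with hWdef
    have hWopen : IsOpen W := isOpen_sUnion (fun v hv => hVo v hv.1)
    have hWu₀ : W ⊆ q ⁻¹' u₀ := Set.sUnion_subset hBadsub
    have hAW : A ⊆ W := by
      intro a ha
      have : a ∈ ⋃₀ 𝒱 := by rw [hVc]; exact Set.mem_univ _
      obtain ⟨v, hv, hav⟩ := this
      by_cases hg : ∃ u ∈ 𝒰, v ⊆ q ⁻¹' u \ A
      · obtain ⟨u, _, hsub⟩ := hg
        exact absurd ha (hsub hav).2
      · exact ⟨v, ⟨hv, hg⟩, hav⟩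
    have hWsat : q ⁻¹' (q '' W) = W := hsat W (Or.inl hAW)
    have hGsat : ∀ v ∈ Good, q ⁻¹' (q '' v) = v :=
      fun v hv => hsat v (Or.inr (hGoodDisj v hv))
    -- the refinement downstairs
    set 𝒲 : Set (Set (CollapseQuotient X A)) :=
      ((fun v => q '' v) '' Good) ∪ {q '' W} with h𝒲def
    have hWsat' : ∀ w ∈ 𝒲, q '' (q ⁻¹' w) = w := by
      rintro w (⟨v, hv, rfl⟩ | rfl)
      · rw [hGsat v hv]
      · rw [hWsat]
    refine ⟨𝒲, ?_, ?_, ?_, ?_, ?_⟩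
    · exact ((hVf.subset (Set.sep_subset _ _)).image _).union (Set.finite_singleton _)
    · rintro w (⟨v, hv, rfl⟩ | rfl)
      · exact hopen _ (by rw [hGsat v hv]; exact hVo v hv.1)
      · exact hopen _ (by rw [hWsat]; exact hWopen)
    · apply Set.eq_univ_of_forall
      intro p
      obtain ⟨x, rfl⟩ := hq_surj p
      have : x ∈ ⋃₀ 𝒱 := by rw [hVc]; exact Set.mem_univ _
      obtain ⟨v, hv, hxv⟩ := this
      by_cases hg : ∃ u ∈ 𝒰, v ⊆ q ⁻¹' u \ A
      · exact ⟨q '' v, Or.inl ⟨v, ⟨hv, hg⟩, rfl⟩, ⟨x, hxv, rfl⟩⟩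
      · exact ⟨q '' W, Or.inr rfl, ⟨x, ⟨v, ⟨hv, hg⟩, hxv⟩, rfl⟩⟩
    · rintro w (⟨v, ⟨_, u, hu, hsub⟩, rfl⟩ | rfl)
      · refine ⟨u, hu, ?_⟩
        calc q '' v ⊆ q '' (q ⁻¹' u) := Set.image_mono (hsub.trans Set.diff_subset)
          _ ⊆ u := Set.image_preimage_subset _ _
      · refine ⟨u₀, hu₀U, ?_⟩
        calc q '' W ⊆ q '' (q ⁻¹' u₀) := Set.image_mono hWu₀
          _ ⊆ u₀ := Set.image_preimage_subset _ _
    · intro p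
      obtain ⟨x, rfl⟩ := hq_surj p
      have key : {w ∈ 𝒲 | q x ∈ w}.ncard ≤ {v ∈ 𝒱 | x ∈ v}.ncard := by
        set v₀ : Set X := if hxW : x ∈ W then hxW.choose else ∅ with hv₀def
        have hv₀ : x ∈ W → v₀ ∈ Bad ∧ x ∈ v₀ := by
          intro hxW
          rw [hv₀def, dif_pos hxW]
          exact ⟨hxW.choose_spec.1, hxW.choose_spec.2⟩
        set f : Set (CollapseQuotient X A) → Set X :=
          fun w => if q ⁻¹' w ∈ Good then q ⁻¹' w else v₀ with hfdef
        -- In the else branch, on the domain, w must be q '' W and x ∈ W.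
        have helse : ∀ w ∈ {w ∈ 𝒲 | q x ∈ w}, q ⁻¹' w ∉ Good → w = q '' W ∧ x ∈ W := by
          rintro w ⟨hw𝒲, hpw⟩ hng
          rcases hw𝒲 with ⟨v, hv, rfl⟩ | rfl
          · rw [hGsat v hv] at hng
            exact absurd hv hng
          · refine ⟨rfl, ?_⟩
            rw [← hWsat]
            exact hpw
        refine Set.ncard_le_ncard_of_injOn f ?_ ?_ (hVf.subset (Set.sep_subset _ _))
        · rintro w hw
          obtain ⟨hw𝒲, hpw⟩ := hw
          by_cases hg : q ⁻¹' w ∈ Good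
          · rw [hfdef]; simp only [if_pos hg]
            exact ⟨hg.1, hpw⟩
          · obtain ⟨-, hxW⟩ := helse w ⟨hw𝒲, hpw⟩ hg
            obtain ⟨hv₀B, hxv₀⟩ := hv₀ hxW
            rw [hfdef]; simp only [if_neg hg]
            exact ⟨hv₀B.1, hxv₀⟩
        · intro w₁ hw₁ w₂ hw₂ hf
          by_cases hg₁ : q ⁻¹' w₁ ∈ Good <;> by_cases hg₂ : q ⁻¹' w₂ ∈ Good
          · rw [hfdef] at hf; simp only [if_pos hg₁, if_pos hg₂] at hf
            rw [← hWsat' w₁ hw₁.1, ← hWsat' w₂ hw₂.1, hf]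
          · obtain ⟨-, hxW⟩ := helse w₂ hw₂ hg₂
            obtain ⟨hv₀B, -⟩ := hv₀ hxW
            rw [hfdef] at hf; simp only [if_pos hg₁, if_neg hg₂] at hf
            exact absurd (hf ▸ hg₁) (fun h => hv₀B.2 h.2)
          · obtain ⟨-, hxW⟩ := helse w₁ hw₁ hg₁
            obtain ⟨hv₀B, -⟩ := hv₀ hxW
            rw [hfdef] at hf; simp only [if_neg hg₁, if_pos hg₂] at hf
            exact absurd (hf ▸ hg₂) (fun h => hv₀B.2 h.2)
          · obtain ⟨h₁, -⟩ := helse w₁ hw₁ hg₁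
            obtain ⟨h₂, -⟩ := helse w₂ hw₂ hg₂
            rw [h₁, h₂]
      calc ({w ∈ 𝒲 | q x ∈ w}.ncard : ℤ) ≤ ({v ∈ 𝒱 | x ∈ v}.ncard : ℤ) := by
            exact_mod_cast key
        _ ≤ n + 1 := hVmul x
end

section
/- Let K be a compact Hausdorff space such that K = ⋃_{n∈ℕ} K_n, where each K_n is a compact subspace with the property that every nonempty subspace A of K_n contains a nonempty relatively open subspace U of countable weight (i.e., U is second countable in its subspace topology). Then every nonempty subspace A of K contains a nonempty relatively open subspace of countable weight. -/
universe u

/-- Every nonempty subspace `A` of `X` contains a nonempty relatively open subspace `U`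
of countable weight (i.e. `U` is second countable in its subspace topology). -/
def HasOpenSecondCountablePieces (X : Type*) [TopologicalSpace X] : Prop :=
  ∀ A : Set X, A.Nonempty →
    ∃ U : Set ↥A, U.Nonempty ∧ IsOpen U ∧ SecondCountableTopology ↥U

lemma sc_of_range {Z X : Type*} [TopologicalSpace Z] [TopologicalSpace X] {f : Z → X}
    (hf : Topology.IsEmbedding f) {B : Set X} (hB : Set.range f = B)
    [SecondCountableTopology Z] : SecondCountableTopology ↥B := by
  subst hB
  exact hf.toHomeomorph.symm.isEmbedding.secondCountableTopology

lemma sc_to_dom {Z X : Type*} [TopologicalSpace Z] [TopologicalSpace X] {f : Z → X}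
    (hf : Topology.IsEmbedding f) {B : Set X} (hB : Set.range f = B)
    [h : SecondCountableTopology ↥B] : SecondCountableTopology Z := by
  subst hB
  exact hf.toHomeomorph.isEmbedding.secondCountableTopology

/-- Let `K` be a compact Hausdorff space with `K = ⋃ₙ Kₙ`, where each `Kₙ` is a compact
subspace in which every nonempty subspace contains a nonempty relatively open subspace
of countable weight. Then every nonempty subspace of `K` contains a nonempty relatively
open subspace of countable weight. -/
theorem stmt4 (K : Type u) [TopologicalSpace K] [CompactSpace K] [T2Space K]
    (Kn : ℕ → Set K) (hcomp : ∀ n, IsCompact (Kn n))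
    (hprop : ∀ n, HasOpenSecondCountablePieces ↥(Kn n))
    (hcover : ⋃ n, Kn n = Set.univ) :
    HasOpenSecondCountablePieces K := by
  intro A hA
  set C : Set K := closure A with hC
  haveI : CompactSpace ↥C := isCompact_iff_compactSpace.mp isClosed_closure.isCompact
  haveI : Nonempty ↥C := (hA.mono subset_closure).to_subtype
  -- Baire category on C
  have hcl : ∀ n, IsClosed ((Subtype.val : ↥C → K) ⁻¹' Kn n) := fun n =>
    ((hcomp n).isClosed).preimage continuous_subtype_val
  have hUn : (⋃ n, (Subtype.val : ↥C → K) ⁻¹' Kn n) = Set.univ := by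
    rw [← Set.preimage_iUnion, hcover, Set.preimage_univ]
  obtain ⟨n, hn⟩ := nonempty_interior_of_iUnion_of_closed hcl hUn
  obtain ⟨V, hVopen, hVeq⟩ := isOpen_induced_iff.mp
    (isOpen_interior : IsOpen (interior ((Subtype.val : ↥C → K) ⁻¹' Kn n)))
  -- every point of C ∩ V lies in Kn n
  have hsub : ∀ c : K, c ∈ C → c ∈ V → c ∈ Kn n := by
    intro c hcC hcV
    have : (⟨c, hcC⟩ : ↥C) ∈ (Subtype.val : ↥C → K) ⁻¹' V := hcV
    rw [hVeq] at this
    have h2 : (⟨c, hcC⟩ : ↥C) ∈ (Subtype.val : ↥C → K) ⁻¹' Kn n := interior_subset this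
    exact h2
  -- a point of A inside V
  obtain ⟨x, hx⟩ := hn
  have hxV : (x : K) ∈ V := by rw [← hVeq] at hx; exact hx
  obtain ⟨a, haV, haA⟩ := mem_closure_iff.mp x.2 V hVopen hxV
  have haC : a ∈ C := subset_closure haA
  have haK : a ∈ Kn n := hsub a haC haV
  -- apply the hypothesis in Kn n
  set A' : Set ↥(Kn n) := Subtype.val ⁻¹' (A ∩ V) with hA'
  have hA'ne : A'.Nonempty := ⟨⟨a, haK⟩, haA, haV⟩
  obtain ⟨U', hU'ne, hU'open, hU'sc⟩ := hprop n A' hA'ne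
  obtain ⟨T, hTopen, hTeq⟩ := isOpen_induced_iff.mp hU'open
  obtain ⟨S, hSopen, hSeq⟩ := isOpen_induced_iff.mp hTopen
  set B : Set K := A ∩ V ∩ S with hB
  haveI := hU'sc
  -- second countability of B
  have hemb1 : Topology.IsEmbedding (fun z : ↥U' => ((((z : ↥A') : ↥(Kn n)) : K))) :=
    Topology.IsEmbedding.subtypeVal.comp
      (Topology.IsEmbedding.subtypeVal.comp Topology.IsEmbedding.subtypeVal)
  have hrange1 : Set.range (fun z : ↥U' => ((((z : ↥A') : ↥(Kn n)) : K))) = B := by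
    ext k
    constructor
    · rintro ⟨z, rfl⟩
      have hw : ((z : ↥A') : ↥(Kn n)) ∈ A' := (z : ↥A').2
      have hz : (z : ↥A') ∈ Subtype.val ⁻¹' T := by rw [hTeq]; exact z.2
      have hT : ((z : ↥A') : ↥(Kn n)) ∈ Subtype.val ⁻¹' S := by rw [hSeq]; exact hz
      exact ⟨hw, hT⟩
    · rintro ⟨⟨hkA, hkV⟩, hkS⟩
      have hkK : k ∈ Kn n := hsub k (subset_closure hkA) hkV
      have h1 : (⟨k, hkK⟩ : ↥(Kn n)) ∈ A' := ⟨hkA, hkV⟩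
      have h2 : (⟨⟨k, hkK⟩, h1⟩ : ↥A') ∈ U' := by
        rw [← hTeq, ← hSeq]
        exact hkS
      exact ⟨⟨⟨⟨k, hkK⟩, h1⟩, h2⟩, rfl⟩
  haveI hBsc : SecondCountableTopology ↥B := sc_of_range hemb1 hrange1
  -- the desired open set in A
  refine ⟨Subtype.val ⁻¹' (V ∩ S), ?_, (hVopen.inter hSopen).preimage continuous_subtype_val, ?_⟩
  · obtain ⟨u, hu⟩ := hU'ne
    have huAV : ((u : ↥(Kn n)) : K) ∈ A ∩ V := u.2
    have huS : ((u : ↥(Kn n)) : K) ∈ S := by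
      have h1 : u ∈ Subtype.val ⁻¹' T := by rw [hTeq]; exact hu
      have h2 : (u : ↥(Kn n)) ∈ Subtype.val ⁻¹' S := by rw [hSeq]; exact h1
      exact h2
    exact ⟨⟨_, huAV.1⟩, huAV.2, huS⟩
  · have hemb2 : Topology.IsEmbedding
        (fun z : ↥((Subtype.val : ↥A → K) ⁻¹' (V ∩ S)) => ((z : ↥A) : K)) :=
      Topology.IsEmbedding.subtypeVal.comp Topology.IsEmbedding.subtypeVal
    have hrange2 : Set.range
        (fun z : ↥((Subtype.val : ↥A → K) ⁻¹' (V ∩ S)) => ((z : ↥A) : K)) = B := by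
      ext k
      constructor
      · rintro ⟨z, rfl⟩
        exact ⟨⟨(z : ↥A).2, z.2.1⟩, z.2.2⟩
      · rintro ⟨⟨hkA, hkV⟩, hkS⟩
        exact ⟨⟨⟨k, hkA⟩, hkV, hkS⟩, rfl⟩
    exact sc_to_dom hemb2 hrange2
end

section
/- Let K be an NY compact space and let L be a compact Hausdorff space. If there exists a continuous linear map T : C_p(K) → C_p(L) such that T(C_p(K)) is dense in C_p(L), then L is a union of countably many NY compact subspaces. -/
universe u

/-- The zero point of the Hilbert cube `I^ω = [0,1]^ℕ`. -/
def hilbertZero : ℕ → Set.Icc (0 : ℝ) 1 :=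
  fun _ => ⟨0, Set.left_mem_Icc.mpr zero_le_one⟩

/-- A space is NY compact if it is a compact Hausdorff space homeomorphic to a subspace
of the σ-product `σ(I^ω, Γ) = {x ∈ (I^ω)^Γ : x γ = 0 for all but finitely many γ}` of
Hilbert cubes, for some index set `Γ`. -/
def IsNYCompact (K : Type u) [TopologicalSpace K] : Prop :=
  CompactSpace K ∧ T2Space K ∧
    ∃ (Γ : Type u) (f : K → Γ → ℕ → Set.Icc (0 : ℝ) 1),
      Topology.IsEmbedding f ∧ ∀ k, {γ | f k γ ≠ hilbertZero}.Finite

set_option linter.unusedSectionVars false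

open Set Topology

section Mon
variable {K : Type u} {Γ : Type u} [TopologicalSpace K]
variable (f : K → Γ → ℕ → Set.Icc (0:ℝ) 1)

private lemma mprod_nonneg (s : Multiset ℕ) (g : ℕ → ℝ) (hg : ∀ m, 0 ≤ g m) :
    0 ≤ (s.map g).prod :=
  Multiset.prod_nonneg (by simp only [Multiset.mem_map]; rintro a ⟨m, _, rfl⟩; exact hg m)

private lemma mprod_le_one (s : Multiset ℕ) (g : ℕ → ℝ) (hg0 : ∀ m, 0 ≤ g m)
    (hg1 : ∀ m, g m ≤ 1) : (s.map g).prod ≤ 1 := by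
  induction s using Multiset.induction_on with
  | empty => simp
  | cons a s ih =>
    rw [Multiset.map_cons, Multiset.prod_cons]
    calc g a * (s.map g).prod ≤ 1 * 1 :=
          mul_le_mul (hg1 a) ih (mprod_nonneg s g hg0) zero_le_one
      _ = 1 := one_mul 1

private lemma mprod_eq_zero (s : Multiset ℕ) (g : ℕ → ℝ) (hs : s ≠ 0) (hg : ∀ m ∈ s, g m = 0) :
    (s.map g).prod = 0 := by
  obtain ⟨a, ha⟩ := Multiset.exists_mem_of_ne_zero hs
  obtain ⟨t, rfl⟩ := Multiset.exists_cons_of_mem ha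
  rw [Multiset.map_cons, Multiset.prod_cons, hg a (Multiset.mem_cons_self a t), zero_mul]

private lemma mprod_continuous {γ : Γ} (hf : Continuous f) (s : Multiset ℕ) :
    Continuous fun k => ((s.map (fun m => ((f k γ m : ℝ)))).prod) := by
  induction s using Multiset.induction_on with
  | empty => simpa using continuous_const
  | cons a s ih =>
    simp only [Multiset.map_cons, Multiset.prod_cons]
    exact (continuous_subtype_val.comp
      (((continuous_apply a).comp (continuous_apply γ)).comp hf)).mul ih

/-- The monomial function on `K` attached to a finitely supported family of multisets. -/
noncomputable def monFn (h : Γ →₀ Multiset ℕ) (k : K) : ℝ :=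
  ∏ γ ∈ h.support, ((h γ).map (fun m => ((f k γ m : ℝ)))).prod

lemma monFn_nonneg (h : Γ →₀ Multiset ℕ) (k : K) : 0 ≤ monFn f h k :=
  Finset.prod_nonneg fun γ _ => mprod_nonneg _ _ fun m => (f k γ m).2.1

lemma monFn_le_one (h : Γ →₀ Multiset ℕ) (k : K) : monFn f h k ≤ 1 :=
  Finset.prod_le_one (fun γ _ => mprod_nonneg _ _ fun m => (f k γ m).2.1)
    (fun γ _ => mprod_le_one _ _ (fun m => (f k γ m).2.1) (fun m => (f k γ m).2.2))

lemma monFn_continuous (hf : Continuous f) (h : Γ →₀ Multiset ℕ) :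
    Continuous (monFn f h) :=
  continuous_finset_prod _ fun γ _ => mprod_continuous f hf (h γ)

lemma monFn_zero : monFn f 0 = fun _ => 1 := by
  funext k; simp [monFn]

lemma monFn_add (h₁ h₂ : Γ →₀ Multiset ℕ) (k : K) :
    monFn f (h₁ + h₂) k = monFn f h₁ k * monFn f h₂ k := by
  classical
  have key : ∀ h : Γ →₀ Multiset ℕ, ∀ s : Finset Γ, h.support ⊆ s →
      monFn f h k = ∏ γ ∈ s, ((h γ).map (fun m => ((f k γ m : ℝ)))).prod := by
    intro h s hs
    exact Finset.prod_subset hs (fun γ _ hγ => by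
      rw [Finsupp.notMem_support_iff.mp hγ]; simp)
  rw [key (h₁ + h₂) (h₁.support ∪ h₂.support) (Finsupp.support_add),
      key h₁ (h₁.support ∪ h₂.support) Finset.subset_union_left,
      key h₂ (h₁.support ∪ h₂.support) Finset.subset_union_right,
      ← Finset.prod_mul_distrib]
  refine Finset.prod_congr rfl fun γ _ => ?_
  rw [Finsupp.add_apply, Multiset.map_add, Multiset.prod_add]

lemma monFn_single (γ : Γ) (m : ℕ) (k : K) :
    monFn f (Finsupp.single γ ({m} : Multiset ℕ)) k = (f k γ m : ℝ) := by
  classical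
  rw [monFn, Finsupp.support_single_ne_zero _ (by simp : ({m} : Multiset ℕ) ≠ 0)]
  simp

lemma monFn_ne_zero_support (h : Γ →₀ Multiset ℕ) (k : K) (hne : monFn f h k ≠ 0)
    {γ : Γ} (hγ : γ ∈ h.support) : f k γ ≠ hilbertZero := by
  intro hzero
  apply hne
  refine Finset.prod_eq_zero hγ ?_
  refine mprod_eq_zero _ _ (Finsupp.mem_support_iff.mp hγ) fun m _ => ?_
  rw [hzero]; rfl

end Mon

section Rep
variable {K : Type u} [TopologicalSpace K]

/-- Every continuous linear functional on `C_p(K)` is a finite combination of evaluations. -/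
lemma exists_rep [CompactSpace K] [T2Space K] (φ : Cp K →ₗ[ℝ] ℝ) (hφ : Continuous φ) :
    ∃ (k : ℕ) (x : Fin k → K) (lam : Fin k → ℝ),
      ∀ g : Cp K, φ g = ∑ i, lam i * g.1 (x i) := by
  classical
  -- continuity at 0
  have h0 : φ ⁻¹' Set.Ioo (-1:ℝ) 1 ∈ 𝓝 (0 : Cp K) := by
    refine hφ.continuousAt.preimage_mem_nhds ?_
    rw [map_zero]
    exact Ioo_mem_nhds (by norm_num) (by norm_num)
  obtain ⟨s, hs, hsub⟩ := (mem_nhds_subtype _ _ _).mp h0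
  have hcoe : ((0 : Cp K) : K → ℝ) = (0 : K → ℝ) := rfl
  rw [hcoe, nhds_pi, Filter.mem_pi] at hs
  obtain ⟨I, hIfin, t, ht, hIt⟩ := hs
  -- functions vanishing on I are killed by φ
  have key : ∀ g : Cp K, (∀ z ∈ I, g.1 z = 0) → φ g = 0 := by
    intro g hg
    by_contra hne
    have hmem : ∀ c : ℝ, c • g ∈ φ ⁻¹' Set.Ioo (-1:ℝ) 1 := by
      intro c
      apply hsub
      show ((c • g : Cp K) : K → ℝ) ∈ s
      apply hIt
      intro z hz
      have : ((c • g : Cp K) : K → ℝ) z = 0 := by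
        show c * g.1 z = 0
        rw [hg z hz, mul_zero]
      rw [this]
      exact mem_of_mem_nhds (ht z)
    have h2 := (hmem ((2 : ℝ) / φ g)).2
    rw [map_smul, smul_eq_mul, div_mul_cancel₀ _ hne] at h2
    norm_num at h2
  set F := hIfin.toFinset with hF
  -- Urysohn functions
  have hury : ∀ z : K, z ∈ F → ∃ uz : C(K,ℝ), uz z = 1 ∧ ∀ w ∈ F, w ≠ z → uz w = 0 := by
    intro z hz
    have hcl : IsClosed (↑(F.erase z) : Set K) := (F.erase z).finite_toSet.isClosed
    obtain ⟨uz, hu0, hu1, _⟩ := exists_continuous_zero_one_of_isClosed hcl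
      (isClosed_singleton (x := z))
      (by simp [Set.disjoint_singleton_right])
    refine ⟨uz, hu1 rfl, fun w hw hne => hu0 ?_⟩
    simpa using ⟨hw, hne⟩
  choose uu hu1 hu0 using hury
  set k := F.card with hk
  set e := F.equivFin with he
  set x : Fin k → K := fun i => (e.symm i : K) with hx
  set uCp : Fin k → Cp K := fun i =>
    ⟨(uu (x i) (e.symm i).2 : K → ℝ), (uu (x i) (e.symm i).2).continuous⟩ with huCp
  set lam : Fin k → ℝ := fun i => φ (uCp i) with hlam
  refine ⟨k, x, lam, fun g => ?_⟩
  set d : Cp K := g - ∑ i, g.1 (x i) • uCp i with hd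
  have hdcoe : (d : K → ℝ) = (g : K → ℝ) - ∑ i, g.1 (x i) • ((uCp i : K → ℝ)) := by
    rw [hd]
    push_cast [AddSubmonoidClass.coe_finset_sum]
    rfl
  have hdz : ∀ z ∈ I, d.1 z = 0 := by
    intro z hz
    have hzF : z ∈ F := hIfin.mem_toFinset.mpr hz
    have hdval : d.1 z = g.1 z - ∑ i, g.1 (x i) * (uCp i).1 z := by
      rw [hdcoe]
      simp [Finset.sum_apply]
    rw [hdval, sub_eq_zero]
    have hsum : ∀ i : Fin k, g.1 (x i) * (uCp i).1 z
        = (fun zz : F => g.1 zz * (uu zz zz.2) z) (e.symm i) := fun i => rfl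
    rw [Finset.sum_congr rfl (fun i _ => hsum i), Equiv.sum_comp e.symm
      (fun zz : F => g.1 zz * (uu zz zz.2) z), Finset.univ_eq_attach]
    rw [Finset.sum_eq_single_of_mem (⟨z, hzF⟩ : {v // v ∈ F}) (F.mem_attach _)]
    · rw [hu1 z hzF, mul_one]
    · intro b _ hb
      rw [hu0 b b.2 z hzF, mul_zero]
      intro hzb
      exact hb (Subtype.ext hzb.symm)
  have hφd : φ d = 0 := key d hdz
  rw [hd, map_sub, map_sum, sub_eq_zero] at hφd
  rw [hφd]
  refine Finset.sum_congr rfl fun i _ => ?_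
  rw [map_smul, smul_eq_mul, mul_comm]

end Rep

section Ln
variable {K L : Type u} [TopologicalSpace K] [TopologicalSpace L]
variable (T : Cp K →ₗ[ℝ] Cp L)

/-- The set of points of `L` whose associated functional on `C_p(K)` is a combination of
at most `N` evaluations with total coefficient mass at most `N`. -/
def LnSet (N : ℕ) : Set L :=
  {y | ∃ k : ℕ, k ≤ N ∧ ∃ (x : Fin k → K) (lam : Fin k → ℝ),
    (∑ i, |lam i|) ≤ (N : ℝ) ∧ ∀ g : Cp K, (T g).1 y = ∑ i, lam i * g.1 (x i)}

lemma isClosed_LnSet [CompactSpace K] (N : ℕ) : IsClosed (LnSet T N) := by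
  classical
  set Φ : L → (Cp K → ℝ) := fun y g => (T g).1 y with hΦ
  have hΦcont : Continuous Φ :=
    continuous_pi fun g => (T g).2
  set D : Set (Cp K → ℝ) := ⋃ k ∈ Finset.range (N+1),
    (fun p : (Fin k → K) × (Fin k → ℝ) => fun g : Cp K => ∑ i, p.2 i * g.1 (p.1 i)) ''
      {p | (∑ i, |p.2 i|) ≤ (N : ℝ)} with hD
  have hDcomp : IsCompact D := by
    refine Finset.isCompact_biUnion _ fun k _ => ?_
    have hdom : IsCompact {p : (Fin k → K) × (Fin k → ℝ) | (∑ i, |p.2 i|) ≤ (N : ℝ)} := by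
      have h1 : IsCompact {lam : Fin k → ℝ | (∑ i, |lam i|) ≤ (N : ℝ)} := by
        refine IsCompact.of_isClosed_subset
          (isCompact_univ_pi fun _ => isCompact_Icc (a := -(N:ℝ)) (b := (N:ℝ))) ?_ ?_
        · exact isClosed_le (by fun_prop) continuous_const
        · intro lam hlam
          refine Set.mem_univ_pi.mpr fun i => ?_
          have h2 : |lam i| ≤ (N : ℝ) :=
            le_trans (Finset.single_le_sum (f := fun j => |lam j|)
              (fun j _ => abs_nonneg _) (Finset.mem_univ i)) hlam
          exact abs_le.mp h2
      have : {p : (Fin k → K) × (Fin k → ℝ) | (∑ i, |p.2 i|) ≤ (N : ℝ)}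
          = Set.univ ×ˢ {lam | (∑ i, |lam i|) ≤ (N : ℝ)} := by
        ext p; simp
      rw [this]
      exact isCompact_univ.prod h1
    refine hdom.image ?_
    refine continuous_pi fun g => ?_
    refine continuous_finset_sum _ fun i _ => ?_
    exact ((continuous_apply i).comp continuous_snd).mul
      (g.2.comp ((continuous_apply i).comp continuous_fst))
  have hLn : LnSet T N = Φ ⁻¹' D := by
    ext y
    constructor
    · rintro ⟨k, hk, x, lam, hb, hrep⟩
      refine Set.mem_preimage.mpr (Set.mem_biUnion (Finset.mem_range.mpr (Nat.lt_succ_of_le hk)) ?_)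
      exact ⟨(x, lam), hb, by funext g; exact (hrep g).symm⟩
    · intro hy
      obtain ⟨k, hk, ⟨p, hp, hpe⟩⟩ := Set.mem_iUnion₂.mp hy
      refine ⟨k, by simpa using Nat.lt_succ_iff.mp (Finset.mem_range.mp hk), p.1, p.2, hp, ?_⟩
      intro g
      exact (congrFun hpe g).symm
  rw [hLn]
  exact hDcomp.isClosed.preimage hΦcont

lemma iUnion_LnSet [CompactSpace K] [T2Space K] (hTcont : Continuous T) :
    ⋃ N, LnSet T N = (Set.univ : Set L) := by
  refine Set.eq_univ_of_forall fun y => ?_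
  set φ : Cp K →ₗ[ℝ] ℝ :=
    { toFun := fun g => (T g).1 y
      map_add' := fun g g' => by show (T (g+g')).1 y = _; rw [map_add]; rfl
      map_smul' := fun c g => by show (T (c • g)).1 y = _; rw [map_smul]; rfl } with hφ
  have hφcont : Continuous φ := by
    have : Continuous fun u : Cp L => u.1 y := (continuous_apply y).comp continuous_subtype_val
    exact this.comp hTcont
  obtain ⟨k, x, lam, hrep⟩ := exists_rep φ hφcont
  set N : ℕ := k + ⌈∑ i, |lam i|⌉₊ with hN
  refine Set.mem_iUnion.mpr ⟨N, k, by omega, x, lam, ?_, hrep⟩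
  calc (∑ i, |lam i|) ≤ (⌈∑ i, |lam i|⌉₊ : ℝ) := Nat.le_ceil _
    _ ≤ (N : ℝ) := by exact_mod_cast Nat.le_add_left _ _

/-- Points of `L` not separated by the image of `T` are equal, when the image is dense. -/
lemma eq_of_image_dense [CompactSpace L] [T2Space L] (hTdense : DenseRange T)
    (y y' : L) (hyy' : ∀ g : Cp K, (T g).1 y = (T g).1 y') : y = y' := by
  by_contra hne
  obtain ⟨g₀, h0, h1, _⟩ := exists_continuous_zero_one_of_isClosed
    (isClosed_singleton (x := y)) (isClosed_singleton (x := y'))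
    (by simpa [Set.disjoint_singleton] using hne)
  set g₀' : Cp L := ⟨(g₀ : L → ℝ), g₀.continuous⟩ with hg₀'
  set ev : Cp L → ℝ × ℝ := fun u => (u.1 y, u.1 y') with hev
  have hevc : Continuous ev := by
    refine Continuous.prodMk ?_ ?_ <;>
      exact (continuous_apply _).comp continuous_subtype_val
  have hmem : ev g₀' ∈ closure (ev '' Set.range T) := by
    apply image_closure_subset_closure_image hevc
    exact Set.mem_image_of_mem ev (hTdense g₀')
  have hdiag : closure (ev '' Set.range T) ⊆ {p : ℝ × ℝ | p.1 = p.2} := by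
    refine closure_minimal ?_ (isClosed_eq continuous_fst continuous_snd)
    rintro p ⟨u, ⟨g, rfl⟩, rfl⟩
    exact hyy' g
  have := hdiag hmem
  have h0' : g₀ y = 0 := h0 rfl
  have h1' : g₀ y' = 1 := h1 rfl
  simp only [hev, hg₀', Set.mem_setOf_eq] at this
  rw [h0', h1'] at this
  norm_num at this

end Ln

section SW
variable {K : Type u} {Γ : Type u} [TopologicalSpace K] [CompactSpace K] [T2Space K]
variable (f : K → Γ → ℕ → Set.Icc (0:ℝ) 1)

/-- The coordinate functions of the σ-product, pulled back to `K`. -/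
noncomputable def coordC (hf : Continuous f) (p : Γ × ℕ) : C(K, ℝ) :=
  ⟨fun k => (f k p.1 p.2 : ℝ), by
    have h1 : Continuous fun k => f k p.1 p.2 :=
      ((continuous_apply p.2).comp ((continuous_apply p.1).comp hf))
    exact continuous_subtype_val.comp h1⟩

noncomputable def monC (hf : Continuous f) (h : Γ →₀ Multiset ℕ) : C(K, ℝ) :=
  ⟨monFn f h, monFn_continuous f hf h⟩

lemma exists_mon_of_list (hf : Continuous f) (l : List C(K, ℝ))
    (hl : ∀ a ∈ l, a ∈ Set.range (coordC f hf)) :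
    ∃ h : Γ →₀ Multiset ℕ, monC f hf h = l.prod := by
  induction l with
  | nil =>
    refine ⟨0, ?_⟩
    ext k
    show monFn f 0 k = 1
    rw [monFn_zero]
  | cons a l ih =>
    obtain ⟨h', hh'⟩ := ih fun b hb => hl b (List.mem_cons_of_mem a hb)
    obtain ⟨p, hp⟩ := hl a List.mem_cons_self
    refine ⟨Finsupp.single p.1 ({p.2} : Multiset ℕ) + h', ?_⟩
    rw [List.prod_cons, ← hh', ← hp]
    ext k
    show monFn f _ k = _
    rw [monFn_add, monFn_single]
    rfl

/-- Two finitely-supported combinations of evaluations agreeing on all monomials agree on all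
continuous functions (Stone–Weierstrass). -/
lemma mon_determines (hemb : Topology.IsEmbedding f)
    {k k' : ℕ} (x : Fin k → K) (lam : Fin k → ℝ) (x' : Fin k' → K) (lam' : Fin k' → ℝ)
    (hmon : ∀ h : Γ →₀ Multiset ℕ,
      ∑ i, lam i * monFn f h (x i) = ∑ i, lam' i * monFn f h (x' i)) :
    ∀ g : C(K, ℝ), ∑ i, lam i * g (x i) = ∑ i, lam' i * g (x' i) := by
  classical
  have hf : Continuous f := hemb.continuous
  set s : Set C(K, ℝ) := Set.range (coordC f hf) with hs
  set A : Subalgebra ℝ C(K, ℝ) := Algebra.adjoin ℝ s with hA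
  have hsep : A.SeparatesPoints := by
    intro a b hab
    have : f a ≠ f b := fun hfeq => hab (hemb.injective hfeq)
    have : ∃ γ : Γ, f a γ ≠ f b γ := by
      by_contra hcon
      push_neg at hcon
      exact this (funext hcon)
    obtain ⟨γ, hγ⟩ := this
    have : ∃ m : ℕ, f a γ m ≠ f b γ m := by
      by_contra hcon
      push_neg at hcon
      exact hγ (funext hcon)
    obtain ⟨m, hm⟩ := this
    refine ⟨(coordC f hf (γ, m) : K → ℝ), ⟨coordC f hf (γ, m),
      Algebra.subset_adjoin ⟨(γ, m), rfl⟩, rfl⟩, ?_⟩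
    exact fun hc => hm (Subtype.ext hc)
  have hSW : A.topologicalClosure = ⊤ :=
    ContinuousMap.subalgebra_topologicalClosure_eq_top_of_separatesPoints A hsep
  -- the two functionals
  set M : C(K, ℝ) →ₗ[ℝ] ℝ :=
    { toFun := fun g => ∑ i, lam i * g (x i)
      map_add' := fun u v => by
        simp [ContinuousMap.add_apply, mul_add, Finset.sum_add_distrib]
      map_smul' := fun c u => by
        simp [ContinuousMap.smul_apply, smul_eq_mul, Finset.mul_sum, mul_left_comm] } with hM
  set M' : C(K, ℝ) →ₗ[ℝ] ℝ :=
    { toFun := fun g => ∑ i, lam' i * g (x' i)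
      map_add' := fun u v => by
        simp [ContinuousMap.add_apply, mul_add, Finset.sum_add_distrib]
      map_smul' := fun c u => by
        simp [ContinuousMap.smul_apply, smul_eq_mul, Finset.mul_sum, mul_left_comm] } with hM'eq
  have hMc : Continuous M := by
    simp only [hM, LinearMap.coe_mk, AddHom.coe_mk]
    exact continuous_finset_sum _ fun i _ => continuous_const.mul (continuous_eval_const (x i))
  have hM'c : Continuous M' := by
    simp only [hM'eq, LinearMap.coe_mk, AddHom.coe_mk]
    exact continuous_finset_sum _ fun i _ => continuous_const.mul (continuous_eval_const (x' i))
  have hEqClosed : IsClosed {g : C(K, ℝ) | M g = M' g} := isClosed_eq hMc hM'c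
  have hmonC : ∀ h : Γ →₀ Multiset ℕ, M (monC f hf h) = M' (monC f hf h) := fun h => hmon h
  have hAsub : (A : Set C(K, ℝ)) ⊆ {g | M g = M' g} := by
    intro g hg
    have hg' : g ∈ Submodule.span ℝ ((Submonoid.closure s : Submonoid C(K,ℝ)) : Set C(K,ℝ)) := by
      rw [← Algebra.adjoin_eq_span]
      exact hg
    clear hg
    induction hg' using Submodule.span_induction with
    | mem u hu =>
      obtain ⟨l, hl, hlp⟩ := Submonoid.exists_list_of_mem_closure hu
      obtain ⟨h, hh⟩ := exists_mon_of_list f hf l hl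
      have : u = monC f hf h := by rw [hh, hlp]
      rw [Set.mem_setOf_eq, this]
      exact hmonC h
    | zero => simp
    | add u v hu hv hpu hpv =>
      show M (u + v) = M' (u + v)
      rw [map_add, map_add, show M u = M' u from hpu, show M v = M' v from hpv]
    | smul c u hu hpu =>
      show M (c • u) = M' (c • u)
      rw [map_smul, map_smul, show M u = M' u from hpu]
  intro g
  have hgmem : g ∈ closure (A : Set C(K, ℝ)) := by
    have : g ∈ A.topologicalClosure := by rw [hSW]; exact Algebra.mem_top
    exact this
  exact closure_minimal hAsub hEqClosed hgmem

end SW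

section Main

private lemma max_sub_max_neg (a : ℝ) : max 0 a - max 0 (-a) = a := by
  rcases le_total 0 a with h | h
  · rw [max_eq_right h, max_eq_left (by linarith), sub_zero]
  · rw [max_eq_left h, max_eq_right (by linarith)]; ring

variable {K L : Type u} [TopologicalSpace K] [TopologicalSpace L]
  [CompactSpace K] [T2Space K] [CompactSpace L] [T2Space L]
  {Γ : Type u}

lemma isNYCompact_LnSet (f : K → Γ → ℕ → Set.Icc (0:ℝ) 1)
    (hemb : Topology.IsEmbedding f)
    (hfin : ∀ k, {γ | f k γ ≠ hilbertZero}.Finite)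
    (T : Cp K →ₗ[ℝ] Cp L) (hTdense : DenseRange T) (N : ℕ) :
    IsNYCompact ↥(LnSet T N) := by
  classical
  have hf : Continuous f := hemb.continuous
  haveI hcs : CompactSpace ↥(LnSet T N) :=
    isCompact_iff_compactSpace.mp ((isClosed_LnSet T N).isCompact)
  refine ⟨inferInstance, inferInstance, ?_⟩
  set monCp : (Γ →₀ Multiset ℕ) → Cp K := fun h =>
    ⟨monFn f h, monFn_continuous f hf h⟩ with hmonCp
  set val : L → (Γ →₀ Multiset ℕ) → Bool → ℝ := fun y h b =>
    ((if b then (1:ℝ) else -1) * (T (monCp h)).1 y) / (N + 1) with hval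
  have hcnt : ∀ G : Finset Γ, ∃ ι : ({h : Γ →₀ Multiset ℕ // h.support = G} × Bool) → ℕ, Function.Injective ι := by
    intro G
    have hinj : Function.Injective
        (fun (h : {h : Γ →₀ Multiset ℕ // h.support = G}) (γ : {γ // γ ∈ G}) => h.1 γ.1) := by
      intro h h' hhh
      apply Subtype.ext
      refine Finsupp.ext fun γ => ?_
      by_cases hγ : γ ∈ G
      · exact congrFun hhh ⟨γ, hγ⟩
      · rw [Finsupp.notMem_support_iff.mp (by rw [h.2]; exact hγ),
          Finsupp.notMem_support_iff.mp (by rw [h'.2]; exact hγ)]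
    haveI : Countable {h : Γ →₀ Multiset ℕ // h.support = G} := hinj.countable
    exact Countable.exists_injective_nat _
  choose ι hι using hcnt
  set e : ↥(LnSet T N) → Finset Γ → ℕ → Set.Icc (0:ℝ) 1 := fun y G n =>
    if hn : ∃ i : ({h : Γ →₀ Multiset ℕ // h.support = G} × Bool), ι G i = n then
      Set.projIcc 0 1 zero_le_one (val y.1 hn.choose.1.1 hn.choose.2)
    else hilbertZero n with he
  have hcoord : ∀ (y : ↥(LnSet T N)) (G : Finset Γ) (i : ({h : Γ →₀ Multiset ℕ // h.support = G} × Bool)),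
      e y G (ι G i) = Set.projIcc 0 1 zero_le_one (val y.1 i.1.1 i.2) := by
    intro y G i
    have hex : ∃ i' : ({h : Γ →₀ Multiset ℕ // h.support = G} × Bool), ι G i' = ι G i := ⟨i, rfl⟩
    have h1 : e y G (ι G i)
        = Set.projIcc 0 1 zero_le_one (val y.1 hex.choose.1.1 hex.choose.2) := dif_pos hex
    rw [h1, hι G hex.choose_spec]
  have hbound : ∀ (y : ↥(LnSet T N)) (h : Γ →₀ Multiset ℕ),
      |(T (monCp h)).1 y.1| ≤ (N : ℝ) := by
    intro y h
    obtain ⟨k, hk, x, lam, hb, hrep⟩ := y.2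
    rw [hrep (monCp h)]
    refine le_trans (Finset.abs_sum_le_sum_abs _ _)
      (le_trans (Finset.sum_le_sum fun i _ => ?_) hb)
    rw [abs_mul]
    refine mul_le_of_le_one_right (abs_nonneg _) ?_
    rw [abs_of_nonneg (monFn_nonneg f h (x i))]
    exact monFn_le_one f h (x i)
  have hR : (0:ℝ) < (N:ℝ) + 1 := by positivity
  refine ⟨Finset Γ, e, ?_, ?_⟩
  · -- `e` is an embedding
    have hecont : Continuous e := by
      refine continuous_pi fun G => continuous_pi fun n => ?_
      by_cases hn : ∃ i : ({h : Γ →₀ Multiset ℕ // h.support = G} × Bool), ι G i = n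
      · have hrw : (fun y : ↥(LnSet T N) => e y G n)
            = fun y => Set.projIcc 0 1 zero_le_one (val y.1 hn.choose.1.1 hn.choose.2) := by
          funext y; exact dif_pos hn
        rw [hrw]
        refine continuous_projIcc.comp ?_
        rw [hval]
        refine (Continuous.mul continuous_const ?_).div_const _
        exact (T (monCp hn.choose.1.1)).2.comp continuous_subtype_val
      · have hrw : (fun y : ↥(LnSet T N) => e y G n) = fun _ => hilbertZero n := by
          funext y; exact dif_neg hn
        rw [hrw]; exact continuous_const
    have heinj : Function.Injective e := by
      intro y y' hee
      have hval' : ∀ h : Γ →₀ Multiset ℕ, (T (monCp h)).1 y.1 = (T (monCp h)).1 y'.1 := by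
        intro h
        have hb : |(T (monCp h)).1 y.1| ≤ (N:ℝ) := hbound y h
        have hb' : |(T (monCp h)).1 y'.1| ≤ (N:ℝ) := hbound y' h
        have hmin : ∀ s : ℝ, |s| ≤ (N:ℝ) → min 1 (s / ((N:ℝ)+1)) = s / ((N:ℝ)+1) := by
          intro s hs
          refine min_eq_right ?_
          rw [div_le_one hR]
          have := (abs_le.mp hs).2
          linarith
        have hv1 : ∀ z : L, val z h true = ((T (monCp h)).1 z) / ((N:ℝ)+1) := by
          intro z; rw [hval]; norm_num
        have hv2 : ∀ z : L, val z h false = (-((T (monCp h)).1 z)) / ((N:ℝ)+1) := by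
          intro z; rw [hval]; norm_num
        have hkey : ∀ b : Bool, (Set.projIcc 0 1 zero_le_one (val y.1 h b) : ℝ)
            = (Set.projIcc 0 1 zero_le_one (val y'.1 h b) : ℝ) := by
          intro b
          have h1 := congrFun (congrFun hee h.support) (ι h.support (⟨h, rfl⟩, b))
          rw [hcoord y h.support (⟨h, rfl⟩, b), hcoord y' h.support (⟨h, rfl⟩, b)] at h1
          exact congrArg Subtype.val h1
        have hpos := hkey true
        have hneg := hkey false
        rw [hv1, hv1, Set.coe_projIcc, Set.coe_projIcc, hmin _ hb, hmin _ hb'] at hpos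
        rw [hv2, hv2, Set.coe_projIcc, Set.coe_projIcc, hmin _ (by rwa [abs_neg]),
          hmin _ (by rwa [abs_neg])] at hneg
        have e3 : (T (monCp h)).1 y.1 / ((N:ℝ)+1) = (T (monCp h)).1 y'.1 / ((N:ℝ)+1) := by
          have hsub := congrArg₂ (fun a b : ℝ => a - b) hpos hneg
          simpa only [neg_div, max_sub_max_neg] using hsub
        field_simp [ne_of_gt hR] at e3
        exact e3
      obtain ⟨k, hk, x, lam, hbm, hrep⟩ := y.2
      obtain ⟨k', hk', x', lam', hbm', hrep'⟩ := y'.2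
      have hmon : ∀ h : Γ →₀ Multiset ℕ,
          ∑ i, lam i * monFn f h (x i) = ∑ i, lam' i * monFn f h (x' i) := by
        intro h
        rw [← hrep (monCp h), ← hrep' (monCp h)]
        exact hval' h
      have hg : ∀ g : Cp K, (T g).1 y.1 = (T g).1 y'.1 := by
        intro g
        have := mon_determines f hemb x lam x' lam' hmon ⟨g.1, g.2⟩
        rw [hrep g, hrep' g]
        exact this
      exact Subtype.ext (eq_of_image_dense T hTdense y.1 y'.1 hg)
    exact (hecont.isClosedEmbedding heinj).toIsEmbedding
  · -- finite supports
    intro y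
    obtain ⟨k, hk, x, lam, hb, hrep⟩ := y.2
    have hcov : {G : Finset Γ | e y G ≠ hilbertZero}
        ⊆ ⋃ i : Fin k, {G : Finset Γ | (↑G : Set Γ) ⊆ {γ | f (x i) γ ≠ hilbertZero}} := by
      intro G hG
      obtain ⟨n, hnne⟩ := Function.ne_iff.mp hG
      by_cases hn : ∃ i : ({h : Γ →₀ Multiset ℕ // h.support = G} × Bool), ι G i = n
      · have hei : e y G n = Set.projIcc 0 1 zero_le_one
            (val y.1 hn.choose.1.1 hn.choose.2) := dif_pos hn
        have hvne : val y.1 hn.choose.1.1 hn.choose.2 ≠ 0 := by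
          intro h0
          apply hnne
          rw [hei, h0]
          apply Subtype.ext
          rw [Set.coe_projIcc]
          show max 0 (min 1 0) = (0:ℝ)
          norm_num
        have htne : (T (monCp hn.choose.1.1)).1 y.1 ≠ 0 := by
          intro h0
          apply hvne
          rw [hval]
          simp [h0]
        rw [hrep (monCp hn.choose.1.1)] at htne
        have hex : ∃ i : Fin k, lam i * monFn f hn.choose.1.1 (x i) ≠ 0 := by
          by_contra hcon
          push_neg at hcon
          exact htne (Finset.sum_eq_zero fun i _ => hcon i)
        obtain ⟨i, hi⟩ := hex
        have hmne : monFn f hn.choose.1.1 (x i) ≠ 0 := fun h0 => hi (by rw [h0, mul_zero])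
        refine Set.mem_iUnion.mpr ⟨i, fun γ hγ => ?_⟩
        have hγ' : γ ∈ (hn.choose.1.1).support := by
          rw [hn.choose.1.2]
          exact hγ
        exact monFn_ne_zero_support f hn.choose.1.1 (x i) hmne hγ'
      · have : e y G n = hilbertZero n := dif_neg hn
        exact absurd this hnne
    refine Set.Finite.subset (Set.finite_iUnion fun i => ?_) hcov
    have heq : {G : Finset Γ | (↑G : Set Γ) ⊆ {γ | f (x i) γ ≠ hilbertZero}}
        = (fun G : Finset Γ => (↑G : Set Γ)) ⁻¹'
          {t : Set Γ | t ⊆ {γ | f (x i) γ ≠ hilbertZero}} := rfl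
    rw [heq]
    exact Set.Finite.preimage (Set.injOn_of_injective Finset.coe_injective)
      ((hfin (x i)).finite_subsets)

end Main

/-- Let `K` be NY compact and `L` compact Hausdorff. If there is a continuous linear map
`T : C_p(K) → C_p(L)` with dense image, then `L` is a union of countably many NY compact
subspaces. -/
theorem stmt5 (K L : Type u) [TopologicalSpace K] [TopologicalSpace L]
    [CompactSpace L] [T2Space L]
    (hK : IsNYCompact K)
    (T : Cp K →ₗ[ℝ] Cp L) (hTcont : Continuous T) (hTdense : DenseRange T) :
    ∃ Ln : ℕ → Set L, ⋃ n, Ln n = Set.univ ∧ ∀ n, IsNYCompact ↥(Ln n) := by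
  obtain ⟨hKc, hKt2, Γ, f, hemb, hfin⟩ := hK
  haveI := hKc
  haveI := hKt2
  exact ⟨fun N => LnSet T N, iUnion_LnSet T hTcont,
    fun N => isNYCompact_LnSet f hemb hfin T hTdense N⟩
end

section
/- Let K be an NY compact space and let L be a compact Hausdorff space. If there exists a continuous linear map T : C_p(K) → C_p(L) such that T(C_p(K)) is dense in C_p(L), then every nonempty subspace A of L contains a nonempty relatively open subspace of countable weight (i.e., a nonempty relatively open subspace that is second countable). -/
universe u

open Set Topology TopologicalSpace

section NYProof

variable {K L Γ : Type u} [TopologicalSpace K] [TopologicalSpace L]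

/-- Evaluation of `T f` at a point, as a linear functional on `Cp K`. -/
noncomputable def phi (T : Cp K →ₗ[ℝ] Cp L) (a : L) : Cp K →ₗ[ℝ] ℝ :=
  ((LinearMap.proj a).comp (cpSubmodule L).subtype).comp T

/-- `F` is a supporting set for the functional `phi T a`. -/
def IsSuppSet (T : Cp K →ₗ[ℝ] Cp L) (a : L) (F : Set K) : Prop :=
  F.Finite ∧ ∀ f : Cp K, (∀ x ∈ F, f.1 x = 0) → phi T a f = 0

/-- The (minimal) support of a point of `L`. -/
def supp (T : Cp K →ₗ[ℝ] Cp L) (a : L) : Set K := ⋂₀ {F | IsSuppSet T a F}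

/-- The set of nonzero coordinates of a point of the σ-product. -/
def Gsupp (e : K → Γ → ℕ → Set.Icc (0:ℝ) 1) (x : K) : Set Γ := {γ | e x γ ≠ hilbertZero}

/-- Points supported inside a set `S` of coordinates. -/
def KS (e : K → Γ → ℕ → Set.Icc (0:ℝ) 1) (S : Set Γ) : Set K :=
  {x | ∀ γ, γ ∉ S → e x γ = hilbertZero}

/-- Points with at most `m` nonzero coordinates. -/
def Klayer (e : K → Γ → ℕ → Set.Icc (0:ℝ) 1) (m : ℕ) : Set K :=
  {x | (Gsupp e x).ncard ≤ m}

set_option linter.unusedSectionVars false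

variable (T : Cp K →ₗ[ℝ] Cp L) (e : K → Γ → ℕ → Set.Icc (0:ℝ) 1)

lemma exists_isSuppSet (hTcont : Continuous T) (a : L) : ∃ F, IsSuppSet T a F := by
  have hcont : Continuous (phi T a) := by
    have h1 : Continuous fun g : Cp L => g.1 a :=
      (continuous_apply a).comp continuous_subtype_val
    exact h1.comp hTcont
  have hnhds : (phi T a) ⁻¹' (Set.Ioo (-1 : ℝ) 1) ∈ nhds (0 : Cp K) := by
    apply hcont.continuousAt.preimage_mem_nhds
    have : phi T a 0 = 0 := map_zero _
    rw [this]
    exact Ioo_mem_nhds (by norm_num) (by norm_num)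
  rw [nhds_induced (Subtype.val : Cp K → (K → ℝ)) 0] at hnhds
  obtain ⟨t, ht, hsub⟩ := Filter.mem_comap.mp hnhds
  rw [show ((0 : Cp K) : K → ℝ) = (0 : K → ℝ) from rfl, nhds_pi, Filter.mem_pi] at ht
  obtain ⟨I, hIfin, V, hV, hIV⟩ := ht
  refine ⟨I, hIfin, ?_⟩
  intro f hf
  by_contra hne
  -- scale
  set c : ℝ := 2 / phi T a f with hc
  have hcf : ∀ x ∈ I, (c • f).1 x = 0 := by
    intro x hx
    show c * f.1 x = 0
    rw [hf x hx]; ring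
  have hmem : ((c • f : Cp K) : K → ℝ) ∈ Set.pi I V := by
    intro i hi
    have : ((c • f : Cp K) : K → ℝ) i = 0 := hcf i hi
    rw [this]
    exact mem_of_mem_nhds (hV i)
  have : c • f ∈ (phi T a) ⁻¹' (Set.Ioo (-1 : ℝ) 1) := hsub (hIV hmem)
  have habs : phi T a (c • f) ∈ Set.Ioo (-1 : ℝ) 1 := this
  rw [map_smul] at habs
  have : c • phi T a f = 2 := by
    rw [hc, smul_eq_mul]; field_simp
  rw [this] at habs
  exact absurd habs.2 (by norm_num)


variable [CompactSpace K] [T2Space K]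

/-- interpolation: a continuous function with prescribed values on a finite set. -/
lemma interp (P : Set K) (hP : P.Finite) (v : K → ℝ) :
    ∃ f : Cp K, ∀ x ∈ P, f.1 x = v x := by
  classical
  have key : ∀ x : K, ∃ u : C(K, ℝ), x ∈ P → (u x = 1 ∧ ∀ y ∈ P, y ≠ x → u y = 0) := by
    intro x
    by_cases hx : x ∈ P
    · obtain ⟨f, hf0, hf1, -⟩ := exists_continuous_zero_one_of_isClosed
        (((hP.diff : (P \ {x}).Finite).isClosed)) (isClosed_singleton (x := x))
        (by simp [Set.disjoint_left])
      exact ⟨f, fun _ => ⟨hf1 rfl, fun y hy hyx => hf0 ⟨hy, hyx⟩⟩⟩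
    · exact ⟨0, fun h => absurd h hx⟩
  choose u hu using key
  set g : C(K, ℝ) := ∑ x ∈ hP.toFinset, v x • u x with hg
  refine ⟨⟨g, g.continuous⟩, ?_⟩
  intro x hx
  have hxF : x ∈ hP.toFinset := hP.mem_toFinset.mpr hx
  show g x = v x
  rw [hg]
  rw [ContinuousMap.sum_apply]
  rw [Finset.sum_eq_single x]
  · simp [(hu x hx).1]
  · intro y hy hyx
    have : u y x = 0 := (hu y (hP.mem_toFinset.mp hy)).2 x hx (Ne.symm hyx)
    simp [this]
  · exact fun h => absurd hxF h

lemma isSuppSet_inter {a : L} {F G : Set K} (hF : IsSuppSet T a F) (hG : IsSuppSet T a G) :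
    IsSuppSet T a (F ∩ G) := by
  classical
  refine ⟨hF.1.subset inter_subset_left, ?_⟩
  intro f hf
  -- pick h agreeing with f on F and vanishing on G
  obtain ⟨h, hh⟩ := interp (F ∪ G) (hF.1.union hG.1)
    (fun y => if y ∈ F then f.1 y else 0)
  have hFh : ∀ x ∈ F, (f - h).1 x = 0 := by
    intro x hx
    have := hh x (Or.inl hx)
    simp only [if_pos hx] at this
    show f.1 x - h.1 x = 0
    rw [this]; ring
  have hGh : ∀ x ∈ G, h.1 x = 0 := by
    intro x hx
    have := hh x (Or.inr hx)
    by_cases hxF : x ∈ F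
    · rw [this, if_pos hxF]
      exact hf x ⟨hxF, hx⟩
    · rw [this, if_neg hxF]
  have h1 : phi T a (f - h) = 0 := hF.2 _ hFh
  have h2 : phi T a h = 0 := hG.2 _ hGh
  have := map_sub (phi T a) f h
  rw [h1] at this
  have : phi T a f - phi T a h = 0 := by rw [← this]
  rw [h2] at this
  linarith [this]


lemma supp_subset_isSuppSet {a : L} {F : Set K} (hF : IsSuppSet T a F) : supp T a ⊆ F :=
  sInter_subset_of_mem hF

lemma supp_isSuppSet {a : L} {F0 : Set K} (hF0 : IsSuppSet T a F0) :
    IsSuppSet T a (supp T a) := by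
  classical
  set ℱ : Set (Set K) := {F | IsSuppSet T a F} with hℱ
  set 𝒢 : Set (Set K) := {G | G ⊆ F0 ∧ G ∈ ℱ} with h𝒢
  have h𝒢fin : 𝒢.Finite := hF0.1.finite_subsets.subset (fun G hG => hG.1)
  -- finite intersections of supporting sets are supporting
  have hind : ∀ 𝒞 : Set (Set K), 𝒞.Finite → 𝒞 ⊆ ℱ → IsSuppSet T a (F0 ∩ ⋂₀ 𝒞) := by
    intro 𝒞 h𝒞fin
    refine Set.Finite.induction_on 𝒞 h𝒞fin ?_ ?_
    · intro _
      simpa using hF0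
    · intro G 𝒞' _ _ ih hsub
      have hG : IsSuppSet T a G := hsub (mem_insert _ _)
      have h' : IsSuppSet T a (F0 ∩ ⋂₀ 𝒞') := ih (fun x hx => hsub (mem_insert_of_mem _ hx))
      have := isSuppSet_inter T h' hG
      have heq : F0 ∩ ⋂₀ insert G 𝒞' = (F0 ∩ ⋂₀ 𝒞') ∩ G := by
        rw [sInter_insert]
        ext x; constructor
        · rintro ⟨h1, h2, h3⟩; exact ⟨⟨h1, h3⟩, h2⟩
        · rintro ⟨⟨h1, h3⟩, h2⟩; exact ⟨h1, h2, h3⟩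
      rwa [heq]
  have hmain : IsSuppSet T a (F0 ∩ ⋂₀ 𝒢) := hind 𝒢 h𝒢fin (fun G hG => hG.2)
  have heq : supp T a = F0 ∩ ⋂₀ 𝒢 := by
    apply Set.Subset.antisymm
    · apply subset_inter (sInter_subset_of_mem hF0)
      exact fun x hx G hG => hx G hG.2
    · intro x hx
      intro F hF
      have : F ∩ F0 ∈ 𝒢 := ⟨inter_subset_right, isSuppSet_inter T hF hF0⟩
      exact (hx.2 _ this).1
  rw [heq]; exact hmain

lemma supp_finite (hTcont : Continuous T) (a : L) : (supp T a).Finite := by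
  obtain ⟨F, hF⟩ := exists_isSuppSet T hTcont a
  exact hF.1.subset (supp_subset_isSuppSet T hF)

lemma supp_spec {a : L} {F0 : Set K} (hF0 : IsSuppSet T a F0)
    {f : Cp K} (hf : ∀ x ∈ supp T a, f.1 x = 0) : phi T a f = 0 :=
  (supp_isSuppSet T hF0).2 f hf

lemma supp_min {a : L} {F0 : Set K} (hF0 : IsSuppSet T a F0) {x : K} (hx : x ∈ supp T a) :
    ∃ g : Cp K, (∀ y ∈ supp T a, y ≠ x → g.1 y = 0) ∧ phi T a g ≠ 0 := by
  by_contra hcon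
  push_neg at hcon
  have : IsSuppSet T a (supp T a \ {x}) := by
    refine ⟨((supp_isSuppSet T hF0).1.diff), ?_⟩
    intro f hf
    exact hcon f (fun y hy hyx => hf y ⟨hy, hyx⟩)
  have := supp_subset_isSuppSet T this
  exact (this hx).2 rfl

/-- lower semicontinuity of the support map -/
lemma supp_lsc (hTcont : Continuous T) {a : L} {x : K} (hx : x ∈ supp T a)
    {U : Set K} (hU : IsOpen U) (hxU : x ∈ U) :
    ∃ O : Set L, IsOpen O ∧ a ∈ O ∧ ∀ b ∈ O, (supp T b ∩ U).Nonempty := by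
  classical
  obtain ⟨F0, hF0⟩ := exists_isSuppSet T hTcont a
  obtain ⟨g, hgvan, hgval⟩ := supp_min T hF0 hx
  have hsfin : (supp T a).Finite := hF0.1.subset (Set.sInter_subset_of_mem hF0)
  -- shrink U to avoid the rest of the support
  set D : Set K := supp T a \ {x} with hD
  have hDclosed : IsClosed D := ((hsfin.diff).isClosed)
  have hxUD : x ∈ U \ D := ⟨hxU, by simp [hD]⟩
  have hUD : IsOpen (U \ D) := hU.sdiff hDclosed
  obtain ⟨h, hh0, hh1, -⟩ := exists_continuous_zero_one_of_isClosed
    hUD.isClosed_compl (isClosed_singleton (x := x))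
    (by
      rw [Set.disjoint_left]
      intro z hz hzx
      rw [Set.mem_singleton_iff] at hzx
      exact hz (hzx ▸ hxUD))
  set f : Cp K := ⟨fun z => h z * g.1 z, (h.continuous.mul g.2)⟩ with hf
  have hfg : phi T a f = phi T a g := by
    have : phi T a (f - g) = 0 := by
      apply supp_spec T hF0
      intro y hy
      show h y * g.1 y - g.1 y = 0
      by_cases hyx : y = x
      · subst hyx
        rw [hh1 rfl]; simp
      · rw [hgvan y hy hyx]; ring
    have h2 := map_sub (phi T a) f g
    rw [this] at h2
    linarith [h2]
  refine ⟨{b : L | (T f).1 b ≠ 0}, ?_, ?_, ?_⟩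
  · exact isOpen_compl_singleton.preimage (T f).2
  · show (T f).1 a ≠ 0
    have : phi T a f = (T f).1 a := rfl
    rw [← this, hfg]; exact hgval
  · intro b hb
    by_contra hempty
    rw [Set.not_nonempty_iff_eq_empty] at hempty
    have hvan : ∀ y ∈ supp T b, f.1 y = 0 := by
      intro y hy
      by_cases hyU : y ∈ U \ D
      · exfalso
        have : y ∈ supp T b ∩ U := ⟨hy, hyU.1⟩
        rw [hempty] at this
        exact this
      · show h y * g.1 y = 0
        rw [hh0 hyU]; simp
    obtain ⟨Fb, hFb⟩ := exists_isSuppSet T hTcont b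
    have : phi T b f = 0 := supp_spec T hFb hvan
    exact hb this

/-- separation from dense range -/
lemma sepT [CompactSpace L] [T2Space L] (hTdense : DenseRange T) {a b : L} (hab : a ≠ b) :
    ∃ f : Cp K, (T f).1 a ≠ (T f).1 b := by
  obtain ⟨h, hh0, hh1, -⟩ := exists_continuous_zero_one_of_isClosed
    (isClosed_singleton (x := a)) (isClosed_singleton (x := b))
    (by simp [Set.disjoint_left, hab])
  set N : Set (Cp L) := {u | u.1 a < 1/2 ∧ 1/2 < u.1 b} with hN
  have hNopen : IsOpen N := by
    have h1 : Continuous fun u : Cp L => u.1 a := (continuous_apply a).comp continuous_subtype_val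
    have h2 : Continuous fun u : Cp L => u.1 b := (continuous_apply b).comp continuous_subtype_val
    exact (isOpen_lt h1 continuous_const).inter (isOpen_lt continuous_const h2)
  have hNne : N.Nonempty := by
    refine ⟨⟨h, h.continuous⟩, ?_, ?_⟩
    · show h a < 1/2
      rw [show h a = 0 from hh0 rfl]; norm_num
    · show 1/2 < h b
      rw [show h b = 1 from hh1 rfl]; norm_num
  obtain ⟨f, hf⟩ := hTdense.exists_mem_open hNopen hNne
  exact ⟨f, by intro heq; obtain ⟨h1, h2⟩ := hf; rw [heq] at h1; linarith⟩

/-- disjoint open sets around points of a finite set, inside a given open set -/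
lemma finite_disjoint_opens {E G : Set K} (hE : E.Finite) (hG : IsOpen G) (hEG : E ⊆ G) :
    ∃ Uf : K → Set K, (∀ x ∈ E, IsOpen (Uf x) ∧ x ∈ Uf x ∧ Uf x ⊆ G) ∧
      (∀ x ∈ E, ∀ y ∈ E, x ≠ y → Disjoint (Uf x) (Uf y)) := by
  classical
  have hsep : ∀ x : K, ∃ VW : Set K × Set K, x ∈ E →
      (IsOpen VW.1 ∧ IsOpen VW.2 ∧ x ∈ VW.1 ∧ (E \ {x}) ⊆ VW.2 ∧ Disjoint VW.1 VW.2) := by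
    intro x
    by_cases hx : x ∈ E
    · obtain ⟨V, W, hVo, hWo, hV, hW, hd⟩ := NormalSpace.normal {x} (E \ {x})
        isClosed_singleton ((hE.diff).isClosed)
        (by rw [Set.disjoint_left]; rintro z rfl hz2; exact hz2.2 rfl)
      exact ⟨(V, W), fun _ => ⟨hVo, hWo, hV rfl, hW, hd⟩⟩
    · exact ⟨(∅, ∅), fun h => absurd h hx⟩
  choose VW hVW using hsep
  set Uf : K → Set K := fun x => G ∩ (VW x).1 ∩ ⋂ y ∈ E \ {x}, (VW y).2 with hUf
  refine ⟨Uf, ?_, ?_⟩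
  · intro x hx
    obtain ⟨hVo, hWo, hxV, hEW, hd⟩ := hVW x hx
    refine ⟨?_, ?_, ?_⟩
    · apply IsOpen.inter (hG.inter hVo)
      apply Set.Finite.isOpen_biInter (hE.diff)
      intro y hy
      exact (hVW y hy.1).2.1
    · refine ⟨⟨hEG hx, hxV⟩, ?_⟩
      apply Set.mem_biInter
      intro y hy
      exact (hVW y hy.1).2.2.2.1 ⟨hx, fun h => hy.2 (by rw [Set.mem_singleton_iff] at h ⊢; exact h.symm)⟩
    · exact fun z hz => hz.1.1
  · intro x hx y hy hxy
    obtain ⟨hVo, hWo, hxV, hEW, hd⟩ := hVW x hx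
    rw [Set.disjoint_left]
    intro z hzx hzy
    have h1 : z ∈ (VW x).1 := hzx.1.2
    have h2 : z ∈ (VW x).2 := by
      have := hzy.2
      exact Set.mem_iInter₂.mp this x ⟨hx, fun h => hxy (by rw [Set.mem_singleton_iff] at h; rw [h])⟩
    exact (Set.disjoint_left.mp hd h1) h2

/-- {b | supp b ⊆ F} is closed, for F closed -/
lemma supp_subset_closed (hTcont : Continuous T) {F : Set K} (hF : IsClosed F) :
    IsClosed {b : L | supp T b ⊆ F} := by
  rw [← isOpen_compl_iff]
  rw [isOpen_iff_forall_mem_open]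
  intro b hb
  simp only [Set.mem_compl_iff, Set.mem_setOf_eq] at hb
  obtain ⟨x, hxs, hxF⟩ := Set.not_subset.mp hb
  obtain ⟨O, hOo, hbO, hO⟩ := supp_lsc T hTcont hxs hF.isOpen_compl hxF
  refine ⟨O, ?_, hOo, hbO⟩
  intro b' hb'
  obtain ⟨y, hy1, hy2⟩ := hO b' hb'
  simp only [Set.mem_compl_iff, Set.mem_setOf_eq]
  exact fun hsub => hy2 (hsub hy1)

/-- {b | (supp b \ F).ncard ≤ j} is closed, for F closed -/
lemma supp_ncard_diff_closed (hTcont : Continuous T) {F : Set K} (hF : IsClosed F) (j : ℕ) :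
    IsClosed {b : L | (supp T b \ F).ncard ≤ j} := by
  classical
  rw [← isOpen_compl_iff, isOpen_iff_forall_mem_open]
  intro b hb
  simp only [Set.mem_compl_iff, Set.mem_setOf_eq, not_le] at hb
  obtain ⟨E, hEsub, hEcard⟩ := Set.exists_subset_card_eq hb
  have hEfin : E.Finite := Set.finite_of_ncard_ne_zero (by omega)
  obtain ⟨Uf, hUf1, hUf2⟩ := finite_disjoint_opens hEfin hF.isOpen_compl
    (fun x hx => (hEsub hx).2)
  have hlsc : ∀ x : K, ∃ O : Set L, x ∈ E →
      (IsOpen O ∧ b ∈ O ∧ ∀ b' ∈ O, (supp T b' ∩ Uf x).Nonempty) := by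
    intro x
    by_cases hx : x ∈ E
    · obtain ⟨O, h1, h2, h3⟩ := supp_lsc T hTcont (hEsub hx).1 (hUf1 x hx).1 (hUf1 x hx).2.1
      exact ⟨O, fun _ => ⟨h1, h2, h3⟩⟩
    · exact ⟨Set.univ, fun h => absurd h hx⟩
  choose O hO using hlsc
  refine ⟨⋂ x ∈ E, O x, ?_, ?_, ?_⟩
  · intro b' hb'
    simp only [Set.mem_compl_iff, Set.mem_setOf_eq, not_le]
    have hpt : ∀ x : K, ∃ p : K, x ∈ E → p ∈ supp T b' ∩ Uf x := by
      intro x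
      by_cases hx : x ∈ E
      · obtain ⟨p, hp⟩ := (hO x hx).2.2 b' (Set.mem_iInter₂.mp hb' x hx)
        exact ⟨p, fun _ => hp⟩
      · exact ⟨x, fun h => absurd h hx⟩
    choose p hp using hpt
    have hmaps : ∀ x ∈ E, p x ∈ supp T b' \ F := by
      intro x hx
      exact ⟨(hp x hx).1, (hUf1 x hx).2.2 (hp x hx).2⟩
    have hinj : Set.InjOn p E := by
      intro x hx y hy hpxy
      by_contra hxy
      have h1 := (hp x hx).2
      rw [hpxy] at h1
      exact Set.disjoint_left.mp (hUf2 x hx y hy hxy) h1 (hp y hy).2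
    have hcard := Set.ncard_le_ncard_of_injOn p hmaps hinj ((supp_finite T hTcont b').diff)
    omega
  · exact Set.Finite.isOpen_biInter hEfin (fun x hx => (hO x hx).1)
  · exact Set.mem_biInter (fun x hx => (hO x hx).2.1)

lemma KS_mono {S S' : Set Γ} (h : S ⊆ S') : KS e S ⊆ KS e S' :=
  fun x hx γ hγ => hx γ (fun hS => hγ (h hS))

lemma Klayer_zero_sub (hfin : ∀ x, (Gsupp e x).Finite) (S : Set Γ) :
    Klayer e 0 ⊆ KS e S := by
  intro x hx γ hγ
  have : Gsupp e x = ∅ := (Set.ncard_eq_zero (hfin x)).mp (Nat.le_zero.mp hx)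
  by_contra hne
  exact absurd this (Set.nonempty_iff_ne_empty.mp ⟨γ, hne⟩)

lemma KS_closed (he : Continuous e) (S : Set Γ) : IsClosed (KS e S) := by
  have : KS e S = ⋂ (γ : Γ) (_ : γ ∉ S), (fun x => e x γ) ⁻¹' {hilbertZero} := by
    ext x
    simp only [Set.mem_iInter, Set.mem_preimage, Set.mem_singleton_iff]
    rfl
  rw [this]
  exact isClosed_iInter fun γ => isClosed_iInter fun _ =>
    IsClosed.preimage ((continuous_apply γ).comp he) isClosed_singleton

lemma Klayer_closed (he : Continuous e) (hfin : ∀ x, (Gsupp e x).Finite) (m : ℕ) :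
    IsClosed (Klayer e m) := by
  rw [← isOpen_compl_iff, isOpen_iff_forall_mem_open]
  intro x hx
  simp only [Set.mem_compl_iff, Klayer, Set.mem_setOf_eq, not_le] at hx
  obtain ⟨E, hEsub, hEcard⟩ := Set.exists_subset_card_eq hx
  have hEfin : E.Finite := Set.finite_of_ncard_ne_zero (by omega)
  refine ⟨⋂ γ ∈ E, {y | e y γ ≠ hilbertZero}, ?_, ?_, ?_⟩
  · intro y hy
    simp only [Set.mem_compl_iff, Klayer, Set.mem_setOf_eq, not_le]
    have hsub : E ⊆ Gsupp e y := by
      intro γ hγ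
      exact Set.mem_iInter₂.mp hy γ hγ
    have := Set.ncard_le_ncard hsub (hfin y)
    omega
  · exact Set.Finite.isOpen_biInter hEfin fun γ _ =>
      IsOpen.preimage ((continuous_apply γ).comp he) isOpen_compl_singleton
  · exact Set.mem_biInter fun γ hγ => hEsub hγ

lemma KS_secondCountable (hemb : Topology.IsEmbedding e) {S : Set Γ} (hS : S.Countable) :
    SecondCountableTopology ↥(KS e S) := by
  classical
  haveI := hS.to_subtype
  set p : ↥(KS e S) → (↥S → ℕ → Set.Icc (0:ℝ) 1) := fun q γs => e q.1 γs.1 with hp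
  set j : (↥S → ℕ → Set.Icc (0:ℝ) 1) → (Γ → ℕ → Set.Icc (0:ℝ) 1) :=
    fun w γ => if h : γ ∈ S then w ⟨γ, h⟩ else hilbertZero with hj
  have hpc : Continuous p := by
    apply continuous_pi
    intro γs
    exact (continuous_apply γs.1).comp (hemb.continuous.comp continuous_subtype_val)
  have hjc : Continuous j := by
    apply continuous_pi
    intro γ
    by_cases h : γ ∈ S
    · simp only [hj, dif_pos h]
      exact continuous_apply _
    · simp only [hj, dif_neg h]
      exact continuous_const
  have hcomp : j ∘ p = (e ∘ Subtype.val) := by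
    funext q
    funext γ
    by_cases h : γ ∈ S
    · simp only [Function.comp_apply, hj, hp, dif_pos h]
    · simp only [Function.comp_apply, hj, hp, dif_neg h]
      exact (q.2 γ h).symm
  have hpemb : Topology.IsEmbedding p := by
    apply Topology.IsEmbedding.of_comp hpc hjc
    rw [hcomp]
    exact hemb.comp Topology.IsEmbedding.subtypeVal
  exact hpemb.secondCountableTopology

/-- a basis element with closure inside a given open set -/
lemma basis_closure {X : Type*} [TopologicalSpace X] [RegularSpace X] {B : Set (Set X)}
    (hB : IsTopologicalBasis B) {p : X} {G : Set X} (hG : IsOpen G) (hpG : p ∈ G) :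
    ∃ b ∈ B, p ∈ b ∧ closure b ⊆ G := by
  obtain ⟨C, hCn, hCc, hCG⟩ := exists_mem_nhds_isClosed_subset (hG.mem_nhds hpG)
  obtain ⟨b, hbB, hpb, hbsub⟩ := hB.mem_nhds_iff.mp (interior_mem_nhds.mpr hCn)
  refine ⟨b, hbB, hpb, ?_⟩
  calc closure b ⊆ closure (interior C) := closure_mono hbsub
    _ ⊆ closure C := closure_mono interior_subset
    _ = C := hCc.closure_eq
    _ ⊆ G := hCG


lemma sep_family [CompactSpace L] [T2Space L] (hTcont : Continuous T) (hTdense : DenseRange T)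
    {Q : Set K} (hQc : IsClosed Q) (hQsc : SecondCountableTopology ↥Q) :
    ∃ (ι : Type u) (_ : Countable ι) (g : ι → Cp K),
      ∀ a b : L, a ≠ b → supp T a ⊆ Q → supp T b ⊆ Q →
        ∃ i, (T (g i)).1 a ≠ (T (g i)).1 b := by
  classical
  haveI : CompactSpace ↥Q := isCompact_iff_compactSpace.mp hQc.isCompact
  set B : Set (Set ↥Q) := countableBasis ↥Q with hB
  have hBbasis : IsTopologicalBasis B := isBasis_countableBasis ↥Q
  haveI := (countable_countableBasis ↥Q).to_subtype
  set vl : ↥Q → K := Subtype.val with hvl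
  have hvlcm : IsClosedMap vl := hQc.isClosedEmbedding_subtypeVal.isClosedMap
  set ι : Type u := ↥B × Finset ↥B with hι
  have hex : ∀ i : ι, ∃ f : Cp K,
      Disjoint (closure (vl '' (⋃ b ∈ i.2, (b.1 : Set ↥Q)))) (closure (vl '' i.1.1)) →
      ((∀ x ∈ closure (vl '' (⋃ b ∈ i.2, (b.1 : Set ↥Q))), f.1 x = 0) ∧
       (∀ x ∈ closure (vl '' i.1.1), f.1 x = 1)) := by
    intro i
    by_cases h : Disjoint (closure (vl '' (⋃ b ∈ i.2, (b.1 : Set ↥Q)))) (closure (vl '' i.1.1))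
    · obtain ⟨f, hf0, hf1, -⟩ := exists_continuous_zero_one_of_isClosed
        isClosed_closure isClosed_closure h
      exact ⟨⟨f, f.continuous⟩, fun _ => ⟨fun x hx => hf0 hx, fun x hx => hf1 hx⟩⟩
    · exact ⟨0, fun hd => absurd hd h⟩
  choose g hg using hex
  refine ⟨ι, inferInstance, g, ?_⟩
  intro a b hab hQa hQb
  set Ψ : Cp K →ₗ[ℝ] ℝ := phi T a - phi T b with hΨ
  have hΨd : ∃ d : Cp K, Ψ d ≠ 0 := by
    obtain ⟨d, hd⟩ := sepT T hTdense hab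
    refine ⟨d, ?_⟩
    show phi T a d - phi T b d ≠ 0
    have ha' : phi T a d = (T d).1 a := rfl
    have hb' : phi T b d = (T d).1 b := rfl
    rw [ha', hb']
    intro h; apply hd; linarith
  set P : Set K := supp T a ∪ supp T b with hP
  have hPfin : P.Finite := (supp_finite T hTcont a).union (supp_finite T hTcont b)
  have hPQ : P ⊆ Q := Set.union_subset hQa hQb
  obtain ⟨Fa, hFa⟩ := exists_isSuppSet T hTcont a
  obtain ⟨Fb, hFb⟩ := exists_isSuppSet T hTcont b
  have key : ∀ f1 f2 : Cp K, (∀ x ∈ P, f1.1 x = f2.1 x) → Ψ f1 = Ψ f2 := by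
    intro f1 f2 hagree
    have hvan : ∀ x ∈ P, (f1 - f2).1 x = 0 := by
      intro x hx
      show f1.1 x - f2.1 x = 0
      rw [hagree x hx]; ring
    have h1 : phi T a (f1 - f2) = 0 :=
      supp_spec T hFa (fun x hx => hvan x (Set.mem_union_left _ hx))
    have h2 : phi T b (f1 - f2) = 0 :=
      supp_spec T hFb (fun x hx => hvan x (Set.mem_union_right _ hx))
    have h3 : Ψ (f1 - f2) = 0 := by
      show phi T a (f1 - f2) - phi T b (f1 - f2) = 0
      rw [h1, h2]; ring
    have h4 := map_sub Ψ f1 f2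
    rw [h3] at h4
    linarith [h4]
  have hufam : ∀ x : K, ∃ u : Cp K, x ∈ P →
      (u.1 x = 1 ∧ ∀ y ∈ P, y ≠ x → u.1 y = 0) := by
    intro x
    obtain ⟨u, hu⟩ := interp P hPfin (fun y => if y = x then 1 else 0)
    refine ⟨u, fun hx => ⟨?_, ?_⟩⟩
    · rw [hu x hx]; simp
    · intro y hy hyx
      rw [hu y hy]; simp [hyx]
  choose u hu using hufam
  have hstar : ∃ x ∈ P, Ψ (u x) ≠ 0 := by
    by_contra hcon
    push_neg at hcon
    obtain ⟨d, hd⟩ := hΨd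
    apply hd
    have heq : Ψ d = Ψ (∑ x ∈ hPfin.toFinset, d.1 x • u x) := by
      apply key
      intro y hy
      have hcoe : ((∑ x ∈ hPfin.toFinset, d.1 x • u x : Cp K) : K → ℝ)
          = ∑ x ∈ hPfin.toFinset, ((d.1 x • u x : Cp K) : K → ℝ) :=
        AddSubmonoidClass.coe_finset_sum _ _
      rw [hcoe]
      rw [Finset.sum_apply]
      rw [Finset.sum_eq_single y]
      · have h1 : ((d.1 y • u y : Cp K) : K → ℝ) y = d.1 y * (u y).1 y := rfl
        rw [h1, (hu y hy).1, mul_one]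
      · intro x hx hxy
        have h1 : ((d.1 x • u x : Cp K) : K → ℝ) y = d.1 x * (u x).1 y := rfl
        rw [h1, (hu x (hPfin.mem_toFinset.mp hx)).2 y hy (Ne.symm hxy), mul_zero]
      · intro hy'
        exact absurd (hPfin.mem_toFinset.mpr hy) hy'
    rw [heq, map_sum]
    apply Finset.sum_eq_zero
    intro x hx
    rw [map_smul]
    rw [hcon x (hPfin.mem_toFinset.mp hx)]
    simp
  obtain ⟨xstar, hxP, hxΨ⟩ := hstar
  set xq : ↥Q := ⟨xstar, hPQ hxP⟩ with hxq
  set Pd : Set K := P \ {xstar} with hPd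
  have hPdfin : Pd.Finite := hPfin.diff
  set Pd' : Set ↥Q := vl ⁻¹' Pd with hPd'
  have hPd'fin : Pd'.Finite :=
    hPdfin.preimage (Set.injOn_of_injective Subtype.val_injective)
  have hdisj0 : Disjoint ({xq} : Set ↥Q) Pd' := by
    rw [Set.disjoint_left]
    rintro q rfl hq
    exact hq.2 rfl
  obtain ⟨G, H, hGo, hHo, hxG, hPdH, hGH⟩ :=
    NormalSpace.normal {xq} Pd' isClosed_singleton hPd'fin.isClosed hdisj0
  obtain ⟨bs, hbsB, hxbs, hclbs⟩ := basis_closure hBbasis hGo (hxG rfl)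
  have hbp : ∀ q : ↥Q, ∃ bq : ↥B, q ∈ Pd' →
      (q ∈ (bq.1 : Set ↥Q) ∧ closure (bq.1 : Set ↥Q) ⊆ H) := by
    intro q
    by_cases hq : q ∈ Pd'
    · obtain ⟨bq, hbqB, hqbq, hclbq⟩ := basis_closure hBbasis hHo (hPdH hq)
      exact ⟨⟨bq, hbqB⟩, fun _ => ⟨hqbq, hclbq⟩⟩
    · exact ⟨⟨bs, hbsB⟩, fun h => absurd h hq⟩
  choose bb hbb using hbp
  set M : Finset ↥B := Finset.image bb hPd'fin.toFinset with hM
  set i : ι := (⟨bs, hbsB⟩, M) with hi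
  have hcond : Disjoint (closure (vl '' (⋃ b ∈ i.2, (b.1 : Set ↥Q))))
      (closure (vl '' i.1.1)) := by
    have hs1 : closure (vl '' (bs : Set ↥Q)) ⊆ vl '' G :=
      (hvlcm.closure_image_subset _).trans (Set.image_mono hclbs)
    have hUH : closure (⋃ b ∈ M, (b.1 : Set ↥Q)) ⊆ H := by
      have hCclosed : IsClosed (⋃ b ∈ M, closure (b.1 : Set ↥Q)) :=
        Set.Finite.isClosed_biUnion M.finite_toSet (fun b _ => isClosed_closure)
      have hsub : (⋃ b ∈ M, (b.1 : Set ↥Q)) ⊆ ⋃ b ∈ M, closure (b.1 : Set ↥Q) :=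
        Set.iUnion₂_mono fun b _ => subset_closure
      refine (closure_minimal hsub hCclosed).trans ?_
      apply Set.iUnion₂_subset
      intro b hbM
      obtain ⟨q, hqF, hqb⟩ := Finset.mem_image.mp hbM
      have hq : q ∈ Pd' := hPd'fin.mem_toFinset.mp hqF
      rw [← hqb]
      exact (hbb q hq).2
    have hs2 : closure (vl '' (⋃ b ∈ M, (b.1 : Set ↥Q))) ⊆ vl '' H := by
      refine (hvlcm.closure_image_subset _).trans ?_
      exact (Set.image_mono hUH)
    have hdisjGH : Disjoint (vl '' H) (vl '' G) := by
      rw [Set.disjoint_left]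
      rintro z ⟨q1, hq1, rfl⟩ ⟨q2, hq2, heq⟩
      have : q2 = q1 := Subtype.val_injective heq
      rw [this] at hq2
      exact Set.disjoint_left.mp hGH hq2 hq1
    exact Set.disjoint_of_subset hs2 hs1 hdisjGH
  obtain ⟨h0, h1⟩ := hg i hcond
  have hfx : (g i).1 xstar = 1 := by
    apply h1
    exact subset_closure ⟨xq, hxbs, rfl⟩
  have hfy : ∀ y ∈ Pd, (g i).1 y = 0 := by
    intro y hy
    apply h0
    apply subset_closure
    have hyq : (⟨y, hPQ hy.1⟩ : ↥Q) ∈ Pd' := hy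
    refine ⟨⟨y, hPQ hy.1⟩, ?_, rfl⟩
    apply Set.mem_biUnion (Finset.mem_image_of_mem bb (hPd'fin.mem_toFinset.mpr hyq))
    exact (hbb ⟨y, hPQ hy.1⟩ hyq).1
  have hΨg : Ψ (g i) = Ψ (u xstar) := by
    apply key
    intro y hy
    by_cases hyx : y = xstar
    · subst hyx
      rw [hfx, (hu y hy).1]
    · rw [hfy y ⟨hy, hyx⟩, (hu xstar hxP).2 y hy hyx]
  refine ⟨i, ?_⟩
  have : Ψ (g i) ≠ 0 := by rw [hΨg]; exact hxΨ
  intro h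
  apply this
  show phi T a (g i) - phi T b (g i) = 0
  have ha' : phi T a (g i) = (T (g i)).1 a := rfl
  have hb' : phi T b (g i) = (T (g i)).1 b := rfl
  rw [ha', hb', h]; ring

lemma mainInd (hTcont : Continuous T) (he : Continuous e)
    (hfin : ∀ x, (Gsupp e x).Finite) :
    ∀ (m j : ℕ) (Sstar : Set Γ), Sstar.Countable →
    ∀ A : Set L, IsClosed A → A.Nonempty →
    (∀ a ∈ A, supp T a ⊆ Klayer e m ∪ KS e Sstar) →
    (∀ a ∈ A, ((supp T a) \ KS e Sstar).ncard ≤ j) →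
    ∃ V : Set L, IsOpen V ∧ (V ∩ A).Nonempty ∧
      ∃ S : Set Γ, S.Countable ∧ ∀ a ∈ V ∩ A, supp T a ⊆ KS e S := by
  intro m
  induction m with
  | zero =>
    intro j Sstar hSc A _ hAne h1 _
    refine ⟨Set.univ, isOpen_univ, by simpa using hAne, Sstar, hSc, ?_⟩
    intro a ha
    exact (h1 a ha.2).trans (Set.union_subset (Klayer_zero_sub e hfin Sstar) subset_rfl)
  | succ m ihm =>
    intro j
    induction j with
    | zero =>
      intro Sstar hSc A _ hAne h1 h2
      refine ⟨Set.univ, isOpen_univ, by simpa using hAne, Sstar, hSc, ?_⟩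
      intro a ha
      have hfs : ((supp T a) \ KS e Sstar).Finite := (supp_finite T hTcont a).diff
      have : (supp T a) \ KS e Sstar = ∅ :=
        (Set.ncard_eq_zero hfs).mp (Nat.le_zero.mp (h2 a ha.2))
      exact Set.diff_eq_empty.mp this
    | succ j ihj =>
      intro Sstar hSc A hAc hAne h1 h2
      by_cases hC : ∀ a ∈ A, supp T a ⊆ Klayer e m ∪ KS e Sstar
      · exact ihm (j+1) Sstar hSc A hAc hAne hC h2
      · push_neg at hC
        obtain ⟨a0, ha0A, hnot⟩ := hC
        obtain ⟨x0, hx0s, hx0n⟩ := Set.not_subset.mp hnot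
        have hx0top : x0 ∈ Klayer e (m+1) := by
          rcases h1 a0 ha0A hx0s with h | h
          · exact h
          · exact absurd (Set.mem_union_right _ h) hx0n
        have hx0nm : x0 ∉ Klayer e m := fun h => hx0n (Set.mem_union_left _ h)
        have hx0nS : x0 ∉ KS e Sstar := fun h => hx0n (Set.mem_union_right _ h)
        set S0 : Set Γ := Gsupp e x0 with hS0
        have hS0fin : S0.Finite := hfin x0
        have hS0card : S0.ncard = m + 1 := by
          have h1' : S0.ncard ≤ m + 1 := hx0top
          have h2' : ¬ S0.ncard ≤ m := hx0nm
          omega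
        obtain ⟨γstar, hγS0, hγnS⟩ : ∃ γ, γ ∈ S0 ∧ γ ∉ Sstar := by
          by_contra hcon
          push_neg at hcon
          exact hx0nS (fun γ hγ => by
            by_contra hne
            exact hγ (hcon γ hne))
        set Uhat : Set K := ⋂ γ ∈ S0, {y | e y γ ≠ hilbertZero} with hUhat
        have hUo : IsOpen Uhat :=
          Set.Finite.isOpen_biInter hS0fin fun γ _ =>
            IsOpen.preimage ((continuous_apply γ).comp he) isOpen_compl_singleton
        have hx0U : x0 ∈ Uhat := Set.mem_biInter fun γ hγ => hγ
        obtain ⟨O, hOo, ha0O, hO⟩ := supp_lsc T hTcont hx0s hUo hx0U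
        set Sstar2 : Set Γ := Sstar ∪ S0 with hSstar2
        have hSc2 : Sstar2.Countable := hSc.union hS0fin.countable
        set A' : Set L := closure (O ∩ A) with hA'
        have hA'c : IsClosed A' := isClosed_closure
        have hA'A : A' ⊆ A := closure_minimal Set.inter_subset_right hAc
        have hA'ne : A'.Nonempty := ⟨a0, subset_closure ⟨ha0O, ha0A⟩⟩
        have h1' : ∀ a ∈ A', supp T a ⊆ Klayer e (m+1) ∪ KS e Sstar2 := by
          intro a ha
          exact (h1 a (hA'A ha)).trans
            (Set.union_subset_union subset_rfl (KS_mono e Set.subset_union_left))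
        have h2' : ∀ a ∈ A', ((supp T a) \ KS e Sstar2).ncard ≤ j := by
          have hkey : O ∩ A ⊆ {b : L | ((supp T b) \ KS e Sstar2).ncard ≤ j} := by
            rintro b ⟨hbO, hbA⟩
            obtain ⟨y, hys, hyU⟩ := hO b hbO
            have hynS : y ∉ KS e Sstar := by
              intro hy
              have h0 : e y γstar = hilbertZero := hy γstar hγnS
              have hne : e y γstar ≠ hilbertZero := Set.mem_iInter₂.mp hyU γstar hγS0
              exact hne h0
            have hyKl : y ∈ Klayer e (m+1) := by
              rcases h1 b hbA hys with h | h
              · exact h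
              · exact absurd h hynS
            have hyS2 : y ∈ KS e Sstar2 := by
              have hsub : S0 ⊆ Gsupp e y := fun γ hγ => Set.mem_iInter₂.mp hyU γ hγ
              have heq : S0 = Gsupp e y :=
                Set.eq_of_subset_of_ncard_le hsub (by rw [hS0card]; exact hyKl) (hfin y)
              intro γ hγ
              by_contra hne
              exact hγ (Set.mem_union_right _ (heq ▸ hne))
            have hsub2 : (supp T b) \ KS e Sstar2 ⊆ ((supp T b) \ KS e Sstar) \ {y} := by
              rintro z ⟨hz1, hz2⟩
              refine ⟨⟨hz1, fun hz => hz2 (KS_mono e Set.subset_union_left hz)⟩, ?_⟩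
              rw [Set.mem_singleton_iff]
              rintro rfl
              exact hz2 hyS2
            have hfinb : ((supp T b) \ KS e Sstar).Finite := (supp_finite T hTcont b).diff
            have hc1 := Set.ncard_le_ncard hsub2 (hfinb.diff)
            have hymem : y ∈ (supp T b) \ KS e Sstar := ⟨hys, hynS⟩
            have hc2 := Set.ncard_diff_singleton_of_mem hymem
            have hc3 := h2 b hbA
            simp only [Set.mem_setOf_eq]
            omega
          exact fun a ha => closure_minimal hkey
            (supp_ncard_diff_closed T hTcont (KS_closed e he Sstar2) j) ha
        obtain ⟨V, hVo, hVne, S, hScS, hV⟩ := ihj Sstar2 hSc2 A' hA'c hA'ne h1' h2'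
        obtain ⟨z, hzV, hzA'⟩ := hVne
        obtain ⟨w, hwV, hwOA⟩ := _root_.mem_closure_iff.mp hzA' V hVo hzV
        refine ⟨V ∩ O, hVo.inter hOo, ⟨w, ⟨hwV, hwOA.1⟩, hwOA.2⟩, S, hScS, ?_⟩
        rintro a ⟨⟨haV, haO⟩, haA⟩
        exact hV a ⟨haV, subset_closure ⟨haO, haA⟩⟩


end NYProof

/-- Let `K` be NY compact and `L` compact Hausdorff. If there is a continuous linear map
`T : C_p(K) → C_p(L)` with dense image, then every nonempty subspace of `L` contains a
nonempty relatively open subspace of countable weight. -/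
theorem stmt6 (K L : Type u) [TopologicalSpace K] [TopologicalSpace L]
    [CompactSpace L] [T2Space L]
    (hK : IsNYCompact K)
    (T : Cp K →ₗ[ℝ] Cp L) (hTcont : Continuous T) (hTdense : DenseRange T) :
    HasOpenSecondCountablePieces L := by
  classical
  obtain ⟨hKcomp, hKt2, Γ, e, hemb, hfin0⟩ := hK
  haveI := hKcomp
  haveI := hKt2
  have he : Continuous e := hemb.continuous
  have hfin : ∀ x, (Gsupp e x).Finite := hfin0
  intro A0 hA0ne
  set A : Set L := closure A0 with hA
  have hAc : IsClosed A := isClosed_closure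
  have hAne : A.Nonempty := hA0ne.closure
  haveI : CompactSpace ↥A := isCompact_iff_compactSpace.mp hAc.isCompact
  haveI : Nonempty ↥A := hAne.to_subtype
  -- Baire category argument
  set D : ℕ × ℕ → Set L := fun mj =>
    {b | supp T b ⊆ Klayer e mj.1} ∩ {b | (supp T b \ KS e (∅ : Set Γ)).ncard ≤ mj.2} with hD
  have hDclosed : ∀ mj, IsClosed (D mj) := fun mj =>
    (supp_subset_closed T hTcont (Klayer_closed e he hfin mj.1)).inter
      (supp_ncard_diff_closed T hTcont (KS_closed e he ∅) mj.2)
  have hcover : ∀ b : L, ∃ mj : ℕ × ℕ, b ∈ D mj := by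
    intro b
    have hsfin := supp_finite T hTcont b
    have himfin : ((fun x => (Gsupp e x).ncard) '' supp T b).Finite := hsfin.image _
    obtain ⟨m, hm⟩ := himfin.bddAbove
    refine ⟨(m, (supp T b).ncard), ?_, ?_⟩
    · intro x hx
      exact hm ⟨x, hx, rfl⟩
    · simp only [Set.mem_setOf_eq]
      exact Set.ncard_le_ncard Set.diff_subset hsfin
  have huniv : ⋃ mj, (Subtype.val ⁻¹' D mj : Set ↥A) = Set.univ := by
    ext p
    simp only [Set.mem_iUnion, Set.mem_preimage, Set.mem_univ, iff_true]
    exact hcover p.1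
  obtain ⟨mj, hint⟩ := nonempty_interior_of_iUnion_of_closed
    (fun mj => (hDclosed mj).preimage continuous_subtype_val) huniv
  obtain ⟨p, hp⟩ := hint
  obtain ⟨G, hGo, hGeq⟩ := isOpen_induced_iff.mp (isOpen_interior
    (s := (Subtype.val ⁻¹' D mj : Set ↥A)))
  have hpG : p.1 ∈ G := by
    have : p ∈ Subtype.val ⁻¹' G := by rw [hGeq]; exact hp
    exact this
  have hGAD : G ∩ A ⊆ D mj := by
    rintro a ⟨haG, haA⟩
    have : (⟨a, haA⟩ : ↥A) ∈ Subtype.val ⁻¹' G := haG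
    rw [hGeq] at this
    have h2 : (⟨a, haA⟩ : ↥A) ∈ (Subtype.val ⁻¹' D mj : Set ↥A) := interior_subset this
    exact h2
  set A1 : Set L := closure (G ∩ A) with hA1
  have hA1c : IsClosed A1 := isClosed_closure
  have hA1A : A1 ⊆ A := closure_minimal Set.inter_subset_right hAc
  have hA1ne : A1.Nonempty := ⟨p.1, subset_closure ⟨hpG, p.2⟩⟩
  have hyp1 : ∀ a ∈ A1, supp T a ⊆ Klayer e mj.1 ∪ KS e (∅ : Set Γ) := by
    have hsub : A1 ⊆ {b : L | supp T b ⊆ Klayer e mj.1} :=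
      closure_minimal (fun a ha => (hGAD ha).1) (supp_subset_closed T hTcont
        (Klayer_closed e he hfin mj.1))
    exact fun a ha => (hsub ha).trans Set.subset_union_left
  have hyp2 : ∀ a ∈ A1, ((supp T a) \ KS e (∅ : Set Γ)).ncard ≤ mj.2 :=
    fun a ha => closure_minimal (fun a' ha' => (hGAD ha').2)
      (supp_ncard_diff_closed T hTcont (KS_closed e he ∅) mj.2) ha
  obtain ⟨V, hVo, hVne, S, hSc, hV⟩ := mainInd T e hTcont he hfin mj.1 mj.2 ∅
    Set.countable_empty A1 hA1c hA1ne hyp1 hyp2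
  obtain ⟨z, hzV, hzA1⟩ := hVne
  obtain ⟨w, hwV, hwGA⟩ := _root_.mem_closure_iff.mp hzA1 V hVo hzV
  -- shrink around w
  obtain ⟨C, hCn, hCc, hCsub⟩ := exists_mem_nhds_isClosed_subset
    ((hVo.inter hGo).mem_nhds ⟨hwV, hwGA.1⟩)
  set V1 : Set L := interior C with hV1
  have hV1o : IsOpen V1 := isOpen_interior
  have hwV1 : w ∈ V1 := mem_interior_iff_mem_nhds.mpr hCn
  have hclV1 : closure V1 ⊆ V ∩ G := by
    refine Set.Subset.trans ?_ hCsub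
    rw [← hCc.closure_eq]
    exact closure_mono interior_subset
  set Z : Set L := closure V1 ∩ A with hZ
  have hZc : IsClosed Z := isClosed_closure.inter hAc
  have hZsupp : ∀ z' ∈ Z, supp T z' ⊆ KS e S := by
    rintro z' ⟨hz'V1, hz'A⟩
    have h1 : z' ∈ V ∩ G := hclV1 hz'V1
    exact hV z' ⟨h1.1, subset_closure ⟨h1.2, hz'A⟩⟩
  obtain ⟨ι, hιc, g, hsep⟩ := sep_family T hTcont hTdense (KS_closed e he S)
    (KS_secondCountable e hemb hSc)
  haveI : Countable ι := hιc
  haveI : CompactSpace ↥Z := isCompact_iff_compactSpace.mp hZc.isCompact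
  set Φ : ↥Z → (ι → ℝ) := fun z' i => (T (g i)).1 z'.1 with hΦ
  have hΦcont : Continuous Φ :=
    continuous_pi fun i => ((T (g i)).2 : Continuous (T (g i)).1).comp continuous_subtype_val
  have hΦinj : Function.Injective Φ := by
    intro z1 z2 hz
    by_contra hne
    have hne' : z1.1 ≠ z2.1 := fun h => hne (Subtype.ext h)
    obtain ⟨i, hi⟩ := hsep z1.1 z2.1 hne' (hZsupp _ z1.2) (hZsupp _ z2.2)
    exact hi (congrFun hz i)
  haveI : SecondCountableTopology ↥Z :=
    (hΦcont.isClosedEmbedding hΦinj).isEmbedding.secondCountableTopology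
  -- transfer to the subspace piece
  set U : Set ↥A0 := (fun x : ↥A0 => x.1) ⁻¹' V1 with hU
  have hUo : IsOpen U := hV1o.preimage continuous_subtype_val
  have hUne : U.Nonempty := by
    have hwA' : w ∈ closure A0 := hwGA.2
    obtain ⟨w', hw'V1, hw'A0⟩ := _root_.mem_closure_iff.mp hwA' V1 hV1o hwV1
    exact ⟨⟨w', hw'A0⟩, hw'V1⟩
  have hscU : SecondCountableTopology ↥U := by
    set θ : ↥U → ↥Z := fun x => ⟨x.1.1, ⟨subset_closure x.2, subset_closure x.1.2⟩⟩ with hθ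
    have hθcont : Continuous θ :=
      (continuous_subtype_val.comp continuous_subtype_val).subtype_mk _
    have hθemb : Topology.IsEmbedding θ := by
      apply Topology.IsEmbedding.of_comp hθcont continuous_subtype_val
      have heq : (Subtype.val : ↥Z → L) ∘ θ
          = (Subtype.val : ↥A0 → L) ∘ (Subtype.val : ↥U → ↥A0) := rfl
      rw [heq]
      exact Topology.IsEmbedding.subtypeVal.comp Topology.IsEmbedding.subtypeVal
    exact hθemb.secondCountableTopology
  exact ⟨U, hUne, hUo, hscU⟩
end

section
/- Let f : X → Y be a continuous map from a metacompact space X onto a topological space Y such that the image under f of every closed subset of X is an F_σ set in Y (a countable union of closed sets). Then for every open cover 𝒰 of Y which is a union of countably many point-finite families of open sets, there exists a point-finite open refinement 𝒱 of 𝒰 that covers Y. -/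
universe u

/-- A family of subsets of a space is point-finite if every point belongs to only
finitely many of its members. -/
def PointFinite {X : Type*} (𝒱 : Set (Set X)) : Prop :=
  ∀ x : X, {v ∈ 𝒱 | x ∈ v}.Finite

/-- A space is metacompact if every open cover has a point-finite open refinement
that covers the space. -/
def IsMetacompact (X : Type*) [TopologicalSpace X] : Prop :=
  ∀ 𝒰 : Set (Set X), (∀ u ∈ 𝒰, IsOpen u) → ⋃₀ 𝒰 = Set.univ →
    ∃ 𝒱 : Set (Set X), (∀ v ∈ 𝒱, IsOpen v) ∧ ⋃₀ 𝒱 = Set.univ ∧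
      (∀ v ∈ 𝒱, ∃ u ∈ 𝒰, v ⊆ u) ∧ PointFinite 𝒱

/-- Let `f : X → Y` be a continuous map from a metacompact space `X` onto `Y` such that
the image of every closed subset of `X` is an `F_σ` set in `Y`. Then every open cover of
`Y` which is a union of countably many point-finite families of open sets has a
point-finite open refinement covering `Y`. -/
theorem stmt7 (X Y : Type u) [TopologicalSpace X] [TopologicalSpace Y]
    (hX : IsMetacompact X)
    (f : X → Y) (hf : Continuous f) (hsurj : Function.Surjective f)
    (hFsigma : ∀ F : Set X, IsClosed F →
      ∃ C : ℕ → Set Y, (∀ n, IsClosed (C n)) ∧ f '' F = ⋃ n, C n)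
    (𝒰 : ℕ → Set (Set Y))
    (hopen : ∀ n, ∀ u ∈ 𝒰 n, IsOpen u)
    (hpf : ∀ n, PointFinite (𝒰 n))
    (hcover : ⋃₀ (⋃ n, 𝒰 n) = Set.univ) :
    ∃ 𝒱 : Set (Set Y), (∀ v ∈ 𝒱, IsOpen v) ∧ ⋃₀ 𝒱 = Set.univ ∧
      (∀ v ∈ 𝒱, ∃ u ∈ ⋃ n, 𝒰 n, v ⊆ u) ∧ PointFinite 𝒱 := by
  classical
  -- The increasing open cover A of Y
  set A : ℕ → Set Y := fun n => ⋃ m ∈ Finset.range (n + 1), ⋃₀ 𝒰 m with hA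
  have hAopen : ∀ n, IsOpen (A n) :=
    fun n => isOpen_biUnion fun m _ => isOpen_sUnion (hopen m)
  have hAmono : Monotone A := by
    intro a b hab y hy
    obtain ⟨m, hm, hym⟩ := Set.mem_iUnion₂.mp hy
    exact Set.mem_iUnion₂.mpr ⟨m, by simp only [Finset.mem_range] at *; omega, hym⟩
  have hAcover : ∀ y : Y, ∃ n, y ∈ A n := by
    intro y
    have : y ∈ ⋃₀ ⋃ n, 𝒰 n := hcover ▸ Set.mem_univ y
    obtain ⟨u, hu, hyu⟩ := this
    obtain ⟨m, hm⟩ := Set.mem_iUnion.mp hu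
    exact ⟨m, Set.mem_biUnion (Finset.self_mem_range_succ m) ⟨u, hm, hyu⟩⟩
  -- Pull back to X : decreasing closed sets with empty intersection
  set K : ℕ → Set X := fun n => (f ⁻¹' (A n))ᶜ with hK
  have hKclosed : ∀ n, IsClosed (K n) :=
    fun n => ((hAopen n).preimage hf).isClosed_compl
  have hKanti : ∀ {a b : ℕ}, a ≤ b → K b ⊆ K a :=
    fun {a b} hab => Set.compl_subset_compl.mpr (Set.preimage_mono (hAmono hab))
  -- Metacompactness applied to the cover {(K n)ᶜ}
  obtain ⟨𝒲, h𝒲open, h𝒲cover, h𝒲ref, h𝒲pf⟩ :=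
    hX (Set.range fun n => (K n)ᶜ)
      (by rintro u ⟨n, rfl⟩; exact (hKclosed n).isOpen_compl)
      (by
        ext x
        simp only [Set.mem_univ, iff_true]
        obtain ⟨n, hn⟩ := hAcover (f x)
        exact ⟨(K n)ᶜ, ⟨n, rfl⟩, by simp [hK, hn]⟩)
  -- W' n : open set containing K n, with empty intersection
  set W' : ℕ → Set X := fun n => ⋃₀ {w ∈ 𝒲 | (w ∩ K n).Nonempty} with hW'
  have hW'open : ∀ n, IsOpen (W' n) :=
    fun n => isOpen_sUnion fun w hw => h𝒲open w hw.1
  have hKW' : ∀ n, K n ⊆ W' n := by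
    intro n x hx
    have : x ∈ ⋃₀ 𝒲 := h𝒲cover ▸ Set.mem_univ x
    obtain ⟨w, hw, hxw⟩ := this
    exact ⟨w, ⟨hw, ⟨x, hxw, hx⟩⟩, hxw⟩
  -- a choice of refinement index for each member of 𝒲
  have hg' : ∀ w : Set X, ∃ n, w ∈ 𝒲 → w ⊆ (K n)ᶜ := by
    intro w
    by_cases hw : w ∈ 𝒲
    · obtain ⟨u, ⟨n, rfl⟩, hwu⟩ := h𝒲ref w hw
      exact ⟨n, fun _ => hwu⟩
    · exact ⟨0, fun h => absurd h hw⟩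
  choose g hg using hg'
  have hW'empty : ∀ x : X, ∃ n, x ∉ W' n := by
    intro x
    obtain ⟨S, hS⟩ := (h𝒲pf x).exists_finset_coe
    refine ⟨S.sup g, ?_⟩
    rintro ⟨w, ⟨hw𝒲, z, hzw, hzK⟩, hxw⟩
    have hwS : w ∈ S := by
      rw [← Finset.mem_coe, hS]; exact ⟨hw𝒲, hxw⟩
    have : z ∈ (K (g w))ᶜ := hg w hw𝒲 hzw
    exact this (hKanti (Finset.le_sup hwS) hzK)
  -- Push to Y via the F_σ hypothesis
  have hW'cclosed : ∀ n, IsClosed (W' n)ᶜ := fun n => (hW'open n).isClosed_compl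
  choose C hCclosed hCeq using fun n => hFsigma (W' n)ᶜ (hW'cclosed n)
  set O : ℕ → ℕ → Set Y := fun n k => (C n k)ᶜ with hO
  have hOopen : ∀ n k, IsOpen (O n k) := fun n k => (hCclosed n k).isOpen_compl
  -- each C n k is contained in A n
  have hCA : ∀ n k, C n k ⊆ A n := by
    intro n k y hy
    have : y ∈ f '' (W' n)ᶜ := (hCeq n) ▸ Set.mem_iUnion.mpr ⟨k, hy⟩
    obtain ⟨x, hx, rfl⟩ := this
    have hxK : x ∉ K n := fun h => hx (hKW' n h)
    simpa [hK] using hxK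
  have hOempty : ∀ y : Y, ∃ n k, y ∉ O n k := by
    intro y
    obtain ⟨x, rfl⟩ := hsurj y
    obtain ⟨n, hn⟩ := hW'empty x
    have : f x ∈ f '' (W' n)ᶜ := ⟨x, hn, rfl⟩
    rw [hCeq n] at this
    obtain ⟨k, hk⟩ := Set.mem_iUnion.mp this
    exact ⟨n, k, by simp [hO, hk]⟩
  -- decreasing open sets O' with (A m)ᶜ ⊆ O' m and empty intersection
  set O' : ℕ → Set Y := fun m =>
    ⋂ n ∈ Finset.range (m + 1), ⋂ k ∈ Finset.range (m + 1), O n k with hO'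
  have hO'open : ∀ m, IsOpen (O' m) :=
    fun m => isOpen_biInter_finset fun n _ => isOpen_biInter_finset fun k _ => hOopen n k
  have hO'anti : ∀ {a b : ℕ}, a ≤ b → O' b ⊆ O' a := by
    intro a b hab y hy
    simp only [hO', Set.mem_iInter, Finset.mem_range] at *
    intro n hn k hk
    exact hy n (by omega) k (by omega)
  have hAO' : ∀ m, (A m)ᶜ ⊆ O' m := by
    intro m y hy
    simp only [hO', Set.mem_iInter, Finset.mem_range]
    intro n hn k _
    intro hyC
    exact hy (hAmono (by omega : n ≤ m) (hCA n k hyC))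
  have hO'empty : ∀ y : Y, ∃ m, y ∉ O' m := by
    intro y
    obtain ⟨n, k, hnk⟩ := hOempty y
    refine ⟨max n k, fun hy => ?_⟩
    simp only [hO', Set.mem_iInter, Finset.mem_range] at hy
    exact hnk (hy n (by omega) k (by omega))
  -- the point-finite refinement V of A
  set V : ℕ → Set Y := fun n => match n with
    | 0 => A 0
    | m + 1 => A (m + 1) ∩ O' m
    with hV
  have hVopen : ∀ n, IsOpen (V n) := by
    intro n
    match n with
    | 0 => exact hAopen 0
    | m + 1 => exact (hAopen (m + 1)).inter (hO'open m)
  have hVA : ∀ n, V n ⊆ A n := by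
    intro n
    match n with
    | 0 => exact le_refl _
    | m + 1 => exact Set.inter_subset_left
  have hVcover : ∀ y : Y, ∃ n, y ∈ V n := by
    intro y
    have hex := hO'empty y
    obtain ⟨N, hNspec, hNmin⟩ : ∃ N, y ∉ O' N ∧ ∀ k < N, y ∈ O' k :=
      ⟨Nat.find hex, Nat.find_spec hex, fun k hk => by simpa using Nat.find_min hex hk⟩
    match N, hNspec, hNmin with
    | 0, hNspec, _ =>
        exact ⟨0, by by_contra h; exact hNspec (hAO' 0 h)⟩
    | m + 1, hNspec, hNmin =>
        exact ⟨m + 1, (by by_contra h; exact hNspec (hAO' (m + 1) h)),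
          hNmin m (by omega)⟩
  have hVpf : ∀ y : Y, {n | y ∈ V n}.Finite := by
    intro y
    obtain ⟨m, hm⟩ := hO'empty y
    apply Set.Finite.subset (Set.finite_Iic (m + 1))
    intro n hn
    simp only [Set.mem_setOf_eq] at hn
    simp only [Set.mem_Iic]
    by_contra h
    push_neg at h
    match n, h with
    | k + 1, h =>
        exact hm (hO'anti (by omega : m ≤ k) hn.2)
  -- The final family
  refine ⟨{v | ∃ n m u, m ≤ n ∧ u ∈ 𝒰 m ∧ v = V n ∩ u}, ?_, ?_, ?_, ?_⟩
  · rintro v ⟨n, m, u, hmn, hu, rfl⟩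
    exact (hVopen n).inter (hopen m u hu)
  · ext y
    simp only [Set.mem_univ, iff_true]
    obtain ⟨n, hn⟩ := hVcover y
    have : y ∈ A n := hVA n hn
    obtain ⟨m, hm, u, hu, hyu⟩ := Set.mem_iUnion₂.mp this
    exact ⟨V n ∩ u, ⟨n, m, u, Nat.lt_succ_iff.mp (Finset.mem_range.mp hm), hu, rfl⟩,
      hn, hyu⟩
  · rintro v ⟨n, m, u, hmn, hu, rfl⟩
    exact ⟨u, Set.mem_iUnion.mpr ⟨m, hu⟩, Set.inter_subset_right⟩
  · intro y
    set S : Set ℕ := {n | y ∈ V n} with hS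
    have hSfin : S.Finite := hVpf y
    set T : Set (Set Y) := ⋃ n ∈ S, ⋃ m ∈ Finset.range (n + 1), {u ∈ 𝒰 m | y ∈ u}
      with hT
    have hTfin : T.Finite :=
      hSfin.biUnion fun n _ =>
        (Finset.range (n + 1)).finite_toSet.biUnion fun m _ => hpf m y
    apply Set.Finite.subset ((hSfin.prod hTfin).image fun p => V p.1 ∩ p.2)
    rintro v ⟨⟨n, m, u, hmn, hu, rfl⟩, hyv⟩
    refine ⟨(n, u), ⟨hyv.1, ?_⟩, rfl⟩
    exact Set.mem_biUnion hyv.1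
      (Set.mem_biUnion (Finset.mem_range.mpr (by omega)) ⟨hu, hyv.2⟩)
end

section
/- Every σ-metacompact space which is a union of countably many closed metacompact subspaces is metacompact. -/
universe u

/-- A space is σ-metacompact if every open cover has an open refinement covering the
space which is a union of countably many point-finite families. -/
def IsSigmaMetacompact (X : Type*) [TopologicalSpace X] : Prop :=
  ∀ 𝒰 : Set (Set X), (∀ u ∈ 𝒰, IsOpen u) → ⋃₀ 𝒰 = Set.univ →
    ∃ 𝒱 : ℕ → Set (Set X), (∀ n, ∀ v ∈ 𝒱 n, IsOpen v) ∧ ⋃₀ (⋃ n, 𝒱 n) = Set.univ ∧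
      (∀ n, ∀ v ∈ 𝒱 n, ∃ u ∈ 𝒰, v ⊆ u) ∧ ∀ n, PointFinite (𝒱 n)

/-- Every σ-metacompact space which is a union of countably many closed metacompact
subspaces is metacompact. -/
theorem stmt8 (X : Type u) [TopologicalSpace X]
    (hX : IsSigmaMetacompact X)
    (Xn : ℕ → Set X) (hclosed : ∀ n, IsClosed (Xn n))
    (hmeta : ∀ n, IsMetacompact ↥(Xn n))
    (hcover : ⋃ n, Xn n = Set.univ) :
    IsMetacompact X := by
  intro 𝒰 hUo hUcov
  obtain ⟨𝒱, hVo, hVcov, hVref, hVpf⟩ := hX 𝒰 hUo hUcov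
  -- `G n` : the union of the first `n+1` families of the σ-point-finite refinement
  set G : ℕ → Set X := fun n => ⋃ k ∈ Finset.range (n + 1), ⋃₀ 𝒱 k with hGdef
  have hGo : ∀ n, IsOpen (G n) := fun n =>
    isOpen_biUnion fun k _ => isOpen_sUnion (hVo k)
  have hGmono : Monotone G := by
    intro a b hab x hx
    simp only [hGdef, Set.mem_iUnion, Finset.mem_range] at hx ⊢
    obtain ⟨k, hk, hxk⟩ := hx
    exact ⟨k, by omega, hxk⟩
  have hGcov : ∀ x : X, ∃ n, x ∈ G n := by
    intro x
    have hx : x ∈ ⋃₀ ⋃ n, 𝒱 n := by rw [hVcov]; trivial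
    obtain ⟨v, hv, hxv⟩ := hx
    obtain ⟨n, hn⟩ := Set.mem_iUnion.mp hv
    refine ⟨n, ?_⟩
    simp only [hGdef, Set.mem_iUnion, Finset.mem_range]
    exact ⟨n, by omega, v, hn, hxv⟩
  -- Key step: a closed "shrinking" `E n ⊆ G n` covering `X`
  have hsub : ∀ m : ℕ, ∃ F : ℕ → Set X, (∀ n, IsClosed (F n)) ∧
      (∀ n, F n ⊆ G n) ∧ Monotone F ∧ Xn m ⊆ ⋃ n, F n := by
    intro m
    set Y := ↥(Xn m)
    set 𝒰m : Set (Set Y) := Set.range (fun n => (Subtype.val ⁻¹' G n : Set Y)) with h𝒰m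
    have h1 : ∀ u ∈ 𝒰m, IsOpen u := by
      rintro u ⟨n, rfl⟩
      exact (hGo n).preimage continuous_subtype_val
    have h2 : ⋃₀ 𝒰m = Set.univ := by
      apply Set.eq_univ_of_forall
      intro y
      obtain ⟨n, hn⟩ := hGcov (y : X)
      exact ⟨Subtype.val ⁻¹' G n, ⟨n, rfl⟩, hn⟩
    obtain ⟨𝒲, hWo, hWcov, hWref, hWpf⟩ := hmeta m 𝒰m h1 h2
    -- index function: each `w ∈ 𝒲` is inside the trace of some `G (ι w)`
    set ι : Set Y → ℕ := fun w => sInf {n | w ⊆ Subtype.val ⁻¹' G n} with hι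
    have hιspec : ∀ w ∈ 𝒲, w ⊆ Subtype.val ⁻¹' G (ι w) := by
      intro w hw
      obtain ⟨u, hu, hsubu⟩ := hWref w hw
      obtain ⟨n, rfl⟩ := hu
      exact Nat.sInf_mem (⟨n, hsubu⟩ : {n | w ⊆ Subtype.val ⁻¹' G n}.Nonempty)
    set F : ℕ → Set Y := fun n => (⋃₀ {w ∈ 𝒲 | n < ι w})ᶜ with hF
    have hFc : ∀ n, IsClosed (F n) :=
      fun n => (isOpen_sUnion fun w hw => hWo w hw.1).isClosed_compl
    have hFmono : Monotone F := by
      intro a b hab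
      apply Set.compl_subset_compl.mpr
      apply Set.sUnion_subset_sUnion
      intro w hw
      exact ⟨hw.1, lt_of_le_of_lt hab hw.2⟩
    have hFsub : ∀ n, F n ⊆ Subtype.val ⁻¹' G n := by
      intro n y hy
      have hyW : y ∈ ⋃₀ 𝒲 := by rw [hWcov]; trivial
      obtain ⟨w, hw, hyw⟩ := hyW
      have hle : ι w ≤ n := by
        by_contra h
        exact hy ⟨w, ⟨hw, by omega⟩, hyw⟩
      exact hGmono hle (hιspec w hw hyw)
    have hFcov : ∀ y : Y, ∃ n, y ∈ F n := by
      intro y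
      have hfin : (ι '' {w ∈ 𝒲 | y ∈ w}).Finite := (hWpf y).image ι
      obtain ⟨N, hN⟩ := hfin.bddAbove
      refine ⟨N, ?_⟩
      rintro ⟨w, ⟨hw, hNw⟩, hyw⟩
      have : ι w ≤ N := hN ⟨w, ⟨hw, hyw⟩, rfl⟩
      omega
    -- push forward to `X`
    refine ⟨fun n => Subtype.val '' F n, ?_, ?_, ?_, ?_⟩
    · intro n
      exact (hclosed m).isClosedEmbedding_subtypeVal.isClosedMap _ (hFc n)
    · rintro n x ⟨y, hy, rfl⟩
      exact hFsub n hy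
    · intro a b hab
      exact Set.image_mono (hFmono hab)
    · intro x hx
      obtain ⟨n, hn⟩ := hFcov ⟨x, hx⟩
      exact Set.mem_iUnion.mpr ⟨n, ⟨x, hx⟩, hn, rfl⟩
  choose F hFc hFsub hFmono hFcov using hsub
  set E : ℕ → Set X := fun n => ⋃ m ∈ Finset.range (n + 1), F m n with hE
  have hEc : ∀ n, IsClosed (E n) := fun n =>
    Set.Finite.isClosed_biUnion (Finset.range (n + 1)).finite_toSet
      fun m _ => hFc m n
  have hEsub : ∀ n, E n ⊆ G n := by
    intro n x hx
    simp only [hE, Set.mem_iUnion, Finset.mem_range] at hx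
    obtain ⟨m, _, hxm⟩ := hx
    exact hFsub m n hxm
  have hEcov : ∀ x : X, ∃ n, x ∈ E n := by
    intro x
    have hx : x ∈ ⋃ m, Xn m := by rw [hcover]; trivial
    obtain ⟨m, hm⟩ := Set.mem_iUnion.mp hx
    obtain ⟨n, hn⟩ := Set.mem_iUnion.mp (hFcov m hm)
    refine ⟨max m n, ?_⟩
    simp only [hE, Set.mem_iUnion, Finset.mem_range]
    exact ⟨m, by omega, hFmono m (le_max_right m n) hn⟩
  -- the final refinement
  set D : ℕ → Set X := fun n => ⋃ i ∈ Finset.range n, E i with hD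
  have hDc : ∀ n, IsClosed (D n) := fun n =>
    Set.Finite.isClosed_biUnion (Finset.range n).finite_toSet fun i _ => hEc i
  have hED : ∀ {i j : ℕ}, i < j → E i ⊆ D j := by
    intro i j hij x hx
    simp only [hD, Set.mem_iUnion, Finset.mem_range]
    exact ⟨i, hij, hx⟩
  refine ⟨⋃ n, (fun v => v \ D n) '' 𝒱 n, ?_, ?_, ?_, ?_⟩
  · intro w hw
    obtain ⟨n, hn⟩ := Set.mem_iUnion.mp hw
    obtain ⟨v, hv, rfl⟩ := hn
    exact (hVo n v hv).sdiff (hDc n)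
  · apply Set.eq_univ_of_forall
    intro x
    have hne : {n | x ∈ E n}.Nonempty := hEcov x
    set N := sInf {n | x ∈ E n} with hN
    have hxN : x ∈ E N := Nat.sInf_mem hne
    have hxG : x ∈ G N := hEsub N hxN
    simp only [hGdef, Set.mem_iUnion, Finset.mem_range] at hxG
    obtain ⟨j, hj, v, hv, hxv⟩ := hxG
    refine ⟨v \ D j, Set.mem_iUnion.mpr ⟨j, v, hv, rfl⟩, hxv, ?_⟩
    intro hxD
    simp only [hD, Set.mem_iUnion, Finset.mem_range] at hxD
    obtain ⟨i, hij, hxi⟩ := hxD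
    have : N ≤ i := Nat.sInf_le hxi
    omega
  · intro w hw
    obtain ⟨n, hn⟩ := Set.mem_iUnion.mp hw
    obtain ⟨v, hv, rfl⟩ := hn
    obtain ⟨u, hu, hsubu⟩ := hVref n v hv
    exact ⟨u, hu, (Set.diff_subset).trans hsubu⟩
  · intro x
    have hne : {n | x ∈ E n}.Nonempty := hEcov x
    set N := sInf {n | x ∈ E n} with hN
    have hxN : x ∈ E N := Nat.sInf_mem hne
    apply Set.Finite.subset
      (Set.Finite.biUnion (Finset.range (N + 1)).finite_toSet
        (fun j _ => ((hVpf j x).image (fun v => v \ D j))))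
    rintro w ⟨hw, hxw⟩
    obtain ⟨j, hj⟩ := Set.mem_iUnion.mp hw
    obtain ⟨v, hv, rfl⟩ := hj
    have hjN : j ≤ N := by
      by_contra h
      exact hxw.2 (hED (by omega) hxN)
    simp only [Set.mem_iUnion, Finset.mem_range]
    exact ⟨j, Finset.mem_coe.mpr (Finset.mem_range.mpr (Nat.lt_succ_of_le hjN)), v, ⟨hv, hxw.1⟩, rfl⟩
end

section
/- Let K be an Eberlein compact space which is a union of countably many closed hereditarily metacompact subspaces. Then K is hereditarily metacompact. -/
universe u

/-- A space is Eberlein compact if it is a compact Hausdorff space homeomorphic to a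
subspace of `c₀(Γ) = {x ∈ ℝ^Γ : ∀ ε > 0, {γ : ε ≤ |x γ|} is finite}` (with the topology
of pointwise convergence) for some index set `Γ`. -/
def IsEberleinCompact (K : Type u) [TopologicalSpace K] : Prop :=
  CompactSpace K ∧ T2Space K ∧
    ∃ (Γ : Type u) (f : K → Γ → ℝ),
      Topology.IsEmbedding f ∧ ∀ k, ∀ ε > (0 : ℝ), {γ | ε ≤ |f k γ|}.Finite

/-- A space is hereditarily metacompact if every subspace is metacompact. -/
def HereditarilyMetacompact (X : Type*) [TopologicalSpace X] : Prop :=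
  ∀ A : Set X, IsMetacompact ↥A

open Set

set_option linter.unusedSectionVars false
set_option maxHeartbeats 1000000


set_option linter.unusedSectionVars false
namespace Stmt9Grid

variable {K : Type u} [TopologicalSpace K] {Γ : Type v}

/-- index of a grid box: a finite set of coordinates and an integer grid position for each. -/
abbrev GIdx (Γ : Type v) := Σ L : Finset Γ, {γ // γ ∈ L} → ℤ

noncomputable def dd (n : ℕ) : ℝ := 2 * ((n : ℝ) + 1)

noncomputable def del (n : ℕ) : ℝ := 1 / ((n : ℝ) + 1)

lemma dd_pos (n : ℕ) : 0 < dd n := by unfold dd; positivity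

lemma del_pos (n : ℕ) : 0 < del n := by unfold del; positivity

/-- grid interval -/
noncomputable def Iseg (n : ℕ) (j : ℤ) : Set ℝ := Ioo ((j : ℝ) / dd n) (((j : ℝ) + 2) / dd n)

lemma Iseg_width {n : ℕ} {j : ℤ} {a b : ℝ} (ha : a ∈ Iseg n j) (hb : b ∈ Iseg n j) :
    |a - b| < del n := by
  obtain ⟨ha1, ha2⟩ := ha
  obtain ⟨hb1, hb2⟩ := hb
  have hwidth : ((j : ℝ) + 2) / dd n - (j : ℝ) / dd n = del n := by
    have h1 : dd n ≠ 0 := ne_of_gt (dd_pos n)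
    have h2 : ((n : ℝ) + 1) ≠ 0 := by positivity
    unfold dd del at *
    field_simp
    ring
  rw [abs_sub_lt_iff]
  constructor <;> linarith

lemma mem_Iseg_iff {n : ℕ} {j : ℤ} {a : ℝ} :
    a ∈ Iseg n j ↔ (j : ℝ) < a * dd n ∧ a * dd n < (j : ℝ) + 2 := by
  unfold Iseg
  rw [mem_Ioo, div_lt_iff₀ (dd_pos n), lt_div_iff₀ (dd_pos n)]

lemma ceil_mem_Iseg {n : ℕ} {a : ℝ} : a ∈ Iseg n (⌈a * dd n⌉ - 1) := by
  rw [mem_Iseg_iff]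
  constructor
  · push_cast
    have := Int.ceil_lt_add_one (a * dd n)
    linarith
  · push_cast
    have := Int.le_ceil (a * dd n)
    linarith

lemma Iseg_window {n : ℕ} {j : ℤ} {a : ℝ} (h : a ∈ Iseg n j) :
    j = ⌈a * dd n⌉ - 1 ∨ j = ⌈a * dd n⌉ - 2 := by
  rw [mem_Iseg_iff] at h
  have h1 : j < ⌈a * dd n⌉ := Int.lt_ceil.mpr h.1
  have h2 : ⌈a * dd n⌉ ≤ j + 2 := by
    apply Int.ceil_le.mpr
    push_cast
    linarith [h.2]
  omega

variable (f : K → Γ → ℝ)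

/-- grid box -/
def BB (n : ℕ) (p : GIdx Γ) : Set K :=
  ⋂ γ : {γ // γ ∈ p.1}, ({z | del n < |f z ↑γ|} ∩ {z | f z ↑γ ∈ Iseg n (p.2 γ)})

/-- the set of points small outside the support of the box -/
def CC (n : ℕ) (p : GIdx Γ) : Set K :=
  {z | ∀ γ, γ ∉ p.1 → |f z γ| ≤ del n}

lemma isOpen_BB (hf : Continuous f) (n : ℕ) (p : GIdx Γ) : IsOpen (BB f n p) := by
  apply isOpen_iInter_of_finite
  intro γ
  have hcont : Continuous fun z : K => f z ↑γ := (continuous_apply (↑γ : Γ)).comp hf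
  apply IsOpen.inter
  · exact isOpen_Ioi.preimage (continuous_abs.comp hcont)
  · exact isOpen_Ioo.preimage hcont

lemma mem_BB {n : ℕ} {p : GIdx Γ} {z : K} :
    z ∈ BB f n p ↔ ∀ γ : {γ // γ ∈ p.1}, del n < |f z ↑γ| ∧ f z ↑γ ∈ Iseg n (p.2 γ) := by
  unfold BB
  simp [mem_iInter]

/-- point-finiteness of the grid boxes containing a given point -/
lemma BB_index_finite (hc0 : ∀ k, ∀ ε > (0 : ℝ), {γ | ε ≤ |f k γ|}.Finite)
    (n : ℕ) (x : K) : {p : GIdx Γ | x ∈ BB f n p}.Finite := by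
  classical
  have hfin : {γ | del n ≤ |f x γ|}.Finite := hc0 x _ (del_pos n)
  set Sx : Finset Γ := hfin.toFinset with hSx
  have big : (⋃ L ∈ Sx.powerset, (Sigma.mk L) ''
      {σ : {γ // γ ∈ L} → ℤ | ∀ γ : {γ // γ ∈ L},
        σ γ ∈ ({⌈f x ↑γ * dd n⌉ - 1, ⌈f x ↑γ * dd n⌉ - 2} : Set ℤ)}).Finite := by
    apply Set.Finite.biUnion (Sx.powerset.finite_toSet)
    intro L _
    apply Set.Finite.image
    have hpi : {σ : {γ // γ ∈ L} → ℤ | ∀ γ : {γ // γ ∈ L},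
        σ γ ∈ ({⌈f x ↑γ * dd n⌉ - 1, ⌈f x ↑γ * dd n⌉ - 2} : Set ℤ)} =
        Set.pi univ (fun γ : {γ // γ ∈ L} =>
          ({⌈f x ↑γ * dd n⌉ - 1, ⌈f x ↑γ * dd n⌉ - 2} : Set ℤ)) := by
      ext σ
      simp [Set.mem_pi]
    rw [hpi]
    exact Set.Finite.pi (fun γ => (Set.finite_singleton _).insert _)
  apply big.subset
  rintro ⟨L, σ⟩ hx
  have hx' := (mem_BB f).mp hx
  have hLmem : L ∈ Sx.powerset := by
    rw [Finset.mem_powerset]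
    intro γ hγ
    have h1 := (hx' ⟨γ, hγ⟩).1
    rw [hSx, Set.Finite.mem_toFinset]
    exact le_of_lt h1
  refine mem_iUnion₂.mpr ⟨L, hLmem, ⟨σ, ?_, rfl⟩⟩
  intro γ
  simpa using Iseg_window (hx' γ).2

set_option linter.unusedSectionVars false

lemma exists_box (hemb : Topology.IsEmbedding f)
    {U : Set K} (hU : IsOpen U) {y : K} (hy : y ∈ U) :
    ∃ (F : Finset Γ) (ε : ℝ), 0 < ε ∧ {z | ∀ γ ∈ F, |f z γ - f y γ| < ε} ⊆ U := by
  classical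
  obtain ⟨O, hO, hOU⟩ := hemb.isInducing.isOpen_iff.mp hU
  have hfy : f y ∈ O := by rw [← hOU] at hy; exact hy
  obtain ⟨I, w, hwi, hpi⟩ := isOpen_pi_iff.mp hO (f y) hfy
  have hball : ∀ γ ∈ I, ∃ ε > (0:ℝ), Metric.ball (f y γ) ε ⊆ w γ := fun γ hγ =>
    Metric.isOpen_iff.mp (hwi γ hγ).1 _ (hwi γ hγ).2
  choose! ε hεpos hεball using hball
  rcases I.eq_empty_or_nonempty with hI | hI
  · refine ⟨∅, 1, one_pos, ?_⟩
    intro z _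
    rw [← hOU]
    apply hpi
    rw [Set.mem_pi]
    intro γ hγ
    rw [hI] at hγ
    simp at hγ
  · refine ⟨I, I.inf' hI ε, ?_, ?_⟩
    · rw [Finset.lt_inf'_iff]
      exact fun γ hγ => hεpos γ hγ
    · intro z hz
      rw [← hOU]
      apply hpi
      rw [Set.mem_pi]
      intro γ hγ
      apply hεball γ hγ
      rw [Metric.mem_ball, Real.dist_eq]
      exact lt_of_lt_of_le (hz γ hγ) (Finset.inf'_le ε hγ)

def useful (𝒰 : Set (Set K)) (n : ℕ) (p : GIdx Γ) : Prop :=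
  ∃ u, u ∈ 𝒰 ∧ BB f n p ∩ CC f n p ⊆ u

open Classical in
noncomputable def uch (𝒰 : Set (Set K)) (n : ℕ) (p : GIdx Γ) : Set K :=
  if h : useful f 𝒰 n p then h.choose else ∅

lemma uch_spec {𝒰 : Set (Set K)} {n : ℕ} {p : GIdx Γ} (h : useful f 𝒰 n p) :
    uch f 𝒰 n p ∈ 𝒰 ∧ BB f n p ∩ CC f n p ⊆ uch f 𝒰 n p := by
  unfold uch
  rw [dif_pos h]

  exact ⟨h.choose_spec.1, h.choose_spec.2⟩

theorem grid_refinement (hemb : Topology.IsEmbedding f)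
    (hc0 : ∀ k, ∀ ε > (0 : ℝ), {γ | ε ≤ |f k γ|}.Finite)
    (Y : Set K) (𝒰 : Set (Set K)) (hop : ∀ u ∈ 𝒰, IsOpen u) (hcov : Y ⊆ ⋃₀ 𝒰) :
    ∃ 𝒱 : ℕ → Set (Set K),
      (∀ n, ∀ v ∈ 𝒱 n, IsOpen v) ∧ (∀ n, ∀ v ∈ 𝒱 n, ∃ u ∈ 𝒰, v ⊆ u) ∧
      (Y ⊆ ⋃ n, ⋃₀ 𝒱 n) ∧ (∀ n x, {v ∈ 𝒱 n | x ∈ v}.Finite) := by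
  classical
  refine ⟨fun n => (fun p => BB f n p ∩ uch f 𝒰 n p) '' {p | useful f 𝒰 n p}, ?_, ?_, ?_, ?_⟩
  · rintro n _ ⟨p, hp, rfl⟩
    exact (isOpen_BB f hemb.continuous n p).inter (hop _ (uch_spec f hp).1)
  · rintro n _ ⟨p, hp, rfl⟩
    exact ⟨uch f 𝒰 n p, (uch_spec f hp).1, Set.inter_subset_right⟩
  · intro y hy
    obtain ⟨u, hu, hyu⟩ := hcov hy
    obtain ⟨F, ε, hε, hbox⟩ := exists_box f hemb (hop u hu) hyu
    obtain ⟨n, hn⟩ := exists_nat_one_div_lt (half_pos hε)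
    have hdel : del n < ε / 2 := hn
    have hLfin : {γ | del n < |f y γ|}.Finite :=
      (hc0 y _ (del_pos n)).subset (fun γ hγ => show del n ≤ |f y γ| from le_of_lt hγ)
    set L : Finset Γ := hLfin.toFinset with hL
    set p : GIdx Γ := ⟨L, fun γ => ⌈f y ↑γ * dd n⌉ - 1⟩ with hp
    have hyB : y ∈ BB f n p := by
      rw [mem_BB]
      intro γ
      refine ⟨?_, ceil_mem_Iseg⟩
      exact (Set.Finite.mem_toFinset hLfin).mp γ.2
    have hyC : y ∈ CC f n p := by
      intro γ hγ
      have hne : ¬ del n < |f y γ| := fun hcon =>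
        hγ ((Set.Finite.mem_toFinset hLfin).mpr hcon)
      exact not_lt.mp hne
    have hpu : useful f 𝒰 n p := by
      refine ⟨u, hu, ?_⟩
      rintro z ⟨hzB, hzC⟩
      apply hbox
      intro γ hγF
      by_cases hγL : γ ∈ L
      · have h1 := ((mem_BB f).mp hzB ⟨γ, hγL⟩).2
        have h2 : f y γ ∈ Iseg n (p.2 ⟨γ, hγL⟩) := ceil_mem_Iseg
        have h3 := Iseg_width h1 h2
        linarith
      · have h1 : |f z γ| ≤ del n := hzC γ hγL
        have h2 : |f y γ| ≤ del n := by
          have hne : ¬ del n < |f y γ| := fun hcon =>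
            hγL ((Set.Finite.mem_toFinset hLfin).mpr hcon)
          exact not_lt.mp hne
        calc |f z γ - f y γ| ≤ |f z γ| + |f y γ| := abs_sub _ _
          _ ≤ del n + del n := add_le_add h1 h2
          _ < ε := by linarith
    refine Set.mem_iUnion.mpr ⟨n, ?_⟩
    exact ⟨BB f n p ∩ uch f 𝒰 n p, ⟨p, hpu, rfl⟩, hyB, (uch_spec f hpu).2 ⟨hyB, hyC⟩⟩
  · intro n x
    have hfin := BB_index_finite f hc0 n x
    have hsub : {v ∈ (fun p => BB f n p ∩ uch f 𝒰 n p) '' {p | useful f 𝒰 n p} | x ∈ v} ⊆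
        (fun p => BB f n p ∩ uch f 𝒰 n p) '' {p : GIdx Γ | x ∈ BB f n p} := by
      rintro _ ⟨⟨p, hp, rfl⟩, hx⟩
      exact ⟨p, hx.1, rfl⟩
    exact (hfin.image _).subset hsub

end Stmt9Grid

namespace Stmt9Aux


variable {K : Type u} [TopologicalSpace K]

/-- Relative metacompactness of a subset with respect to ambient open sets. -/
def RelMeta (A : Set K) : Prop :=
  ∀ 𝒰 : Set (Set K), (∀ u ∈ 𝒰, IsOpen u) → A ⊆ ⋃₀ 𝒰 →
    ∃ 𝒱 : Set (Set K), (∀ v ∈ 𝒱, IsOpen v) ∧ A ⊆ ⋃₀ 𝒱 ∧ (∀ v ∈ 𝒱, ∃ u ∈ 𝒰, v ⊆ u) ∧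
      ∀ x ∈ A, {v ∈ 𝒱 | x ∈ v}.Finite

theorem isMetacompact_of_relMeta {A : Set K} (h : RelMeta A) : IsMetacompact ↥A := by
  classical
  intro 𝒰 hop hcov
  have hlift : ∀ u ∈ 𝒰, ∃ t : Set K, IsOpen t ∧ Subtype.val ⁻¹' t = u := fun u hu =>
    isOpen_induced_iff.mp (hop u hu)
  choose! t hto hteq using hlift
  obtain ⟨𝒱, hVo, hVc, hVr, hVpf⟩ := h (t '' 𝒰)
    (by rintro _ ⟨u, hu, rfl⟩; exact hto u hu)
    (by
      intro a ha
      have hmem : (⟨a, ha⟩ : ↥A) ∈ ⋃₀ 𝒰 := by rw [hcov]; trivial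
      obtain ⟨u, hu, hau⟩ := hmem
      refine ⟨t u, ⟨u, hu, rfl⟩, ?_⟩
      rw [← hteq u hu] at hau
      exact hau)
  refine ⟨(fun V => (Subtype.val ⁻¹' V : Set ↥A)) '' 𝒱, ?_, ?_, ?_, ?_⟩
  · rintro _ ⟨V, hV, rfl⟩; exact (hVo V hV).preimage continuous_subtype_val
  · apply eq_univ_of_forall
    intro x
    obtain ⟨V, hV, hxV⟩ := hVc x.2
    exact ⟨Subtype.val ⁻¹' V, ⟨V, hV, rfl⟩, hxV⟩
  · rintro _ ⟨V, hV, rfl⟩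
    obtain ⟨tu, ⟨u, hu, rfl⟩, hsub⟩ := hVr V hV
    refine ⟨u, hu, ?_⟩
    intro z hz
    rw [← hteq u hu]
    exact hsub hz
  · intro x
    have hsubim : {v ∈ (fun V => (Subtype.val ⁻¹' V : Set ↥A)) '' 𝒱 | x ∈ v} ⊆
        (fun V => (Subtype.val ⁻¹' V : Set ↥A)) '' {V ∈ 𝒱 | (x : K) ∈ V} := by
      rintro _ ⟨⟨V, hV, rfl⟩, hx⟩
      exact ⟨V, ⟨hV, hx⟩, rfl⟩
    exact (((hVpf _ x.2).image _).subset hsubim)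

theorem relMeta_of_isMetacompact {C A : Set K} (hsub : A ⊆ C)
    (h : IsMetacompact ↥{x : ↥C | (x : K) ∈ A}) : RelMeta A := by
  classical
  intro 𝒰 hop hcov
  set S : Set ↥C := {x : ↥C | (x : K) ∈ A} with hS
  set g : ↥S → K := fun x => ((x : ↥C) : K) with hg
  have hgc : Continuous g := continuous_subtype_val.comp continuous_subtype_val
  obtain ⟨𝒱', hVo', hVc', hVr', hVpf'⟩ := h ((fun u => g ⁻¹' u) '' 𝒰)
    (by rintro _ ⟨u, hu, rfl⟩; exact (hop u hu).preimage hgc)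
    (by
      apply eq_univ_of_forall
      intro x
      obtain ⟨u, hu, hxu⟩ := hcov x.2
      exact ⟨g ⁻¹' u, ⟨u, hu, rfl⟩, hxu⟩)
  have hlift : ∀ v' ∈ 𝒱', ∃ t : Set K, IsOpen t ∧ g ⁻¹' t = v' := by
    intro v' hv'
    obtain ⟨w, hw, hwv⟩ := isOpen_induced_iff.mp (hVo' v' hv')
    obtain ⟨t, ht, htw⟩ := isOpen_induced_iff.mp hw
    exact ⟨t, ht, by rw [← hwv, ← htw]; rfl⟩
  choose! T hTo hTeq using hlift
  have href : ∀ v' ∈ 𝒱', ∃ u, u ∈ 𝒰 ∧ v' ⊆ g ⁻¹' u := by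
    intro v' hv'
    obtain ⟨w, ⟨u, hu, rfl⟩, hsub⟩ := hVr' v' hv'
    exact ⟨u, hu, hsub⟩
  choose! uu huu huusub using href
  refine ⟨(fun v' => T v' ∩ uu v') '' 𝒱', ?_, ?_, ?_, ?_⟩
  · rintro _ ⟨v', hv', rfl⟩; exact (hTo v' hv').inter (hop _ (huu v' hv'))
  · intro a ha
    have hmem : (⟨⟨a, hsub ha⟩, ha⟩ : ↥S) ∈ ⋃₀ 𝒱' := by rw [hVc']; trivial
    obtain ⟨v', hv', hav⟩ := hmem
    have h1 : a ∈ T v' := by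
      have : (⟨⟨a, hsub ha⟩, ha⟩ : ↥S) ∈ g ⁻¹' (T v') := by rw [hTeq v' hv']; exact hav
      exact this
    have h2 : a ∈ uu v' := huusub v' hv' hav
    exact ⟨T v' ∩ uu v', ⟨v', hv', rfl⟩, h1, h2⟩
  · rintro _ ⟨v', hv', rfl⟩
    exact ⟨uu v', huu v' hv', inter_subset_right⟩
  · intro x hx
    have hsubim : {v ∈ (fun v' => T v' ∩ uu v') '' 𝒱' | x ∈ v} ⊆
        (fun v' => T v' ∩ uu v') '' {v' ∈ 𝒱' | (⟨⟨x, hsub hx⟩, hx⟩ : ↥S) ∈ v'} := by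
      rintro _ ⟨⟨v', hv', rfl⟩, hxv⟩
      refine ⟨v', ⟨hv', ?_⟩, rfl⟩
      rw [← hTeq v' hv']
      exact hxv.1
    exact ((hVpf' _).image _).subset hsubim


theorem closed_interpolation (Kn : ℕ → Set K) (hclosed : ∀ p, IsClosed (Kn p))
    (hKcov : ⋃ p, Kn p = Set.univ)
    (hpiece : ∀ p (T : Set K), T ⊆ Kn p → RelMeta T)
    (Y : Set K) (W : ℕ → Set K) (hWo : ∀ n, IsOpen (W n)) (hWm : Monotone W)
    (hYW : Y ⊆ ⋃ n, W n) :
    ∃ Cl : ℕ → Set K, (∀ n, IsClosed (Cl n)) ∧ (∀ n, Y ∩ Cl n ⊆ W n) ∧ Y ⊆ ⋃ n, Cl n := by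
  classical
  have H : ∀ p : ℕ, ∃ 𝒱 : Set (Set K), (∀ v ∈ 𝒱, IsOpen v) ∧ (Y ∩ Kn p) ⊆ ⋃₀ 𝒱 ∧
      (∀ v ∈ 𝒱, ∃ u ∈ {w | ∃ m, w = W m}, v ⊆ u) ∧
      ∀ x ∈ Y ∩ Kn p, {v ∈ 𝒱 | x ∈ v}.Finite := by
    intro p
    refine hpiece p _ Set.inter_subset_right {w | ∃ m, w = W m} ?_ ?_
    · rintro u ⟨m, rfl⟩; exact hWo m
    · intro x hx
      obtain ⟨m, hm⟩ := Set.mem_iUnion.mp (hYW hx.1)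
      exact ⟨W m, ⟨m, rfl⟩, hm⟩
  choose 𝒱 hVo hVc hVr hVpf using H
  have hg : ∀ p, ∀ v ∈ 𝒱 p, ∃ m, v ⊆ W m := by
    intro p v hv
    obtain ⟨u, ⟨m, rfl⟩, hsub⟩ := hVr p v hv
    exact ⟨m, hsub⟩
  choose! g hgs using hg
  set Cp : ℕ → ℕ → Set K := fun p n => (⋃ v ∈ {v ∈ 𝒱 p | n < g p v}, v)ᶜ with hCp
  have hCpc : ∀ p n, IsClosed (Cp p n) := by
    intro p n
    apply IsOpen.isClosed_compl
    exact isOpen_biUnion (fun v hv => hVo p v hv.1)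
  refine ⟨fun n => ⋃ p ∈ Finset.range (n+1), (Kn p ∩ Cp p n), ?_, ?_, ?_⟩
  · intro n
    apply Set.Finite.isClosed_biUnion (Finset.finite_toSet _)
    exact fun p _ => (hclosed p).inter (hCpc p n)
  · intro n x hx
    obtain ⟨hxY, hxC⟩ := hx
    obtain ⟨p, hpmem, hxK, hxCp⟩ := Set.mem_iUnion₂.mp hxC
    obtain ⟨v, hv, hxv⟩ := hVc p ⟨hxY, hxK⟩
    have hgle : g p v ≤ n := by
      by_contra hlt
      push_neg at hlt
      exact hxCp (Set.mem_biUnion (⟨hv, hlt⟩ : v ∈ {v ∈ 𝒱 p | n < g p v}) hxv)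
    exact hWm hgle (hgs p v hv hxv)
  · intro x hxY
    have hxK : x ∈ ⋃ p, Kn p := by rw [hKcov]; trivial
    obtain ⟨p, hxp⟩ := Set.mem_iUnion.mp hxK
    have hFx : {v ∈ 𝒱 p | x ∈ v}.Finite := hVpf p x ⟨hxY, hxp⟩
    obtain ⟨N₀, hN₀⟩ := (hFx.image (g p)).bddAbove
    refine Set.mem_iUnion.mpr ⟨max p N₀, Set.mem_iUnion₂.mpr ⟨p, ?_, hxp, ?_⟩⟩
    · have : p < max p N₀ + 1 := by omega
      exact Finset.mem_range.mpr this
    · intro hcon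
      obtain ⟨v, hvmem, hxv⟩ := Set.mem_iUnion₂.mp hcon
      have hle : g p v ≤ N₀ := hN₀ (Set.mem_image_of_mem (g p) ⟨hvmem.1, hxv⟩)
      have := hvmem.2
      omega

theorem relMeta_univ {K : Type u} [TopologicalSpace K] {Γ : Type u} (f : K → Γ → ℝ)
    (hemb : Topology.IsEmbedding f)
    (hc0 : ∀ k, ∀ ε > (0:ℝ), {γ | ε ≤ |f k γ|}.Finite)
    (Kn : ℕ → Set K) (hclosed : ∀ p, IsClosed (Kn p)) (hKcov : ⋃ p, Kn p = Set.univ)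
    (hpiece : ∀ p (T : Set K), T ⊆ Kn p → RelMeta T)
    (Y : Set K) : RelMeta Y := by
  classical
  intro 𝒰 hop hcov
  obtain ⟨𝒱, hVo, hVr, hVc, hVpf⟩ := Stmt9Grid.grid_refinement f hemb hc0 Y 𝒰 hop hcov
  set W : ℕ → Set K := fun n => ⋃ i ∈ Finset.range (n+1), ⋃₀ 𝒱 i with hW
  have hWo : ∀ n, IsOpen (W n) := fun n => isOpen_biUnion (fun i _ => isOpen_sUnion (hVo i))
  have hWm : Monotone W := by
    intro a b hab
    apply Set.iUnion₂_subset
    intro i hi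
    have hib : i ∈ Finset.range (b+1) := by
      rw [Finset.mem_range] at *
      omega
    intro x hx
    exact Set.mem_iUnion₂.mpr ⟨i, hib, hx⟩
  have hYW : Y ⊆ ⋃ n, W n := by
    intro y hy
    obtain ⟨i, hi⟩ := Set.mem_iUnion.mp (hVc hy)
    exact Set.mem_iUnion.mpr ⟨i, Set.mem_biUnion (Finset.self_mem_range_succ i) hi⟩
  obtain ⟨Cl, hClc, hClW, hClcov⟩ := closed_interpolation Kn hclosed hKcov hpiece Y W hWo hWm hYW
  set D : ℕ → Set K := fun n => W n \ ⋃ j ∈ Finset.range n, Cl j with hD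
  have hDo : ∀ n, IsOpen (D n) := fun n => (hWo n).sdiff
    (Set.Finite.isClosed_biUnion (Finset.finite_toSet _) (fun j _ => hClc j))
  refine ⟨{w | ∃ n i v, i ≤ n ∧ v ∈ 𝒱 i ∧ w = v ∩ D n}, ?_, ?_, ?_, ?_⟩
  · rintro _ ⟨n, i, v, hin, hv, rfl⟩
    exact (hVo i v hv).inter (hDo n)
  · intro x hx
    have hex : ∃ n, x ∈ Cl n := Set.mem_iUnion.mp (hClcov hx)
    have hx0 : x ∈ Cl (Nat.find hex) := Nat.find_spec hex
    have hxW : x ∈ W (Nat.find hex) := hClW _ ⟨hx, hx0⟩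
    have hxD : x ∈ D (Nat.find hex) := by
      refine ⟨hxW, ?_⟩
      intro hcon
      obtain ⟨j, hj, hxj⟩ := Set.mem_iUnion₂.mp hcon
      exact Nat.find_min hex (Finset.mem_range.mp hj) hxj
    obtain ⟨i, hi, hxU⟩ := Set.mem_iUnion₂.mp hxW
    obtain ⟨v, hv, hxv⟩ := hxU
    refine ⟨v ∩ D (Nat.find hex), ⟨Nat.find hex, i, v, ?_, hv, rfl⟩, hxv, hxD⟩
    have := Finset.mem_range.mp hi
    omega
  · rintro _ ⟨n, i, v, hin, hv, rfl⟩
    obtain ⟨u, hu, hsub⟩ := hVr i v hv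
    exact ⟨u, hu, Set.Subset.trans Set.inter_subset_left hsub⟩
  · intro x hx
    have hex : ∃ n, x ∈ Cl n := Set.mem_iUnion.mp (hClcov hx)
    have hsub : {w ∈ {w | ∃ n i v, i ≤ n ∧ v ∈ 𝒱 i ∧ w = v ∩ D n} | x ∈ w} ⊆
        (fun q : ℕ × Set K => q.2 ∩ D q.1) ''
          (((Finset.range (Nat.find hex + 1) : Finset ℕ) : Set ℕ) ×ˢ
            (⋃ i ∈ Finset.range (Nat.find hex + 1), {v ∈ 𝒱 i | x ∈ v})) := by
      rintro _ ⟨⟨n, i, v, hin, hv, rfl⟩, hxw⟩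
      have hxv : x ∈ v := hxw.1
      have hxD : x ∈ D n := hxw.2
      have hn : n ≤ Nat.find hex := by
        by_contra hlt
        push_neg at hlt
        exact hxD.2 (Set.mem_biUnion (Finset.mem_range.mpr hlt) (Nat.find_spec hex))
      refine ⟨(n, v), ⟨?_, ?_⟩, rfl⟩
      · have : n < Nat.find hex + 1 := by omega
        exact Finset.mem_range.mpr this
      · refine Set.mem_biUnion (Finset.mem_range.mpr (by omega : i < Nat.find hex + 1)) ⟨hv, hxv⟩
    apply Set.Finite.subset ?_ hsub
    apply Set.Finite.image
    apply Set.Finite.prod (Finset.finite_toSet _)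
    apply Set.Finite.biUnion (Finset.finite_toSet _)
    exact fun i _ => hVpf i x

end Stmt9Aux

/-- An Eberlein compact space which is a union of countably many closed hereditarily
metacompact subspaces is hereditarily metacompact. -/
theorem stmt9 (K : Type u) [TopologicalSpace K]
    (hEb : IsEberleinCompact K)
    (Kn : ℕ → Set K) (hclosed : ∀ n, IsClosed (Kn n))
    (hher : ∀ n, HereditarilyMetacompact ↥(Kn n))
    (hcover : ⋃ n, Kn n = Set.univ) :
    HereditarilyMetacompact K := by
  obtain ⟨_, _, Γ, f, hemb, hc0⟩ := hEb
  intro A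
  apply Stmt9Aux.isMetacompact_of_relMeta
  have hpiece : ∀ p (T : Set K), T ⊆ Kn p → Stmt9Aux.RelMeta T := fun p T hT =>
    Stmt9Aux.relMeta_of_isMetacompact hT (hher p {x : ↥(Kn p) | (x : K) ∈ T})
  exact Stmt9Aux.relMeta_univ f hemb hc0 Kn hclosed hcover hpiece A
end

section
/- Let K be an NY compact space and let L be a compact Hausdorff space. If there exists a continuous linear map T : C_p(K) → C_p(L) such that T(C_p(K)) is dense in C_p(L), then L is NY compact as well. -/
universe u

namespace Stmt10Aux

noncomputable section

open Topology Set

/-! ### The squashing map `ℝ → [0,1]` -/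

/-- Squash a real number into `[0,1]`, sending nonpositive numbers to `0`,
injective on `[0,∞)`. -/
def sq (v : ℝ) : Set.Icc (0 : ℝ) 1 :=
  ⟨max v 0 / (1 + max v 0), by
    have h0 : (0 : ℝ) ≤ max v 0 := le_max_right v 0
    constructor
    · exact div_nonneg h0 (by linarith)
    · rw [div_le_one (by linarith)]; linarith⟩

lemma sq_zero : sq 0 = ⟨0, Set.left_mem_Icc.mpr zero_le_one⟩ := by
  simp [sq]

lemma sq_cont : Continuous sq := by
  refine Continuous.subtype_mk ?_ _
  refine Continuous.div (continuous_id.max continuous_const)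
    (continuous_const.add (continuous_id.max continuous_const)) ?_
  intro v
  have h0 : (0 : ℝ) ≤ max v 0 := le_max_right v 0
  positivity

lemma max_eq_of_sq_eq {v w : ℝ} (h : sq v = sq w) : max v 0 = max w 0 := by
  have h' := congrArg Subtype.val h
  simp only [sq] at h'
  have hv : (0 : ℝ) ≤ max v 0 := le_max_right v 0
  have hw : (0 : ℝ) ≤ max w 0 := le_max_right w 0
  rw [div_eq_div_iff (by linarith) (by linarith)] at h'
  nlinarith

lemma sq_inj2 {v w : ℝ} (h1 : sq v = sq w) (h2 : sq (-v) = sq (-w)) : v = w := by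
  have e1 := max_eq_of_sq_eq h1
  have e2 := max_eq_of_sq_eq h2
  have hid : ∀ x : ℝ, max x 0 - max (-x) 0 = x := by
    intro x
    rcases le_total x 0 with h | h
    · rw [max_eq_right h, max_eq_left (neg_nonneg.mpr h)]; ring
    · rw [max_eq_left h, max_eq_right (neg_nonpos.mpr h)]; ring
  rw [← hid v, ← hid w, e1, e2]

variable {K L : Type u} [TopologicalSpace K] [TopologicalSpace L] {Γ : Type u}

/-! ### Coordinate functions and monomials on `K` -/

/-- The real-valued coordinate function of index `p = (γ, n)`. -/
def gfun (fK : K → Γ → ℕ → Set.Icc (0 : ℝ) 1) (p : Γ × ℕ) (k : K) : ℝ :=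
  (fK k p.1 p.2 : ℝ)

lemma gfun_cont {fK : K → Γ → ℕ → Set.Icc (0 : ℝ) 1} (hc : Continuous fK) (p : Γ × ℕ) :
    Continuous (gfun fK p) := by
  exact continuous_subtype_val.comp
    ((continuous_apply p.2).comp ((continuous_apply p.1).comp hc))

/-- The pointwise product of the coordinate functions indexed by a list. -/
def prodFun (fK : K → Γ → ℕ → Set.Icc (0 : ℝ) 1) (l : List (Γ × ℕ)) (k : K) : ℝ :=
  (l.map fun p => gfun fK p k).prod

lemma prodFun_cont {fK : K → Γ → ℕ → Set.Icc (0 : ℝ) 1} (hc : Continuous fK)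
    (l : List (Γ × ℕ)) : Continuous (prodFun fK l) :=
  continuous_list_prod l fun p _ => gfun_cont hc p

/-- The monomial as an element of `Cp K`. -/
def prodCp (fK : K → Γ → ℕ → Set.Icc (0 : ℝ) 1) (hc : Continuous fK)
    (l : List (Γ × ℕ)) : Cp K :=
  ⟨prodFun fK l, prodFun_cont hc l⟩

/-- The value at `y` of the image under `T` of a monomial. -/
def PhiL (T : Cp K →ₗ[ℝ] Cp L) (fK : K → Γ → ℕ → Set.Icc (0 : ℝ) 1)
    (hc : Continuous fK) (y : L) (l : List (Γ × ℕ)) : ℝ :=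
  (T (prodCp fK hc l) : L → ℝ) y

lemma PhiL_cont (T : Cp K →ₗ[ℝ] Cp L) (fK : K → Γ → ℕ → Set.Icc (0 : ℝ) 1)
    (hc : Continuous fK) (l : List (Γ × ℕ)) :
    Continuous fun y => PhiL T fK hc y l :=
  (T (prodCp fK hc l)).2

/-! ### The encoding of monomials -/

/-- A fixed encoding of monomial data over a finite index set. -/
def tEnc (t : Finset Γ) : Encodable (List ({ x // x ∈ t } × ℕ) × Bool) :=
  letI : Encodable { x // x ∈ t } := Fintype.toEncodable _
  inferInstance

/-- Conversion of a monomial over `t` to a list over `Γ`. -/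
def conv {t : Finset Γ} (l : List ({ x // x ∈ t } × ℕ)) : List (Γ × ℕ) :=
  l.map fun p => ((p.1 : Γ), p.2)

/-- One cube coordinate of the big map. -/
def Fcoord (T : Cp K →ₗ[ℝ] Cp L) (fK : K → Γ → ℕ → Set.Icc (0 : ℝ) 1)
    (hc : Continuous fK) (t : Finset Γ)
    (od : Option (List ({ x // x ∈ t } × ℕ) × Bool)) (y : L) : Set.Icc (0 : ℝ) 1 :=
  match od with
  | none => hilbertZero 0
  | some (l, b) =>
      letI := Classical.propDecidable (∀ γ ∈ t, ∃ p ∈ l, (p.1 : Γ) = γ)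
      if (∀ γ ∈ t, ∃ p ∈ l, (p.1 : Γ) = γ)
      then sq ((if b then (1 : ℝ) else -1) * PhiL T fK hc y (conv l))
      else hilbertZero 0

/-- The big map `L → σ(I^ω, Finset Γ)`. -/
def Fmap (T : Cp K →ₗ[ℝ] Cp L) (fK : K → Γ → ℕ → Set.Icc (0 : ℝ) 1)
    (hc : Continuous fK) (y : L) (t : Finset Γ) (j : ℕ) : Set.Icc (0 : ℝ) 1 :=
  Fcoord T fK hc t (@Encodable.decode _ (tEnc t) j) y

lemma Fmap_cont (T : Cp K →ₗ[ℝ] Cp L) (fK : K → Γ → ℕ → Set.Icc (0 : ℝ) 1)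
    (hc : Continuous fK) : Continuous (Fmap T fK hc) := by
  refine continuous_pi fun t => continuous_pi fun j => ?_
  show Continuous fun y => Fcoord T fK hc t (@Encodable.decode _ (tEnc t) j) y
  rcases (@Encodable.decode _ (tEnc t) j) with _ | ⟨l, b⟩
  · exact continuous_const
  · show Continuous fun y =>
      (letI := Classical.propDecidable (∀ γ ∈ t, ∃ p ∈ l, (p.1 : Γ) = γ)
       if (∀ γ ∈ t, ∃ p ∈ l, (p.1 : Γ) = γ)
       then sq ((if b then (1 : ℝ) else -1) * PhiL T fK hc y (conv l))
       else hilbertZero 0)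
    split_ifs with hcond hb
    · exact sq_cont.comp (Continuous.mul continuous_const (PhiL_cont T fK hc (conv l)))
    · exact sq_cont.comp (Continuous.mul continuous_const (PhiL_cont T fK hc (conv l)))
    · exact continuous_const

/-! ### Finite supports -/

lemma exists_support (T : Cp K →ₗ[ℝ] Cp L) (hTcont : Continuous T) (y : L) :
    ∃ S : Set K, S.Finite ∧
      ∀ f : Cp K, (∀ x ∈ S, (f : K → ℝ) x = 0) → (T f : L → ℝ) y = 0 := by
  have hφ : Continuous fun f : Cp K => (T f : L → ℝ) y :=
    (continuous_apply y).comp (continuous_subtype_val.comp hTcont)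
  have h0 : (T (0 : Cp K) : L → ℝ) y = 0 := by
    rw [map_zero]; rfl
  have hU : (fun f : Cp K => (T f : L → ℝ) y) ⁻¹' Set.Ioo (-1 : ℝ) 1 ∈ 𝓝 (0 : Cp K) := by
    refine hφ.continuousAt.preimage_mem_nhds ?_
    rw [h0]
    exact Ioo_mem_nhds (by norm_num) (by norm_num)
  have hcoe : 𝓝 (0 : Cp K) = Filter.comap Subtype.val (𝓝 ((0 : Cp K) : K → ℝ)) :=
    nhds_subtype _ _
  rw [hcoe] at hU
  obtain ⟨V, hV, hVU⟩ := Filter.mem_comap.mp hU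
  have h00 : ((0 : Cp K) : K → ℝ) = (0 : K → ℝ) := rfl
  rw [h00, nhds_pi, Filter.mem_pi] at hV
  obtain ⟨I, hIfin, tt, htt, hsub⟩ := hV
  refine ⟨I, hIfin, fun f hf => ?_⟩
  by_contra hne
  have key : ∀ c : ℝ, (T (c • f) : L → ℝ) y ∈ Set.Ioo (-1 : ℝ) 1 := by
    intro c
    refine hVU ?_
    refine hsub ?_
    intro x hx
    have hcx : ((c • f : Cp K) : K → ℝ) x = c * (f : K → ℝ) x := rfl
    show ((c • f : Cp K) : K → ℝ) x ∈ tt x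
    rw [hcx, hf x hx, mul_zero]
    exact mem_of_mem_nhds (htt x)
  have hone := key (((T f : L → ℝ) y)⁻¹)
  have hsm : (T ((((T f : L → ℝ) y)⁻¹ : ℝ) • f) : L → ℝ) y
      = (((T f : L → ℝ) y)⁻¹) * (T f : L → ℝ) y := by
    rw [map_smul]; rfl
  rw [hsm, inv_mul_cancel₀ hne] at hone
  exact absurd hone.2 (lt_irrefl 1)

lemma finset_subset_finite {A : Set Γ} (hA : A.Finite) :
    {t : Finset Γ | ∀ γ ∈ t, γ ∈ A}.Finite := by
  classical
  refine Set.Finite.subset (hA.toFinset.powerset.finite_toSet) ?_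
  intro t ht
  rw [Finset.mem_coe, Finset.mem_powerset]
  intro γ hγ
  exact hA.mem_toFinset.mpr (ht γ hγ)

lemma Fmap_finite (T : Cp K →ₗ[ℝ] Cp L) (fK : K → Γ → ℕ → Set.Icc (0 : ℝ) 1)
    (hc : Continuous fK) (hTcont : Continuous T)
    (hfin : ∀ k, {γ | fK k γ ≠ hilbertZero}.Finite) (y : L) :
    {t : Finset Γ | Fmap T fK hc y t ≠ hilbertZero}.Finite := by
  obtain ⟨S, hSfin, hS⟩ := exists_support T hTcont y
  refine Set.Finite.subset
    (Set.Finite.biUnion hSfin fun x _ => finset_subset_finite (hfin x)) ?_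
  intro t ht
  obtain ⟨j, hj⟩ : ∃ j, Fmap T fK hc y t j ≠ hilbertZero j := by
    by_contra h
    push_neg at h
    exact ht (funext h)
  rw [Fmap] at hj
  rcases hd : (@Encodable.decode _ (tEnc t) j) with _ | ⟨l, b⟩
  · rw [hd] at hj
    exact absurd rfl hj
  · rw [hd] at hj
    show t ∈ ⋃ x ∈ S, {t : Finset Γ | ∀ γ ∈ t, γ ∈ {γ | fK x γ ≠ hilbertZero}}
    simp only [Fcoord] at hj
    split_ifs at hj with hcond hb
    · have hPhi : PhiL T fK hc y (conv l) ≠ 0 := by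
        intro h0
        apply hj
        rw [h0, mul_zero, sq_zero]
        rfl
      have hnv : ¬ ∀ x ∈ S, (prodCp fK hc (conv l) : K → ℝ) x = 0 := by
        intro hv
        exact hPhi (hS _ hv)
      push_neg at hnv
      obtain ⟨x, hxS, hx⟩ := hnv
      refine Set.mem_biUnion hxS ?_
      intro γ hγt
      obtain ⟨p, hpl, hpγ⟩ := hcond γ hγt
      show fK x γ ≠ hilbertZero
      intro hzero
      apply hx
      show prodFun fK (conv l) x = 0
      refine List.prod_eq_zero ?_
      rw [List.mem_map]
      refine ⟨((p.1 : Γ), p.2), ?_, ?_⟩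
      · exact List.mem_map.mpr ⟨p, hpl, rfl⟩
      · show (fK x (p.1 : Γ) p.2 : ℝ) = 0
        rw [hpγ, hzero]
        rfl
    · have hPhi : PhiL T fK hc y (conv l) ≠ 0 := by
        intro h0
        apply hj
        rw [h0, mul_zero, sq_zero]
        rfl
      have hnv : ¬ ∀ x ∈ S, (prodCp fK hc (conv l) : K → ℝ) x = 0 := by
        intro hv
        exact hPhi (hS _ hv)
      push_neg at hnv
      obtain ⟨x, hxS, hx⟩ := hnv
      refine Set.mem_biUnion hxS ?_
      intro γ hγt
      obtain ⟨p, hpl, hpγ⟩ := hcond γ hγt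
      show fK x γ ≠ hilbertZero
      intro hzero
      apply hx
      show prodFun fK (conv l) x = 0
      refine List.prod_eq_zero ?_
      rw [List.mem_map]
      refine ⟨((p.1 : Γ), p.2), ?_, ?_⟩
      · exact List.mem_map.mpr ⟨p, hpl, rfl⟩
      · show (fK x (p.1 : Γ) p.2 : ℝ) = 0
        rw [hpγ, hzero]
        rfl
    · exact absurd rfl hj

/-! ### Injectivity -/

/-- The coordinate function as a bundled continuous map. -/
def gCm (fK : K → Γ → ℕ → Set.Icc (0 : ℝ) 1) (hc : Continuous fK) (p : Γ × ℕ) :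
    C(K, ℝ) :=
  ⟨gfun fK p, gfun_cont hc p⟩

lemma coe_list_prod (fK : K → Γ → ℕ → Set.Icc (0 : ℝ) 1) (hc : Continuous fK)
    (l : List (Γ × ℕ)) : ⇑((l.map (gCm fK hc)).prod) = prodFun fK l := by
  induction l with
  | nil =>
      funext k
      simp [prodFun]
  | cons p l ih =>
      funext k
      rw [List.map_cons, List.prod_cons, ContinuousMap.mul_apply]
      have : prodFun fK (p :: l) k = gfun fK p k * prodFun fK l k := by
        simp [prodFun]
      rw [this, ← ih]
      rfl

/-- The inclusion of bundled continuous maps into `Cp K` as a linear map. -/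
def iotaL : C(K, ℝ) →ₗ[ℝ] Cp K where
  toFun h := ⟨⇑h, h.continuous⟩
  map_add' a b := Subtype.ext (by ext k; simp)
  map_smul' c a := Subtype.ext (by ext k; simp)

lemma iotaL_cont : Continuous (iotaL (K := K)) := by
  refine Continuous.subtype_mk ?_ _
  exact continuous_pi fun x => continuous_eval_const x

/-- Evaluation at a point as a linear map on `Cp L`. -/
def evalL (y : L) : Cp L →ₗ[ℝ] ℝ where
  toFun h := (h : L → ℝ) y
  map_add' a b := rfl
  map_smul' c a := rfl

lemma exists_sep [CompactSpace L] [T2Space L] {y1 y2 : L} (h : y1 ≠ y2) :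
    ∃ g : Cp L, (g : L → ℝ) y1 ≠ (g : L → ℝ) y2 := by
  obtain ⟨g, hg0, hg1, -⟩ := exists_continuous_zero_one_of_isClosed
    (isClosed_singleton (x := y1)) (isClosed_singleton (x := y2))
    (by simpa [Set.disjoint_singleton] using h)
  refine ⟨⟨⇑g, g.continuous⟩, ?_⟩
  have h0 : g y1 = 0 := hg0 (Set.mem_singleton y1)
  have h1 : g y2 = 1 := hg1 (Set.mem_singleton y2)
  show g y1 ≠ g y2
  rw [h0, h1]
  norm_num

lemma exists_preimage_list {α β : Type*} (g : α → β) :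
    ∀ l1 : List β, (∀ a ∈ l1, a ∈ Set.range g) → ∃ l0 : List α, l0.map g = l1 := by
  intro l1
  induction l1 with
  | nil => exact fun _ => ⟨[], rfl⟩
  | cons b l ih =>
      intro hmem
      obtain ⟨a, ha⟩ := hmem b List.mem_cons_self
      obtain ⟨l0, hl0⟩ := ih fun x hx => hmem x (List.mem_cons_of_mem b hx)
      exact ⟨a :: l0, by rw [List.map_cons, ha, hl0]⟩

/-- Any monomial list over `Γ` can be realized over its own index `Finset`. -/
lemma exists_conv (l0 : List (Γ × ℕ)) :
    ∃ (t : Finset Γ) (l' : List ({ x // x ∈ t } × ℕ)),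
      conv l' = l0 ∧ (∀ γ ∈ t, ∃ p ∈ l', (p.1 : Γ) = γ) := by
  classical
  refine ⟨(l0.map Prod.fst).toFinset,
    l0.attach.map (fun q => (⟨q.1.1,
      List.mem_toFinset.mpr (List.mem_map.mpr ⟨q.1, q.2, rfl⟩)⟩, q.1.2)), ?_, ?_⟩
  · show List.map _ (l0.attach.map _) = l0
    rw [List.map_map]
    have : ((fun p : { x // x ∈ (l0.map Prod.fst).toFinset } × ℕ => ((p.1 : Γ), p.2)) ∘
        (fun q : { x // x ∈ l0 } => ((⟨q.1.1,
          List.mem_toFinset.mpr (List.mem_map.mpr ⟨q.1, q.2, rfl⟩)⟩ :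
            { x // x ∈ (l0.map Prod.fst).toFinset }), q.1.2)))
        = fun q : { x // x ∈ l0 } => q.1 := by
      funext q
      show (q.1.1, q.1.2) = q.1
      exact Prod.mk.eta
    rw [this]
    exact List.attach_map_subtype_val l0
  · intro γ hγ
    rw [List.mem_toFinset, List.mem_map] at hγ
    obtain ⟨q0, hq0, hfst⟩ := hγ
    refine ⟨(⟨q0.1, List.mem_toFinset.mpr (List.mem_map.mpr ⟨q0, hq0, rfl⟩)⟩, q0.2),
      List.mem_map.mpr ⟨⟨q0, hq0⟩, List.mem_attach _ _, rfl⟩, hfst⟩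

lemma Fmap_inj [CompactSpace K] [T2Space K] [CompactSpace L] [T2Space L]
    (T : Cp K →ₗ[ℝ] Cp L) (fK : K → Γ → ℕ → Set.Icc (0 : ℝ) 1)
    (hc : Continuous fK) (hinj : Function.Injective fK)
    (hTcont : Continuous T) (hTdense : DenseRange T) :
    Function.Injective (Fmap T fK hc) := by
  intro y1 y2 hF
  by_contra hne
  obtain ⟨g0, hg0⟩ := exists_sep hne
  -- Step 1: all monomial values agree.
  have hmono : ∀ l0 : List (Γ × ℕ),
      PhiL T fK hc y1 l0 = PhiL T fK hc y2 l0 := by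
    intro l0
    obtain ⟨t, l', hconv, hcond⟩ := exists_conv l0
    have key : ∀ b : Bool,
        Fcoord T fK hc t (some (l', b)) y1 = Fcoord T fK hc t (some (l', b)) y2 := by
      intro b
      have h1 := congrFun (congrFun hF t) (@Encodable.encode _ (tEnc t) (l', b))
      rw [Fmap, Fmap, @Encodable.encodek _ (tEnc t)] at h1
      exact h1
    have htrue := key true
    have hfalse := key false
    simp only [Fcoord] at htrue hfalse
    simp only [if_pos hcond] at htrue hfalse
    rw [hconv] at htrue hfalse
    simp only [if_true, one_mul, Bool.false_eq_true, if_false, neg_one_mul] at htrue hfalse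
    exact sq_inj2 htrue hfalse
  -- the difference functional
  set ν : C(K, ℝ) →ₗ[ℝ] ℝ :=
    ((evalL y1 : Cp L →ₗ[ℝ] ℝ) - evalL y2).comp (T.comp iotaL) with hν
  -- Step 2: ν vanishes on the monoid closure of coordinates.
  have hν_mono : ∀ m ∈ Submonoid.closure (Set.range (gCm fK hc)), ν m = 0 := by
    intro m hm
    obtain ⟨l1, hl1, hprod⟩ := Submonoid.exists_list_of_mem_closure hm
    obtain ⟨l0, rfl⟩ := exists_preimage_list (gCm fK hc) l1 hl1
    have hcoe : iotaL ((l0.map (gCm fK hc)).prod) = prodCp fK hc l0 :=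
      Subtype.ext (coe_list_prod fK hc l0)
    have : ν m = PhiL T fK hc y1 l0 - PhiL T fK hc y2 l0 := by
      rw [hν, ← hprod]
      show (evalL y1 - evalL y2) (T (iotaL ((l0.map (gCm fK hc)).prod))) = _
      rw [hcoe]
      rfl
    rw [this, hmono l0, sub_self]
  -- Step 3: ν vanishes on the subalgebra generated by coordinates.
  have hν_alg : ∀ m ∈ Algebra.adjoin ℝ (Set.range (gCm fK hc)), ν m = 0 := by
    intro m hm
    have hm' : m ∈ Submodule.span ℝ
        ((Submonoid.closure (Set.range (gCm fK hc)) : Submonoid C(K, ℝ)) : Set C(K, ℝ)) := by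
      have := Algebra.adjoin_eq_span (R := ℝ) (s := Set.range (gCm fK hc))
      rw [← this]
      exact hm
    refine Submodule.span_induction (fun x hx => hν_mono x hx) (map_zero ν)
      (fun a b _ _ ha hb => by rw [map_add, ha, hb, add_zero])
      (fun c a _ ha => by rw [map_smul, ha, smul_zero]) hm'
  -- Step 4: Stone–Weierstrass.
  have hSW : (Algebra.adjoin ℝ (Set.range (gCm fK hc))).topologicalClosure = ⊤ := by
    refine ContinuousMap.subalgebra_topologicalClosure_eq_top_of_separatesPoints _ ?_
    intro x y hxy
    have hK : fK x ≠ fK y := fun h => hxy (hinj h)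
    obtain ⟨γ, hγ⟩ := Function.ne_iff.mp hK
    obtain ⟨n, hn⟩ := Function.ne_iff.mp hγ
    refine ⟨⇑(gCm fK hc (γ, n)), ⟨gCm fK hc (γ, n),
      Algebra.subset_adjoin ⟨(γ, n), rfl⟩, rfl⟩, ?_⟩
    show gfun fK (γ, n) x ≠ gfun fK (γ, n) y
    exact fun h => hn (Subtype.ext h)
  have hν_cont : Continuous ν := by
    have h1 : Continuous fun h : Cp L => (h : L → ℝ) y1 :=
      (continuous_apply y1).comp continuous_subtype_val
    have h2 : Continuous fun h : Cp L => (h : L → ℝ) y2 :=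
      (continuous_apply y2).comp continuous_subtype_val
    exact ((h1.sub h2).comp hTcont).comp iotaL_cont
  -- Step 5: ν vanishes identically.
  have hν_zero : ∀ m : C(K, ℝ), ν m = 0 := by
    intro m
    have hm : m ∈ closure ((Algebra.adjoin ℝ (Set.range (gCm fK hc)) :
        Subalgebra ℝ C(K, ℝ)) : Set C(K, ℝ)) := by
      have hmem : m ∈ (Algebra.adjoin ℝ (Set.range (gCm fK hc))).topologicalClosure := by
        rw [hSW]; trivial
      exact hmem
    have hclosed : IsClosed {x : C(K, ℝ) | ν x = 0} :=
      isClosed_eq hν_cont continuous_const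
    exact hclosed.closure_subset_iff.mpr (fun x hx => hν_alg x hx) hm
  -- Step 6: all of T's values agree at y1, y2, then density gives a contradiction.
  have hall : ∀ f : Cp K, (T f : L → ℝ) y1 = (T f : L → ℝ) y2 := by
    intro f
    have hz := hν_zero ⟨(f : K → ℝ), f.2⟩
    have hi : iotaL (⟨(f : K → ℝ), f.2⟩ : C(K, ℝ)) = f := Subtype.ext rfl
    have : (T f : L → ℝ) y1 - (T f : L → ℝ) y2 = 0 := by
      rw [← hi]
      exact hz
    linarith
  have hE : ∀ h : Cp L, (h : L → ℝ) y1 = (h : L → ℝ) y2 := by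
    have hcl : IsClosed {h : Cp L | (h : L → ℝ) y1 = (h : L → ℝ) y2} :=
      isClosed_eq ((continuous_apply y1).comp continuous_subtype_val)
        ((continuous_apply y2).comp continuous_subtype_val)
    intro h
    have hh : h ∈ closure (Set.range ⇑T) := by
      rw [hTdense.closure_range]; trivial
    exact hcl.closure_subset_iff.mpr (by rintro _ ⟨f, rfl⟩; exact hall f) hh
  exact hg0 (hE g0)

end

end Stmt10Aux

/-- Let `K` be NY compact and `L` compact Hausdorff. If there exists a continuous linear
map `T : C_p(K) → C_p(L)` with dense image, then `L` is NY compact as well. -/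
theorem stmt10 (K L : Type u) [TopologicalSpace K] [TopologicalSpace L]
    [CompactSpace L] [T2Space L]
    (hK : IsNYCompact K)
    (T : Cp K →ₗ[ℝ] Cp L) (hTcont : Continuous T) (hTdense : DenseRange T) :
    IsNYCompact L := by
  obtain ⟨hKc, hKt2, Γ, fK, hemb, hfin⟩ := hK
  haveI := hKc
  haveI := hKt2
  refine ⟨inferInstance, inferInstance, Finset Γ,
    Stmt10Aux.Fmap T fK hemb.continuous, ?_, ?_⟩
  · exact (Continuous.isClosedEmbedding (Stmt10Aux.Fmap_cont T fK hemb.continuous)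
      (Stmt10Aux.Fmap_inj T fK hemb.continuous hemb.injective hTcont hTdense)).toIsEmbedding
  · exact fun y => Stmt10Aux.Fmap_finite T fK hemb.continuous hTcont hfin y
end
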